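/- arXiv:2203.00816 — 8 statements merged into one kernel-verified Lean document; each statement's English description precedes it below -/
import Mathlib

section
/- Let k ≥ 2 and let D be a balanced set of 2k positive integers with d = max D and d' = max(D∖{d}). Then C(D) is a 2k-cycle: its vertices c_0, c_1, …, c_{2k−1} are pairwise distinct integers all lying in the integer interval [−d, d'], and the multiset of values |c_i − c_{i+1}| over the edges of the cycle C(D) (indices mod 2k) equals D (each element of D occurring exactly once). -/
/-- The `i`-th smallest element of a finite set of naturals (1-indexed). -/
def nth (D : Finset ℕ) (i : ℕ) : ℕ := (D.sort (· ≤ ·)).getD (i - 1) 0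

/-- `D` (of size `2k`, enumerated increasingly as `d_1 < d_2 < … < d_{2k}`) is balanced
with parameter `τ ∈ [1,k]`: `∑_{i=1}^{τ} (d_{2i} - d_{2i-1}) = ∑_{i=τ+1}^{k} (d_{2i} - d_{2i-1})`. -/
def IsBalancedWith (k : ℕ) (D : Finset ℕ) (τ : ℕ) : Prop :=
  1 ≤ τ ∧ τ ≤ k ∧
    ∑ i ∈ Finset.Icc 1 τ, ((nth D (2 * i) : ℤ) - (nth D (2 * i - 1) : ℤ)) =
      ∑ i ∈ Finset.Icc (τ + 1) k, ((nth D (2 * i) : ℤ) - (nth D (2 * i - 1) : ℤ))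

/-- The reordered sequence `δ_1, …, δ_{2k}` of the balanced set `D` (1-indexed):
`δ_i = d_i` for `i ≤ 2τ-1`, `δ_i = d_{i+1}` for `2τ ≤ i ≤ 2k-1`, and `δ_{2k} = d_{2τ}`. -/
def deltaSeq (k : ℕ) (D : Finset ℕ) (τ : ℕ) (i : ℕ) : ℕ :=
  if i ≤ 2 * τ - 1 then nth D i
  else if i ≤ 2 * k - 1 then nth D (i + 1)
  else nth D (2 * τ)

/-- The vertices of `C(D)`: `c_0 = 0` and `c_i = ∑_{h=1}^{i} (-1)^h δ_h`. -/
def partialC (k : ℕ) (D : Finset ℕ) (τ : ℕ) (i : ℕ) : ℤ :=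
  ∑ h ∈ Finset.Icc 1 i, (-1 : ℤ) ^ h * (deltaSeq k D τ h : ℤ)

/-!
The vertices `c_i` are the alternating partial sums of `δ`, and `δ_1 < ⋯ < δ_{2k-1}`. Hence the
even-indexed vertices increase from `c_0 = 0` and the odd-indexed ones decrease from
`c_1 = -δ_1 < 0`, so all are distinct; moreover `-δ_{2j+1} ≤ c_{2j+1}` and `c_{2j} ≤ δ_{2j}`,
which gives the bounds because `δ_{2k-1} = d` and `δ_{2k-2} = d'` (balance forces `τ < k`).
Consecutive vertices differ by `± δ_{i+1}`, the balance condition says exactly that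
`c_{2k} = 0`, so the closing edge has length `δ_{2k}`, and `δ` is a rearrangement of `D`.
-/

def altPartialSum (f : ℕ → ℤ) (n : ℕ) : ℤ :=
  ∑ h ∈ Finset.Icc 1 n, (-1) ^ h * f h

namespace altPartialSum

variable {f : ℕ → ℤ} {n : ℕ}

@[simp]
theorem zero : altPartialSum f 0 = 0 := by
  simp [altPartialSum]

theorem succ (n : ℕ) :
    altPartialSum f (n + 1) = altPartialSum f n + (-1) ^ (n + 1) * f (n + 1) :=
  Finset.sum_Icc_succ_top (Nat.le_add_left 1 n) _

theorem two_mul_add_one (j : ℕ) :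
    altPartialSum f (2 * j + 1) = altPartialSum f (2 * j) - f (2 * j + 1) := by
  rw [succ, (odd_two_mul_add_one j).neg_one_pow]
  ring

theorem two_mul_add_two (j : ℕ) :
    altPartialSum f (2 * j + 2) = altPartialSum f (2 * j + 1) + f (2 * j + 2) := by
  rw [succ, Even.neg_one_pow ⟨j + 1, by ring⟩]
  ring

theorem two_mul_eq_sum_Icc (m : ℕ) :
    altPartialSum f (2 * m) = ∑ i ∈ Finset.Icc 1 m, (f (2 * i) - f (2 * i - 1)) := by
  induction m with
  | zero => simp
  | succ m ih =>
    rw [Finset.sum_Icc_succ_top (Nat.le_add_left 1 m), ← ih, Nat.mul_succ, two_mul_add_two,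
      two_mul_add_one, show 2 * m + 2 - 1 = 2 * m + 1 by omega]
    ring

theorem natAbs_sub_succ (i : ℕ) :
    (altPartialSum f i - altPartialSum f (i + 1)).natAbs = (f (i + 1)).natAbs := by
  simp [succ, Int.natAbs_mul]

theorem map_natAbs_sub_cyclic {N : ℕ} (hN : altPartialSum f N = 0) :
    (Multiset.range N).map
        (fun i => (altPartialSum f i - altPartialSum f ((i + 1) % N)).natAbs) =
      (Multiset.range N).map (fun i => (f (i + 1)).natAbs) := by
  refine Multiset.map_congr rfl fun i hi => ?_
  have hwrap : altPartialSum f ((i + 1) % N) = altPartialSum f (i + 1) := by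
    have hi : i < N := Multiset.mem_range.1 hi
    rcases Nat.lt_or_ge (i + 1) N with h | h
    · rw [Nat.mod_eq_of_lt h]
    · rw [show i + 1 = N by omega, Nat.mod_self, zero, hN]
  rw [hwrap, natAbs_sub_succ]

section StrictMonoOn

variable (hf : StrictMonoOn f (Set.Icc 1 n))
include hf

theorem two_mul_lt_two_mul {a b : ℕ} (hab : a < b) (hb : 2 * b ≤ n) :
    altPartialSum f (2 * a) < altPartialSum f (2 * b) := by
  refine strictMonoOn_Iic_of_lt_succ (ψ := fun j => altPartialSum f (2 * j)) (fun j hj => ?_)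
    (Set.mem_Iic.2 hab.le) Set.self_mem_Iic hab
  have := hf (a := 2 * j + 1) (b := 2 * j + 2) ⟨by omega, by omega⟩ ⟨by omega, by omega⟩
    (by omega)
  show altPartialSum f (2 * j) < altPartialSum f (2 * j + 2)
  rw [two_mul_add_two, two_mul_add_one]
  linarith

theorem two_mul_add_one_lt {a b : ℕ} (hab : a < b) (hb : 2 * b + 1 ≤ n) :
    altPartialSum f (2 * b + 1) < altPartialSum f (2 * a + 1) := by
  refine strictAntiOn_Iic_of_succ_lt (ψ := fun j => altPartialSum f (2 * j + 1))
    (fun j hj => ?_) (Set.mem_Iic.2 hab.le) Set.self_mem_Iic hab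
  have := hf (a := 2 * j + 2) (b := 2 * j + 2 + 1) ⟨by omega, by omega⟩ ⟨by omega, by omega⟩
    (by omega)
  show altPartialSum f (2 * (j + 1) + 1) < altPartialSum f (2 * j + 1)
  rw [two_mul_add_one, show 2 * (j + 1) = 2 * j + 2 by ring, two_mul_add_two, two_mul_add_one]
  linarith

theorem two_mul_nonneg {j : ℕ} (hj : 2 * j ≤ n) : 0 ≤ altPartialSum f (2 * j) := by
  rcases Nat.eq_zero_or_pos j with rfl | hj0
  · simp
  · simpa using (two_mul_lt_two_mul hf hj0 hj).le

theorem two_mul_add_one_neg (hf1 : 0 < f 1) {j : ℕ} (hj : 2 * j + 1 ≤ n) :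
    altPartialSum f (2 * j + 1) < 0 := by
  have h1 : altPartialSum f 1 < 0 := by simpa [two_mul_add_one 0] using hf1
  rcases Nat.eq_zero_or_pos j with rfl | hj0
  · exact h1
  · exact (two_mul_add_one_lt hf hj0 hj).trans h1

theorem injOn (hf1 : 0 < f 1) : Set.InjOn (altPartialSum f) (Set.Iic n) := by
  suffices ∀ i j, i < j → j ≤ n → altPartialSum f i ≠ altPartialSum f j by
    intro i hi j hj hij
    by_contra hne
    rcases Nat.lt_or_gt_of_ne hne with h | h
    exacts [this i j h hj hij, this j i h hi hij.symm]
  intro i j hij hj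
  obtain ⟨a, rfl | rfl⟩ := Nat.even_or_odd' i <;>
    obtain ⟨b, rfl | rfl⟩ := Nat.even_or_odd' j
  · exact (two_mul_lt_two_mul hf (by omega) hj).ne
  · exact ((two_mul_add_one_neg hf hf1 hj).trans_le (two_mul_nonneg hf (by omega))).ne'
  · exact ((two_mul_add_one_neg hf hf1 (by omega)).trans_le (two_mul_nonneg hf hj)).ne
  · exact (two_mul_add_one_lt hf (by omega) hj).ne'

end StrictMonoOn

theorem mem_Icc {m : ℕ} (hf : StrictMonoOn f (Set.Icc 1 (2 * m + 1))) (hf1 : 0 < f 1)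
    (hm : 1 ≤ m) {i : ℕ} (hi : i ≤ 2 * m + 1) :
    altPartialSum f i ∈ Set.Icc (-f (2 * m + 1)) (f (2 * m)) := by
  have hmono {a b : ℕ} (ha : 1 ≤ a) (hab : a ≤ b) (hb : b ≤ 2 * m + 1) : f a ≤ f b :=
    hf.monotoneOn ⟨ha, by omega⟩ ⟨by omega, hb⟩ hab
  have hlast : 0 < f (2 * m + 1) := hf1.trans_le (hmono le_rfl (by omega) le_rfl)
  have hprev : 0 < f (2 * m) := hf1.trans_le (hmono le_rfl (by omega) (by omega))
  obtain ⟨a, rfl | rfl⟩ := Nat.even_or_odd' i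
  · refine ⟨by linarith [two_mul_nonneg hf hi], ?_⟩
    rcases a with _ | a
    · simpa using hprev.le
    · have := two_mul_add_one_neg hf hf1 (j := a) (by omega)
      rw [Nat.mul_succ, two_mul_add_two]
      linarith [hmono (a := 2 * a + 2) (b := 2 * m) (by omega) (by omega) (by omega)]
  · refine ⟨?_, by linarith [two_mul_add_one_neg hf hf1 hi]⟩
    rw [two_mul_add_one]
    linarith [two_mul_nonneg hf (j := a) (by omega), hmono (a := 2 * a + 1) (by omega) hi le_rfl]

end altPartialSum

section SortedEnumeration

variable {D : Finset ℕ}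

theorem nth_eq_getElem {i : ℕ} (hi : i < (D.sort (· ≤ ·)).length) :
    nth D (i + 1) = (D.sort (· ≤ ·))[i] :=
  List.getD_eq_getElem _ _ hi

theorem nth_lt_nth {i j : ℕ} (hi : 1 ≤ i) (hij : i < j) (hj : j ≤ D.card) :
    nth D i < nth D j := by
  obtain ⟨i, rfl⟩ := Nat.exists_eq_add_of_le' hi
  obtain ⟨j, rfl⟩ := Nat.exists_eq_add_of_le' (hi.trans hij.le)
  have hlen := Finset.length_sort (· ≤ ·) (s := D)
  rw [nth_eq_getElem (by omega), nth_eq_getElem (by omega)]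
  exact List.pairwise_iff_getElem.1 (Finset.sortedLT_sort D).pairwise _ _ _ _ (by omega)

theorem nth_strictMonoOn : StrictMonoOn (fun i => (nth D i : ℤ)) (Set.Icc 1 D.card) :=
  fun _ hi _ hj hij => Int.ofNat_lt.2 (nth_lt_nth hi.1 hij hj.2)

theorem nth_mem {i : ℕ} (hi : 1 ≤ i) (hi' : i ≤ D.card) : nth D i ∈ D := by
  obtain ⟨i, rfl⟩ := Nat.exists_eq_add_of_le' hi
  rw [nth_eq_getElem (by simp; omega)]
  exact (Finset.mem_sort _).1 (List.getElem_mem _)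

theorem map_nth_range : (Multiset.range D.card).map (fun i => nth D (i + 1)) = D.val := by
  have hlen := Finset.length_sort (· ≤ ·) (s := D)
  have : (List.range D.card).map (fun i => nth D (i + 1)) = D.sort (· ≤ ·) :=
    List.ext_getElem (by simp [hlen]) fun i _ _ => by simp [nth_eq_getElem (by omega : i < _)]
  rw [← Finset.sort_eq D (· ≤ ·), ← this]
  rfl

end SortedEnumeration

theorem Multiset.map_range_eq_self {g : ℕ → ℕ} {n : ℕ} (hmaps : ∀ i < n, g i < n)
    (hinj : Set.InjOn g (Set.Iio n)) : (Multiset.range n).map g = Multiset.range n := by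
  have hinj' : Set.InjOn g (Finset.range n) := by simpa using hinj
  have himage : (Finset.range n).image g = Finset.range n :=
    Finset.eq_of_subset_of_card_le
      (Finset.image_subset_iff.2 fun i hi => Finset.mem_range.2 (hmaps i (Finset.mem_range.1 hi)))
      (Finset.card_image_of_injOn hinj').ge
  rw [← Finset.range_val, ← Finset.image_val_of_injOn hinj', himage]

/-- `δ_{i+1} = d_{deltaIndex k τ i + 1}`: the positions `2τ - 1, 2τ, …, 2k - 1` of the sorted
enumeration are rotated cyclically. -/
def deltaIndex (k τ i : ℕ) : ℕ :=
  if i < 2 * τ - 1 then i else if i < 2 * k - 1 then i + 1 else 2 * τ - 1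

section DeltaSeq

variable {k τ : ℕ} {D : Finset ℕ}

theorem deltaSeq_succ (i : ℕ) :
    deltaSeq k D τ (i + 1) = nth D (deltaIndex k τ i + 1) := by
  unfold deltaSeq deltaIndex
  split_ifs <;> first | rfl | omega

theorem deltaSeq_of_le {i : ℕ} (hi : i ≤ 2 * τ - 1) : deltaSeq k D τ i = nth D i :=
  if_pos hi

theorem deltaSeq_of_two_mul_le (hτ : 1 ≤ τ) {i : ℕ} (hi : 2 * τ ≤ i)
    (hi' : i ≤ 2 * k - 1) :
    deltaSeq k D τ i = nth D (i + 1) := by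
  unfold deltaSeq
  rw [if_neg (by omega), if_pos hi']

theorem deltaSeq_strictMonoOn (hcard : D.card = 2 * k) :
    StrictMonoOn (fun i => (deltaSeq k D τ i : ℤ)) (Set.Icc 1 (2 * k - 1)) := by
  rintro _ ⟨hi, -⟩ _ ⟨-, hj⟩ hij
  obtain ⟨i, rfl⟩ := Nat.exists_eq_add_of_le' hi
  obtain ⟨j, rfl⟩ := Nat.exists_eq_add_of_le' (hi.trans hij.le)
  simp only [deltaSeq_succ]
  exact Int.ofNat_lt.2 (nth_lt_nth le_add_self (by unfold deltaIndex; split_ifs <;> omega)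
    (by unfold deltaIndex; split_ifs <;> omega))

theorem map_deltaSeq_range (hcard : D.card = 2 * k) :
    (Multiset.range (2 * k)).map (fun i => deltaSeq k D τ (i + 1)) = D.val := by
  have hperm : (Multiset.range (2 * k)).map (deltaIndex k τ) = Multiset.range (2 * k) :=
    Multiset.map_range_eq_self (fun i _ => by unfold deltaIndex; split_ifs <;> omega)
      (fun i hi j hj h => by
        simp only [Set.mem_Iio, deltaIndex] at hi hj h
        split_ifs at h <;> omega)
  have := congrArg (Multiset.map fun i => nth D (i + 1)) hperm
  rw [Multiset.map_map, ← hcard, map_nth_range, hcard] at this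
  simp only [deltaSeq_succ]
  exact this

theorem partialC_eq_altPartialSum :
    partialC k D τ = altPartialSum (fun h => (deltaSeq k D τ h : ℤ)) :=
  rfl

/-- For `h ≥ 2τ` the shift `δ_h = d_{h+1}` changes the parity of the index: the signs flip. -/
theorem partialC_eq_of_le {n : ℕ} (hτ : 1 ≤ τ) (hn : 2 * τ - 1 ≤ n)
    (hn' : n ≤ 2 * k - 1) :
    partialC k D τ n = altPartialSum (fun h => (nth D h : ℤ)) (2 * τ - 1) +
      altPartialSum (fun h => (nth D h : ℤ)) (2 * τ) -
      altPartialSum (fun h => (nth D h : ℤ)) (n + 1) := by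
  induction n, hn using Nat.le_induction with
  | base =>
    rw [show 2 * τ - 1 + 1 = 2 * τ by omega, add_sub_cancel_right]
    exact Finset.sum_congr rfl fun h hh => by
      rw [deltaSeq_of_le (Finset.mem_Icc.1 hh).2]
  | succ n hn ih =>
    rw [partialC_eq_altPartialSum, altPartialSum.succ, ← partialC_eq_altPartialSum,
      ih (by omega), altPartialSum.succ (n + 1),
      deltaSeq_of_two_mul_le hτ (by omega) hn', pow_succ (-1 : ℤ) (n + 1)]
    ring

theorem IsBalancedWith.two_mul_altPartialSum (h : IsBalancedWith k D τ) :
    2 * altPartialSum (fun h => (nth D h : ℤ)) (2 * τ) =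
      altPartialSum (fun h => (nth D h : ℤ)) (2 * k) := by
  obtain ⟨-, hτk, hbal⟩ := h
  have hsplit := Finset.sum_Ioc_consecutive
    (fun i => (nth D (2 * i) : ℤ) - (nth D (2 * i - 1) : ℤ)) (Nat.zero_le τ) hτk
  simp only [← Finset.Icc_add_one_left_eq_Ioc, zero_add] at hsplit
  rw [altPartialSum.two_mul_eq_sum_Icc, altPartialSum.two_mul_eq_sum_Icc, ← hsplit, hbal]
  ring

theorem IsBalancedWith.lt (hcard : D.card = 2 * k) (h : IsBalancedWith k D τ) : τ < k := by
  have hbal := h.two_mul_altPartialSum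
  obtain ⟨hτ, hτk, -⟩ := h
  refine hτk.lt_of_ne fun hτk => ?_
  have hpos := altPartialSum.two_mul_lt_two_mul (hcard ▸ nth_strictMonoOn) (a := 0) (b := k)
    (by omega) le_rfl
  rw [mul_zero, altPartialSum.zero] at hpos
  rw [hτk] at hbal
  linarith

theorem IsBalancedWith.partialC_two_mul (h : IsBalancedWith k D τ) :
    partialC k D τ (2 * k) = 0 := by
  have hbal := h.two_mul_altPartialSum
  obtain ⟨hτ, hτk, -⟩ := h
  have hlast : deltaSeq k D τ (2 * k) = nth D (2 * τ) := by
    unfold deltaSeq; rw [if_neg (by omega), if_neg (by omega)]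
  have hd := altPartialSum.succ (f := fun h => (nth D h : ℤ)) (2 * τ - 1)
  rw [show 2 * τ - 1 + 1 = 2 * τ by omega, Even.neg_one_pow ⟨τ, by ring⟩] at hd
  rw [show 2 * k = 2 * k - 1 + 1 by omega, partialC_eq_altPartialSum, altPartialSum.succ,
    ← partialC_eq_altPartialSum, partialC_eq_of_le hτ (by omega) le_rfl,
    show 2 * k - 1 + 1 = 2 * k by omega, hlast, Even.neg_one_pow ⟨k, by ring⟩]
  linarith

end DeltaSeq

theorem stmt_2_general (k : ℕ) (D : Finset ℕ) (hcard : D.card = 2 * k)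
    (hpos : ∀ x ∈ D, 0 < x) (τ : ℕ) (hτ : IsBalancedWith k D τ) :
    (∀ i j, i < 2 * k → j < 2 * k → i ≠ j → partialC k D τ i ≠ partialC k D τ j) ∧
    (∀ i, i < 2 * k →
      -(nth D (2 * k) : ℤ) ≤ partialC k D τ i ∧ partialC k D τ i ≤ (nth D (2 * k - 1) : ℤ)) ∧
    (Multiset.map
        (fun i => (partialC k D τ i - partialC k D τ ((i + 1) % (2 * k))).natAbs)
        (Multiset.range (2 * k)) = D.val) := by
  have hτk := hτ.lt hcard
  have hτ1 := hτ.1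
  have hmono := deltaSeq_strictMonoOn (τ := τ) hcard
  have hδ1 : 0 < (deltaSeq k D τ 1 : ℤ) := by
    rw [deltaSeq_of_le (by omega)]
    exact_mod_cast hpos _ (nth_mem le_rfl (by omega))
  rw [partialC_eq_altPartialSum]
  refine ⟨fun i j hi hj => (altPartialSum.injOn hmono hδ1).ne (by simp; omega) (by simp; omega),
    fun i hi => ?_, ?_⟩
  · rw [show 2 * k - 1 = 2 * (k - 1) + 1 by omega] at hmono
    have hbounds := altPartialSum.mem_Icc hmono hδ1 (by omega) (i := i) (by omega)
    rwa [deltaSeq_of_two_mul_le hτ1 (by omega) (by omega),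
      deltaSeq_of_two_mul_le hτ1 (by omega) (by omega), show 2 * (k - 1) + 1 + 1 = 2 * k by omega,
      show 2 * (k - 1) + 1 = 2 * k - 1 by omega] at hbounds
  · rw [altPartialSum.map_natAbs_sub_cyclic hτ.partialC_two_mul]
    simpa only [Int.natAbs_natCast] using map_deltaSeq_range hcard

/-- Lemma: if `k ≥ 2` and `D` is a balanced set of `2k` positive integers (with balance
parameter `τ`), then the vertices `c_0, …, c_{2k-1}` of `C(D)` are pairwise distinct
integers lying in `[-d, d']`, where `d = d_{2k} = max D` and `d' = d_{2k-1} = max (D \ {d})`,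
and the multiset `{|c_i - c_{i+1 mod 2k}| : 0 ≤ i ≤ 2k-1}` of differences of the edges of
`C(D)` equals `D` (each element of `D` occurring exactly once). -/
theorem stmt_2 (k : ℕ) (hk : 2 ≤ k) (D : Finset ℕ) (hcard : D.card = 2 * k)
    (hpos : ∀ x ∈ D, 0 < x) (τ : ℕ) (hτ : IsBalancedWith k D τ) :
    (∀ i j, i < 2 * k → j < 2 * k → i ≠ j → partialC k D τ i ≠ partialC k D τ j) ∧
    (∀ i, i < 2 * k →
      -(nth D (2 * k) : ℤ) ≤ partialC k D τ i ∧ partialC k D τ i ≤ (nth D (2 * k - 1) : ℤ)) ∧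
    (Multiset.map
        (fun i => (partialC k D τ i - partialC k D τ ((i + 1) % (2 * k))).natAbs)
        (Multiset.range (2 * k)) = D.val) :=
  stmt_2_general k D hcard hpos τ hτ
end

section
/- Let N and k be positive integers. Let d and d' be distinct integers with N/2 − N/(16k−2) < d < N/2 and N/2 − N/(16k−2) < d' < N/2, and set e = N − d and e' = N − d'. Let α, α' be integers in [1, 4k−1]. Then no two of the four numbers αd, α'd', αe, α'e' are equal; moreover, if α < α', then αd < α'd' and αe < α'e'. -/
/-- If `a + 1 ≤ a'` and both `D, D'` lie in `(M/2 - u, M/2)` with the scaling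
`u * (16K - 2) = M`, then `a * D < a' * D'`. -/
lemma keyD (M K u a a' D D' : ℝ) (hM : 0 < M) (hK : 1 ≤ K)
    (hu : u * (16 * K - 2) = M) (hupos : 0 < u)
    (ha1 : 1 ≤ a) (ha'2 : a' ≤ 4 * K - 1) (hlt : a + 1 ≤ a')
    (hD2 : D < M / 2) (hD' : M / 2 - u < D') : a * D < a' * D' := by
  have hKu : 0 < K * u := mul_pos (by linarith) hupos
  have p1 : 0 < a' * (D' - (M / 2 - u)) := mul_pos (by linarith) (by linarith)
  have p2 : 0 < a * (M / 2 - D) := mul_pos (by linarith) (by linarith)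
  have p3 : 0 ≤ (a' - a - 1) * M := mul_nonneg (by linarith) (by linarith)
  have p4 : 0 ≤ (4 * K - 1 - a') * u := mul_nonneg (by linarith) (by linarith)
  nlinarith [p1, p2, p3, p4, hKu, hu]

/-- If `a + 1 ≤ a'` and both `E, E'` lie in `(M/2, M/2 + u)`, then `a * E < a' * E'`. -/
lemma keyE (M K u a a' E E' : ℝ) (hM : 0 < M) (hK : 1 ≤ K)
    (hu : u * (16 * K - 2) = M) (hupos : 0 < u)
    (ha1 : 1 ≤ a) (ha2 : a ≤ 4 * K - 1) (hlt : a + 1 ≤ a')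
    (hE2 : E < M / 2 + u) (hE' : M / 2 < E') : a * E < a' * E' := by
  have hKu : 0 < K * u := mul_pos (by linarith) hupos
  have p1 : 0 < a' * (E' - M / 2) := mul_pos (by linarith) (by linarith)
  have p2 : 0 < a * (M / 2 + u - E) := mul_pos (by linarith) (by linarith)
  have p3 : 0 ≤ (a' - a - 1) * M := mul_nonneg (by linarith) (by linarith)
  have p4 : 0 ≤ (4 * K - 1 - a) * u := mul_nonneg (by linarith) (by linarith)
  nlinarith [p1, p2, p3, p4, hKu, hu]

/-- If `a ≤ a'`, `D < M/2 < E'`, then `a * D < a' * E'`. -/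
lemma keyDE (M a a' D E' : ℝ) (hM : 0 < M)
    (ha1 : 1 ≤ a) (hle : a ≤ a')
    (hD2 : D < M / 2) (hE' : M / 2 < E') : a * D < a' * E' := by
  have p1 : 0 < a' * (E' - M / 2) := mul_pos (by linarith) (by linarith)
  have p2 : 0 < a * (M / 2 - D) := mul_pos (by linarith) (by linarith)
  have p3 : 0 ≤ (a' - a) * M := mul_nonneg (by linarith) (by linarith)
  nlinarith [p1, p2, p3]

/-- If `a' + 1 ≤ a`, `M/2 - u < D`, `E' < M/2 + u`, then `a' * E' < a * D`. -/
lemma keyED (M K u a a' D E' : ℝ) (hM : 0 < M) (hK : 1 ≤ K)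
    (hu : u * (16 * K - 2) = M) (hupos : 0 < u)
    (ha'1 : 1 ≤ a') (ha2 : a ≤ 4 * K - 1) (ha'2 : a' ≤ 4 * K - 1) (hlt : a' + 1 ≤ a)
    (hD : M / 2 - u < D) (hE'2 : E' < M / 2 + u) : a' * E' < a * D := by
  have hKu : 0 < K * u := mul_pos (by linarith) hupos
  have p1 : 0 < a * (D - (M / 2 - u)) := mul_pos (by linarith) (by linarith)
  have p2 : 0 < a' * (M / 2 + u - E') := mul_pos (by linarith) (by linarith)
  have p3 : 0 ≤ (a - a' - 1) * M := mul_nonneg (by linarith) (by linarith)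
  have p4 : 0 ≤ (4 * K - 1 - a) * u := mul_nonneg (by linarith) (by linarith)
  have p5 : 0 ≤ (4 * K - 1 - a') * u := mul_nonneg (by linarith) (by linarith)
  nlinarith [p1, p2, p3, p4, p5, hKu, hu]

/-- Let `N, k` be positive integers, let `d ≠ d'` be integers with
`N/2 - N/(16k-2) < d, d' < N/2`, set `e = N - d` and `e' = N - d'`, and let
`α, α' ∈ [1, 4k-1]` be integers.  Then no two of `αd`, `α'd'`, `αe`, `α'e'` are equal;
moreover if `α < α'` then `αd < α'd'` and `αe < α'e'`. -/
theorem stmt_6 (N k : ℕ) (hN : 0 < N) (hk : 0 < k) (d d' : ℤ) (hne : d ≠ d')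
    (hd₁ : (N : ℝ) / 2 - (N : ℝ) / (16 * (k : ℝ) - 2) < (d : ℝ)) (hd₂ : (d : ℝ) < (N : ℝ) / 2)
    (hd'₁ : (N : ℝ) / 2 - (N : ℝ) / (16 * (k : ℝ) - 2) < (d' : ℝ)) (hd'₂ : (d' : ℝ) < (N : ℝ) / 2)
    (e e' : ℤ) (he : e = (N : ℤ) - d) (he' : e' = (N : ℤ) - d')
    (α α' : ℤ) (hα₁ : 1 ≤ α) (hα₂ : α ≤ 4 * (k : ℤ) - 1)
    (hα'₁ : 1 ≤ α') (hα'₂ : α' ≤ 4 * (k : ℤ) - 1) :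
    (α * d ≠ α' * d' ∧ α * d ≠ α * e ∧ α * d ≠ α' * e' ∧
      α' * d' ≠ α * e ∧ α' * d' ≠ α' * e' ∧ α * e ≠ α' * e') ∧
    (α < α' → α * d < α' * d' ∧ α * e < α' * e') := by
  -- set up real-valued data
  set M : ℝ := (N : ℝ) with hM_def
  have hM : 0 < M := by rw [hM_def]; exact_mod_cast hN
  have hK : 1 ≤ (k : ℝ) := by exact_mod_cast hk
  have h16 : (0 : ℝ) < 16 * (k : ℝ) - 2 := by linarith
  set u : ℝ := M / (16 * (k : ℝ) - 2) with hu_def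
  have hu : u * (16 * (k : ℝ) - 2) = M := div_mul_cancel₀ M (ne_of_gt h16)
  have hupos : 0 < u := div_pos hM h16
  -- real bounds
  have hd₁' : M / 2 - u < (d : ℝ) := hd₁
  have hd'₁' : M / 2 - u < (d' : ℝ) := hd'₁
  have heR : (e : ℝ) = M - (d : ℝ) := by rw [he]; push_cast; ring
  have he'R : (e' : ℝ) = M - (d' : ℝ) := by rw [he']; push_cast; ring
  have hE1 : M / 2 < (e : ℝ) := by rw [heR]; linarith
  have hE2 : (e : ℝ) < M / 2 + u := by rw [heR]; linarith
  have hE'1 : M / 2 < (e' : ℝ) := by rw [he'R]; linarith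
  have hE'2 : (e' : ℝ) < M / 2 + u := by rw [he'R]; linarith
  have hα₁R : (1 : ℝ) ≤ (α : ℝ) := by exact_mod_cast hα₁
  have hα₂R : (α : ℝ) ≤ 4 * (k : ℝ) - 1 := by exact_mod_cast hα₂
  have hα'₁R : (1 : ℝ) ≤ (α' : ℝ) := by exact_mod_cast hα'₁
  have hα'₂R : (α' : ℝ) ≤ 4 * (k : ℝ) - 1 := by exact_mod_cast hα'₂
  -- a generic way to convert a real strict inequality to an integer one
  have cast_lt : ∀ x y z w : ℤ, (x : ℝ) * (y : ℝ) < (z : ℝ) * (w : ℝ) → x * y < z * w := by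
    intro x y z w h
    exact_mod_cast h
  -- the ordered claims for α < α'
  have hDD : ∀ a a' : ℤ, 1 ≤ a → a ≤ 4 * (k : ℤ) - 1 → 1 ≤ a' → a' ≤ 4 * (k : ℤ) - 1 →
      a < a' → ∀ x y : ℤ, (M / 2 - u < (x : ℝ)) → ((x : ℝ) < M / 2) →
      (M / 2 - u < (y : ℝ)) → ((y : ℝ) < M / 2) → a * x < a' * y := by
    intro a a' ha1 ha2 ha'1 ha'2 hlt x y hx1 hx2 hy1 hy2
    apply cast_lt
    apply keyD M (k : ℝ) u _ _ _ _ hM hK hu hupos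
    · exact_mod_cast ha1
    · exact_mod_cast ha'2
    · have : a + 1 ≤ a' := hlt
      exact_mod_cast this
    · exact hx2
    · exact hy1
  have hEE : ∀ a a' : ℤ, 1 ≤ a → a ≤ 4 * (k : ℤ) - 1 → 1 ≤ a' → a' ≤ 4 * (k : ℤ) - 1 →
      a < a' → ∀ x y : ℤ, (M / 2 < (x : ℝ)) → ((x : ℝ) < M / 2 + u) →
      (M / 2 < (y : ℝ)) → ((y : ℝ) < M / 2 + u) → a * x < a' * y := by
    intro a a' ha1 ha2 ha'1 ha'2 hlt x y hx1 hx2 hy1 hy2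
    apply cast_lt
    apply keyE M (k : ℝ) u _ _ _ _ hM hK hu hupos
    · exact_mod_cast ha1
    · exact_mod_cast ha2
    · have : a + 1 ≤ a' := hlt
      exact_mod_cast this
    · exact hx2
    · exact hy1
  have hDE : ∀ a a' : ℤ, 1 ≤ a → a ≤ 4 * (k : ℤ) - 1 → 1 ≤ a' → a' ≤ 4 * (k : ℤ) - 1 →
      ∀ x y : ℤ, (M / 2 - u < (x : ℝ)) → ((x : ℝ) < M / 2) →
      (M / 2 < (y : ℝ)) → ((y : ℝ) < M / 2 + u) → a * x ≠ a' * y := by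
    intro a a' ha1 ha2 ha'1 ha'2 x y hx1 hx2 hy1 hy2
    rcases le_or_gt a a' with h | h
    · exact ne_of_lt (cast_lt _ _ _ _ (keyDE M _ _ _ _ hM
        (by exact_mod_cast ha1) (by exact_mod_cast h) hx2 hy1))
    · refine ne_of_gt (cast_lt _ _ _ _ ?_)
      apply keyED M (k : ℝ) u _ _ _ _ hM hK hu hupos
      · exact_mod_cast ha'1
      · exact_mod_cast ha2
      · exact_mod_cast ha'2
      · have : a' + 1 ≤ a := h
        exact_mod_cast this
      · exact hx1
      · exact hy2
  constructor
  · refine ⟨?_, ?_, ?_, ?_, ?_, ?_⟩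
    · -- α d ≠ α' d'
      rcases lt_trichotomy α α' with h | h | h
      · exact ne_of_lt (hDD α α' hα₁ hα₂ hα'₁ hα'₂ h d d' hd₁' hd₂ hd'₁' hd'₂)
      · subst h
        intro hc
        exact hne (mul_left_cancel₀ (by omega) hc)
      · exact ne_of_gt (hDD α' α hα'₁ hα'₂ hα₁ hα₂ h d' d hd'₁' hd'₂ hd₁' hd₂)
    · exact hDE α α hα₁ hα₂ hα₁ hα₂ d e hd₁' hd₂ hE1 hE2
    · exact hDE α α' hα₁ hα₂ hα'₁ hα'₂ d e' hd₁' hd₂ hE'1 hE'2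
    · exact hDE α' α hα'₁ hα'₂ hα₁ hα₂ d' e hd'₁' hd'₂ hE1 hE2
    · exact hDE α' α' hα'₁ hα'₂ hα'₁ hα'₂ d' e' hd'₁' hd'₂ hE'1 hE'2
    · -- α e ≠ α' e'
      rcases lt_trichotomy α α' with h | h | h
      · exact ne_of_lt (hEE α α' hα₁ hα₂ hα'₁ hα'₂ h e e' hE1 hE2 hE'1 hE'2)
      · subst h
        intro hc
        have : e ≠ e' := by omega
        exact this (mul_left_cancel₀ (by omega) hc)
      · exact ne_of_gt (hEE α' α hα'₁ hα'₂ hα₁ hα₂ h e' e hE'1 hE'2 hE1 hE2)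
  · intro h
    exact ⟨hDD α α' hα₁ hα₂ hα'₁ hα'₂ h d d' hd₁' hd₂ hd'₁' hd'₂,
      hEE α α' hα₁ hα₂ hα'₁ hα'₂ h e e' hE1 hE2 hE'1 hE'2⟩
end

section
/- Let N and k be positive integers and let d and d' be distinct integers with N/2 − N/(16k−2) < d < N/2 and N/2 − N/(16k−2) < d' < N/2; set e = N − d and e' = N − d'. For i ∈ [1,d] define S_{d,i} = {i, d+i, 2d+i, …, (4k−1)d+i}, and for i ∈ [1,e] define T_{e,i} = {4kd+i, 4kd+e+i, 4kd+2e+i, …, 4kd+(4k−1)e+i}, and similarly S_{d',i'} and T_{e',i'} for d', e'. Then: (i) for any i ∈ [1,d] and i' ∈ [1,d'], |S_{d,i} ∩ S_{d',i'}| ≤ 1; (ii) for any i ∈ [1,e] and i' ∈ [1,e'], |T_{e,i} ∩ T_{e',i'}| ≤ 1; and (iii) for any i ∈ [1,d] and i' ∈ [1,e'], |S_{d,i} ∩ T_{e',i'}| ≤ 1. -/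
lemma inter_card_le_one (n c c' x y i i' : ℕ) (hx : 0 < x) (hy : 0 < y)
    (H : ∀ p q : ℕ, 0 < p → p < n → 0 < q → q < n → p * x ≠ q * y) :
    (((Finset.range n).image (fun t => c + t * x + i)) ∩
     ((Finset.range n).image (fun t => c' + t * y + i'))).card ≤ 1 := by
  rw [Finset.card_le_one]
  intro a ha b hb
  simp only [Finset.mem_inter, Finset.mem_image, Finset.mem_range] at ha hb
  obtain ⟨⟨t1, ht1, e1⟩, ⟨s1, hs1, f1⟩⟩ := ha
  obtain ⟨⟨t2, ht2, e2⟩, ⟨s2, hs2, f2⟩⟩ := hb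
  have g1 : c + t1 * x + i = c' + s1 * y + i' := by rw [e1, f1]
  have g2 : c + t2 * x + i = c' + s2 * y + i' := by rw [e2, f2]
  have key : ∀ (t1 t2 s1 s2 : ℕ), t2 < n → s1 < n → s2 < n →
      c + t1 * x + i = c' + s1 * y + i' → c + t2 * x + i = c' + s2 * y + i' →
      t1 < t2 → False := by
    intro t1 t2 s1 s2 ht2 hs1 hs2 e1 e2 hlt
    have hab : t1 * x < t2 * x := Nat.mul_lt_mul_of_lt_of_le hlt le_rfl hx
    have hs : s1 < s2 := by
      have h : s1 * y < s2 * y := by omega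
      exact Nat.lt_of_mul_lt_mul_right h
    obtain ⟨u, rfl⟩ : ∃ u, t2 = t1 + (u + 1) := ⟨t2 - t1 - 1, by omega⟩
    obtain ⟨v, rfl⟩ : ∃ v, s2 = s1 + (v + 1) := ⟨s2 - s1 - 1, by omega⟩
    have e2' : (c + t1 * x + i) + (u + 1) * x = (c' + s1 * y + i') + (v + 1) * y := by
      calc (c + t1 * x + i) + (u + 1) * x = c + (t1 + (u + 1)) * x + i := by ring
        _ = c' + (s1 + (v + 1)) * y + i' := e2
        _ = (c' + s1 * y + i') + (v + 1) * y := by ring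
    have hq : (u + 1) * x = (v + 1) * y := by omega
    exact H (u + 1) (v + 1) (by omega) (by omega) (by omega) (by omega) hq
  rcases lt_trichotomy t1 t2 with h | h | h
  · exact absurd (key t1 t2 s1 s2 ht2 hs1 hs2 g1 g2 h) not_false
  · rw [← e1, ← e2, h]
  · exact absurd (key t2 t1 s2 s1 ht1 hs2 hs1 g2 g1 h) not_false

lemma real_key (n x y p q : ℕ) (hxy : x < y) (hp : 0 < p) (hpn : p < n) (hqn : q < n)
    (h : p * x = q * y) : (x : ℝ) ≤ ((n : ℝ) - 1) * ((y : ℝ) - x) := by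
  rcases Nat.eq_zero_or_pos q with hq0 | hq0
  · subst hq0
    have hx0 : x = 0 := by
      have := h; simp at this; omega
    subst hx0
    have hn : (1:ℝ) ≤ (n:ℝ) := by exact_mod_cast hpn.le.trans' hp
    have hy : (0:ℝ) ≤ (y:ℝ) := by positivity
    push_cast
    nlinarith [mul_nonneg (by linarith : (0:ℝ) ≤ (n:ℝ) - 1) hy]
  · have hqp : q < p := by
      by_contra hc
      push_neg at hc
      have a1 : p * y ≤ q * y := Nat.mul_le_mul_right y hc
      have a2 : p * x < p * y := Nat.mul_lt_mul_of_le_of_lt le_rfl hxy hp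
      omega
    have h' : (p:ℝ) * x = (q:ℝ) * y := by exact_mod_cast h
    have hq1 : (q:ℝ) + 1 ≤ (p:ℝ) := by exact_mod_cast hqp
    have hqn' : (q:ℝ) ≤ (n:ℝ) - 1 := by
      have : (q:ℝ) + 1 ≤ n := by exact_mod_cast hqn
      linarith
    have hxy' : (x:ℝ) < y := by exact_mod_cast hxy
    have hx0 : (0:ℝ) ≤ x := by positivity
    nlinarith [mul_le_mul_of_nonneg_right hq1 hx0,
      mul_le_mul_of_nonneg_right hqn' (by linarith : (0:ℝ) ≤ (y:ℝ) - x)]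

lemma bound_contra (K x y B : ℝ) (hK : 1 ≤ K) (hkey : x ≤ (4*K - 1) * (y - x))
    (hyx : y - x < B) (hB : (4*K - 1) * B ≤ x) : False := by
  have h1 : (4*K - 1) * (y - x) < (4*K - 1) * B :=
    mul_lt_mul_of_pos_left hyx (by linarith)
  linarith

/-- The set `S_{d,i} = {i, d+i, 2d+i, …, (4k-1)d+i}`. -/
def Sset (k d i : ℕ) : Finset ℕ := (Finset.range (4 * k)).image (fun t => t * d + i)

/-- The set `T_{e,i} = {4kd+i, 4kd+e+i, …, 4kd+(4k-1)e+i}`. -/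
def Tset (k d e i : ℕ) : Finset ℕ := (Finset.range (4 * k)).image (fun t => 4 * k * d + t * e + i)

/-- Let `N, k` be positive integers and `d ≠ d'` with `N/2 - N/(16k-2) < d, d' < N/2`;
set `e = N - d`, `e' = N - d'`.  Then any two of the sets `S_{d,i}` (`i ∈ [1,d]`),
`S_{d',i'}` (`i' ∈ [1,d']`), `T_{e,i}` (`i ∈ [1,e]`), `T_{e',i'}` (`i' ∈ [1,e']`)
coming from different parameters intersect in at most one element. -/
theorem stmt_7 (N k : ℕ) (hN : 0 < N) (hk : 0 < k) (d d' : ℕ) (hne : d ≠ d')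
    (hd₁ : (N : ℝ) / 2 - (N : ℝ) / (16 * (k : ℝ) - 2) < (d : ℝ)) (hd₂ : (d : ℝ) < (N : ℝ) / 2)
    (hd'₁ : (N : ℝ) / 2 - (N : ℝ) / (16 * (k : ℝ) - 2) < (d' : ℝ)) (hd'₂ : (d' : ℝ) < (N : ℝ) / 2) :
    (∀ i i', 1 ≤ i → i ≤ d → 1 ≤ i' → i' ≤ d' →
      (Sset k d i ∩ Sset k d' i').card ≤ 1) ∧
    (∀ i i', 1 ≤ i → i ≤ N - d → 1 ≤ i' → i' ≤ N - d' →
      (Tset k d (N - d) i ∩ Tset k d' (N - d') i').card ≤ 1) ∧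
    (∀ i i', 1 ≤ i → i ≤ d → 1 ≤ i' → i' ≤ N - d' →
      (Sset k d i ∩ Tset k d' (N - d') i').card ≤ 1) := by
  set K : ℝ := (k : ℝ) with hKdef
  have hK1 : (1 : ℝ) ≤ K := by rw [hKdef]; exact_mod_cast hk
  have hM : (0 : ℝ) < 16 * K - 2 := by linarith
  set u : ℝ := (N : ℝ) / (16 * K - 2) with hudef
  have hu : u * (16 * K - 2) = (N : ℝ) := div_mul_cancel₀ _ (ne_of_gt hM)
  have hN' : (0 : ℝ) < (N : ℝ) := by exact_mod_cast hN
  have hu0 : (0 : ℝ) < u := by positivity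
  have hKu : (1 : ℝ) * u ≤ K * u := mul_le_mul_of_nonneg_right hK1 hu0.le
  have hhalf : (N : ℝ) / 2 = (8 * K - 1) * u := by
    have : (N : ℝ) = 16 * (K * u) - 2 * u := by linarith [hu]
    linarith [this]
  -- positivity and size facts
  have hd0 : 0 < d := by
    have : (0 : ℝ) < (d : ℝ) := by nlinarith
    exact_mod_cast this
  have hd'0 : 0 < d' := by
    have : (0 : ℝ) < (d' : ℝ) := by nlinarith
    exact_mod_cast this
  have hdN : d < N := by
    have : (d : ℝ) < (N : ℝ) := by linarith
    exact_mod_cast this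
  have hd'N : d' < N := by
    have : (d' : ℝ) < (N : ℝ) := by linarith
    exact_mod_cast this
  have hecast : ((N - d : ℕ) : ℝ) = (N : ℝ) - (d : ℝ) := by
    push_cast [Nat.cast_sub hdN.le]; ring
  have he'cast : ((N - d' : ℕ) : ℝ) = (N : ℝ) - (d' : ℝ) := by
    push_cast [Nat.cast_sub hd'N.le]; ring
  have he0 : 0 < N - d := by omega
  have he'0 : 0 < N - d' := by omega
  have hSform : ∀ (a b : ℕ), Sset k a b
      = (Finset.range (4 * k)).image (fun t => 0 + t * a + b) := by
    intro a b; simp [Sset]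
  have hTform : ∀ (a e b : ℕ), Tset k a e b
      = (Finset.range (4 * k)).image (fun t => 4 * k * a + t * e + b) := by
    intro a e b; rfl
  -- a helper to massage the real_key output
  have rk : ∀ (x y p q : ℕ), x < y → 0 < p → p < 4 * k → q < 4 * k → p * x = q * y →
      (x : ℝ) ≤ (4 * K - 1) * ((y : ℝ) - (x : ℝ)) := by
    intro x y p q h1 h2 h3 h4 h5
    have := real_key (4 * k) x y p q h1 h2 h3 h4 h5
    push_cast at this
    linarith [this]
  refine ⟨?_, ?_, ?_⟩
  · -- part (i)
    intro i i' _ _ _ _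
    rw [hSform d i, hSform d' i']
    apply inter_card_le_one _ _ _ _ _ _ _ hd0 hd'0
    intro p q hp hpn hq hqn heq
    rcases lt_trichotomy d d' with h | h | h
    · have hkey := rk d d' p q h hp hpn hqn heq
      have hyx : (d' : ℝ) - (d : ℝ) < u := by linarith
      exact bound_contra K (d : ℝ) (d' : ℝ) u hK1 hkey hyx (by linarith)
    · exact hne h
    · have hkey := rk d' d q p h hq hqn hpn heq.symm
      have hyx : (d : ℝ) - (d' : ℝ) < u := by linarith
      exact bound_contra K (d' : ℝ) (d : ℝ) u hK1 hkey hyx (by linarith)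
  · -- part (ii)
    intro i i' _ _ _ _
    rw [hTform d (N - d) i, hTform d' (N - d') i']
    apply inter_card_le_one _ _ _ _ _ _ _ he0 he'0
    intro p q hp hpn hq hqn heq
    rcases lt_trichotomy (N - d) (N - d') with h | h | h
    · have hkey := rk (N - d) (N - d') p q h hp hpn hqn heq
      rw [hecast, he'cast] at hkey
      have hyx : ((N : ℝ) - d') - ((N : ℝ) - d) < u := by linarith
      exact bound_contra K _ _ u hK1 hkey hyx (by linarith)
    · exact hne (by omega)
    · have hkey := rk (N - d') (N - d) q p h hq hqn hpn heq.symm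
      rw [hecast, he'cast] at hkey
      have hyx : ((N : ℝ) - d) - ((N : ℝ) - d') < u := by linarith
      exact bound_contra K _ _ u hK1 hkey hyx (by linarith)
  · -- part (iii)
    intro i i' _ _ _ _
    rw [hSform d i, hTform d' (N - d') i']
    apply inter_card_le_one _ _ _ _ _ _ _ hd0 he'0
    intro p q hp hpn hq hqn heq
    have h : d < N - d' := by
      have hr : (d : ℝ) < ((N - d' : ℕ) : ℝ) := by rw [he'cast]; linarith
      exact_mod_cast hr
    have hkey := rk d (N - d') p q h hp hpn hqn heq
    rw [he'cast] at hkey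
    have hyx : ((N : ℝ) - d') - (d : ℝ) < 2 * u := by linarith
    exact bound_contra K _ _ (2 * u) hK1 hkey hyx (by linarith)
end

section
/- Let k and N be positive integers, n = (8k+4)N + 1, and let d be an integer with d ≡ N (mod 2) and N/3 − N/(48k+15) < d < N/3; set e = (N−d)/2. Fix i ∈ [1,d] and let S_{d,i} = {i, d+i, 2d+i, …, (4k−1)d+i} ∪ {4kN+4e+i, (4k+2)N−i+1}. Consider the sequence of 4k+2 integers C'(S_{d,i}) = (0, −i, d, −d−i, 2d, −2d−i, …, kd, −kd−i, (k+2)d, −(k+1)d−i, (k+3)d, −(k+2)d−i, …, 2kd, −(2k−1)d−i, (4k+2)N−(2k+1)d, −(2k+1)d−i). Then, working modulo n, these 4k+2 values are pairwise distinct residues, so C'(S_{d,i}) is a (4k+2)-cycle in K_n on vertex set Z_n, and the multiset of differences of its edges equals S_{d,i} (each element occurring exactly once). -/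
/-- The difference of the edge `{a, b}` in `K_n` with vertex set `ZMod n`:
the minimum of `|a - b mod n|` and `|b - a mod n|`. -/
def zdiff (n : ℕ) (a b : ZMod n) : ℕ := min (a - b).val (b - a).val

lemma zdiff_comm (n : ℕ) (a b : ZMod n) : zdiff n a b = zdiff n b a := min_comm _ _

lemma zdiff_eq_aux (n : ℕ) [NeZero n] (a b : ZMod n) (x : ℕ) (hx : 0 < x)
    (h2 : 2 * x < n) (h : b - a = (x : ZMod n)) : zdiff n a b = x := by
  have hxn : x < n := by omega
  have hval : (b - a).val = x := by rw [h, ZMod.val_natCast, Nat.mod_eq_of_lt hxn]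
  have hz : b - a ≠ 0 := by
    intro h0; rw [h0] at hval; simp at hval; omega
  have hval2 : (a - b).val = n - x := by
    rw [show a - b = -(b - a) by ring, ZMod.neg_val, if_neg hz, hval]
  unfold zdiff
  rw [hval2, hval]
  omega

lemma mset_skip {α : Type*} (f T : ℕ → α) (m : ℕ) :
    ∀ M, m ≤ M → (∀ j, j < M → f j = if j < m then T j else T (j + 1)) →
    Multiset.map f (Multiset.range M) + {T m} = Multiset.map T (Multiset.range (M + 1)) := by
  intro M hM
  induction M, hM using Nat.le_induction with
  | base =>
    intro hf
    rw [Multiset.map_congr rfl (fun j hj => by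
      rw [hf j (Multiset.mem_range.mp hj), if_pos (Multiset.mem_range.mp hj)])]
    rw [Multiset.range_succ, Multiset.map_cons, add_comm, Multiset.singleton_add]
  | succ M hM ih =>
    intro hf
    rw [Multiset.range_succ, Multiset.map_cons, hf M (by omega), if_neg (by omega),
      Multiset.cons_add, ih (fun j hj => hf j (by omega)), ← Multiset.map_cons,
      ← Multiset.range_succ]

def gfun (k d i N e : ℕ) (j : ℕ) : ℕ :=
  if j ≤ 2 * k then j * d + i
  else if j = 4 * k - 1 then 4 * k * N + 4 * e + i
  else if j = 4 * k then (4 * k + 2) * N - i + 1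
  else if j = 4 * k + 1 then (2 * k + 1) * d + i
  else (j + 1) * d + i

/-- Lemma: for `n = (8k+4)N + 1`, `d ≡ N (mod 2)` with
`N/3 - N/(48k+15) < d < N/3`, `e = (N-d)/2` and `i ∈ [1,d]`, the sequence
`C'(S_{d,i}) = (0, -i, d, -d-i, …, kd, -kd-i, (k+2)d, -(k+1)d-i, …, 2kd, -(2k-1)d-i,
(4k+2)N-(2k+1)d, -(2k+1)d-i)` consists, modulo `n`, of `4k+2` pairwise distinct residues
(hence is a `(4k+2)`-cycle in `K_n`), and the multiset of differences of its edges is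
`S_{d,i} = {i, d+i, …, (4k-1)d+i} ∪ {4kN+4e+i, (4k+2)N-i+1}`, each element occurring once. -/
theorem stmt_9 (k N : ℕ) (hk : 0 < k) (hN : 0 < N) (n : ℕ) (hn : n = (8 * k + 4) * N + 1)
    (d : ℕ) (hpar : d % 2 = N % 2)
    (hd₁ : (N : ℝ) / 3 - (N : ℝ) / (48 * (k : ℝ) + 15) < (d : ℝ))
    (hd₂ : (d : ℝ) < (N : ℝ) / 3)
    (e : ℕ) (he : N = d + 2 * e)
    (i : ℕ) (hi₁ : 1 ≤ i) (hi₂ : i ≤ d)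
    (v : ℕ → ℤ)
    (hv₁ : ∀ t, t ≤ k → v (2 * t) = (t : ℤ) * d)
    (hv₂ : ∀ t, k < t → t ≤ 2 * k - 1 → v (2 * t) = ((t : ℤ) + 1) * d)
    (hv₃ : v (4 * k) = ((4 * k + 2) * N : ℤ) - (2 * (k : ℤ) + 1) * d)
    (hv₄ : ∀ t, t ≤ 2 * k - 1 → v (2 * t + 1) = -((t : ℤ) * d) - i)
    (hv₅ : v (4 * k + 1) = -((2 * (k : ℤ) + 1) * d) - i) :
    (∀ j j', j < 4 * k + 2 → j' < 4 * k + 2 → j ≠ j' →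
      ((v j : ZMod n) ≠ (v j' : ZMod n))) ∧
    (Multiset.map
        (fun j => zdiff n ((v j : ZMod n)) ((v ((j + 1) % (4 * k + 2)) : ZMod n)))
        (Multiset.range (4 * k + 2)) =
      Multiset.map (fun t => t * d + i) (Multiset.range (4 * k)) +
        {4 * k * N + 4 * e + i, (4 * k + 2) * N - i + 1}) := by
  haveI : NeZero n := ⟨by rw [hn]; exact Nat.succ_ne_zero _⟩
  -- basic arithmetic facts
  have h3d : 3 * d < N := by
    have h : (3 * d : ℝ) < N := by push_cast; linarith
    exact_mod_cast h
  have hd0 : 1 ≤ d := by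
    by_contra h
    have hd00 : (d : ℝ) = 0 := by
      have : d = 0 := by omega
      simp [this]
    have h1 : (1 : ℝ) ≤ (N : ℝ) := by exact_mod_cast hN
    have h2 : (63 : ℝ) ≤ 48 * (k : ℝ) + 15 := by
      have : (1 : ℝ) ≤ (k : ℝ) := by exact_mod_cast hk
      linarith
    have h3 : (N : ℝ) / (48 * (k : ℝ) + 15) ≤ (N : ℝ) / 63 :=
      div_le_div_of_nonneg_left (by linarith) (by norm_num) h2
    rw [hd00] at hd₁
    linarith
  have hdpos : (0 : ℤ) < (d : ℤ) := by exact_mod_cast hd0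
  have h3dz : 3 * (d : ℤ) < (N : ℤ) := by exact_mod_cast h3d
  have hiz1 : (1 : ℤ) ≤ (i : ℤ) := by exact_mod_cast hi₁
  have hiz2 : (i : ℤ) ≤ (d : ℤ) := by exact_mod_cast hi₂
  have hNz : (1 : ℤ) ≤ (N : ℤ) := by exact_mod_cast hN
  have hkN : (0 : ℤ) ≤ (k : ℤ) * N := by positivity
  have hkd : (0 : ℤ) ≤ (k : ℤ) * d := by positivity
  have heZ : (N : ℤ) = (d : ℤ) + 2 * (e : ℤ) := by exact_mod_cast he
  have hnz : (n : ℤ) = 8 * (k : ℤ) * N + 4 * N + 1 := by rw [hn]; push_cast; ring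
  have pf1 : (4 * (k : ℤ) + 2) * (3 * (d : ℤ)) < (4 * (k : ℤ) + 2) * N :=
    mul_lt_mul_of_pos_left h3dz (by positivity)
  -- value of even vertices
  have hE : ∀ t, t < 2 * k →
      v (2 * t) = (if t ≤ k then (t : ℤ) else (t : ℤ) + 1) * d := by
    intro t ht
    by_cases h : t ≤ k
    · rw [if_pos h]; exact hv₁ t h
    · rw [if_neg h]; exact hv₂ t (by omega) (by omega)
  have hce : ∀ t, t < 2 * k → (0 : ℤ) ≤ (if t ≤ k then (t : ℤ) else (t : ℤ) + 1) := by
    intro t _; split_ifs <;> positivity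
  have hce2 : ∀ t, t < 2 * k → (if t ≤ k then (t : ℤ) else (t : ℤ) + 1) ≤ 2 * (k : ℤ) := by
    intro t ht; split_ifs <;> omega
  have hrepr : ∀ j, j < 4 * k → (∃ t, t < 2 * k ∧ j = 2 * t) ∨ (∃ t, t < 2 * k ∧ j = 2 * t + 1) := by
    intro j hj
    rcases Nat.even_or_odd j with ⟨t, ht⟩ | ⟨t, ht⟩
    · exact Or.inl ⟨t, by omega, by omega⟩
    · exact Or.inr ⟨t, by omega, by omega⟩
  -- integer distinctness
  have hne_int : ∀ j j', j < j' → j' < 4 * k + 2 → v j ≠ v j' := by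
    intro j j' hjj hj'
    rcases (by omega : j' = 4 * k + 1 ∨ j' = 4 * k ∨ j' < 4 * k) with rfl | rfl | hj4
    · rw [hv₅]
      rcases (by omega : j = 4 * k ∨ j < 4 * k) with rfl | hj4
      · rw [hv₃]; intro hq; linarith [hkN, hNz, hiz1]
      · rcases hrepr j hj4 with ⟨t, ht, rfl⟩ | ⟨t, ht, rfl⟩
        · rw [hE t ht]; intro hq
          have h0 : (0 : ℤ) ≤ (if t ≤ k then (t : ℤ) else (t : ℤ) + 1) * d :=
            mul_nonneg (hce t ht) hdpos.le
          linarith [hkd, hdpos, hiz1]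
        · rw [hv₄ t (by omega)]; intro hq
          have htd : (t : ℤ) * d ≤ (2 * (k : ℤ) - 1) * d :=
            mul_le_mul_of_nonneg_right (by omega) hdpos.le
          linarith
    · rw [hv₃]
      rcases hrepr j (by omega) with ⟨t, ht, rfl⟩ | ⟨t, ht, rfl⟩
      · rw [hE t ht]; intro hq
        have h3 : (if t ≤ k then (t : ℤ) else (t : ℤ) + 1) * d ≤ 2 * (k : ℤ) * d :=
          mul_le_mul_of_nonneg_right (hce2 t ht) hdpos.le
        linarith [pf1, hkd, hdpos]
      · rw [hv₄ t (by omega)]; intro hq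
        have htd : (0 : ℤ) ≤ (t : ℤ) * d := by positivity
        linarith [pf1, hkd, hdpos, hiz1]
    · rcases hrepr j (by omega) with ⟨t, ht, rfl⟩ | ⟨t, ht, rfl⟩ <;>
        rcases hrepr j' hj4 with ⟨t', ht', rfl⟩ | ⟨t', ht', rfl⟩
      · rw [hE t ht, hE t' ht']; intro hq
        have hcc : (if t ≤ k then (t : ℤ) else (t : ℤ) + 1) <
            (if t' ≤ k then (t' : ℤ) else (t' : ℤ) + 1) := by
          split_ifs <;> omega
        have := mul_lt_mul_of_pos_right hcc hdpos
        linarith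
      · rw [hE t ht, hv₄ t' (by omega)]; intro hq
        have h0 : (0 : ℤ) ≤ (if t ≤ k then (t : ℤ) else (t : ℤ) + 1) * d :=
          mul_nonneg (hce t ht) hdpos.le
        have htd : (0 : ℤ) ≤ (t' : ℤ) * d := by positivity
        linarith
      · rw [hv₄ t (by omega), hE t' ht']; intro hq
        have h0 : (0 : ℤ) ≤ (if t' ≤ k then (t' : ℤ) else (t' : ℤ) + 1) * d :=
          mul_nonneg (hce t' ht') hdpos.le
        have htd : (0 : ℤ) ≤ (t : ℤ) * d := by positivity
        linarith
      · rw [hv₄ t (by omega), hv₄ t' (by omega)]; intro hq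
        have hcc : (t : ℤ) < (t' : ℤ) := by omega
        have := mul_lt_mul_of_pos_right hcc hdpos
        linarith
  -- bounds
  have hbd : ∀ j, j < 4 * k + 2 →
      -((2 * (k : ℤ) + 2) * d) ≤ v j ∧ v j ≤ (4 * (k : ℤ) + 2) * N := by
    intro j hj
    rcases (by omega : j = 4 * k + 1 ∨ j = 4 * k ∨ j < 4 * k) with rfl | rfl | hj4
    · rw [hv₅]
      constructor <;> linarith [hkd, hdpos, hiz1, hiz2, hkN, hNz]
    · rw [hv₃]
      constructor
      · linarith [hkd, hdpos, hkN, hNz]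
      · linarith [hkd, hdpos]
    · rcases hrepr j hj4 with ⟨t, ht, rfl⟩ | ⟨t, ht, rfl⟩
      · rw [hE t ht]
        have h0 : (0 : ℤ) ≤ (if t ≤ k then (t : ℤ) else (t : ℤ) + 1) * d :=
          mul_nonneg (hce t ht) hdpos.le
        have h3 : (if t ≤ k then (t : ℤ) else (t : ℤ) + 1) * d ≤ 2 * (k : ℤ) * d :=
          mul_le_mul_of_nonneg_right (hce2 t ht) hdpos.le
        constructor
        · linarith [hkd, hdpos]
        · linarith [pf1, hkd, hdpos, hkN, hNz]
      · rw [hv₄ t (by omega)]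
        have htd0 : (0 : ℤ) ≤ (t : ℤ) * d := by positivity
        have htd : (t : ℤ) * d ≤ (2 * (k : ℤ) - 1) * d :=
          mul_le_mul_of_nonneg_right (by omega) hdpos.le
        constructor
        · linarith [hiz2, hkd, hdpos]
        · linarith [hkN, hNz, hiz1]
  -- distinctness mod n
  have hdist : ∀ j j', j < 4 * k + 2 → j' < 4 * k + 2 → j ≠ j' →
      ((v j : ZMod n) ≠ (v j' : ZMod n)) := by
    have key : ∀ j j', j < j' → j' < 4 * k + 2 → ((v j : ZMod n) ≠ (v j' : ZMod n)) := by
      intro j j' hjj hj' heq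
      have hdvd : (n : ℤ) ∣ (v j - v j') := by
        have h0 : ((v j - v j' : ℤ) : ZMod n) = 0 := by push_cast; rw [heq]; ring
        exact (ZMod.intCast_zmod_eq_zero_iff_dvd _ n).mp h0
      have hb1 := hbd j (by omega)
      have hb2 := hbd j' hj'
      have habs : |v j - v j'| < (n : ℤ) := by
        rw [abs_lt, hnz]
        constructor
        · linarith [pf1, hb1.1, hb2.2, hkd, hdpos, hkN, hNz]
        · linarith [pf1, hb1.2, hb2.1, hkd, hdpos, hkN, hNz]
      have h00 : v j - v j' = 0 := Int.eq_zero_of_abs_lt_dvd hdvd habs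
      exact hne_int j j' hjj hj' (by linarith)
    intro j j' hj hj' hne
    rcases Nat.lt_or_ge j j' with h | h
    · exact key j j' h hj'
    · exact fun hq => key j' j (by omega) hj hq.symm
  refine ⟨hdist, ?_⟩
  -- size bounds for differences
  have hsmall : ∀ c : ℕ, c ≤ 4 * k + 1 → 0 < c * d + i ∧ 2 * (c * d + i) < n := by
    intro c hc
    refine ⟨Nat.lt_of_lt_of_le hi₁ (Nat.le_add_left i _), ?_⟩
    have hcz : (c : ℤ) ≤ 4 * (k : ℤ) + 1 := by omega
    have h1 : (c : ℤ) * d ≤ (4 * (k : ℤ) + 1) * d :=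
      mul_le_mul_of_nonneg_right hcz hdpos.le
    have h2 : (k : ℤ) * d ≤ (k : ℤ) * N :=
      mul_le_mul_of_nonneg_left (by linarith) (by positivity)
    have h : (2 : ℤ) * ((c : ℤ) * d + i) < (n : ℤ) := by
      rw [hnz]; linarith [hiz2, h3dz, hkd]
    exact_mod_cast h
  -- edge difference helper
  have hedge : ∀ j c : ℕ, j + 1 < 4 * k + 2 → c ≤ 4 * k + 1 →
      (v j - v (j + 1) = ((c * d + i : ℕ) : ℤ) ∨ v (j + 1) - v j = ((c * d + i : ℕ) : ℤ)) →
      zdiff n ((v j : ZMod n)) ((v ((j + 1) % (4 * k + 2)) : ZMod n)) = c * d + i := by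
    intro j c hj hc hor
    rw [Nat.mod_eq_of_lt hj]
    obtain ⟨hpos, hlt⟩ := hsmall c hc
    rcases hor with h | h
    · rw [zdiff_comm]
      refine zdiff_eq_aux n _ _ _ hpos hlt ?_
      calc ((v j : ℤ) : ZMod n) - ((v (j + 1) : ℤ) : ZMod n)
          = ((v j - v (j + 1) : ℤ) : ZMod n) := by push_cast; ring
        _ = _ := by rw [h]; exact Int.cast_natCast _
    · refine zdiff_eq_aux n _ _ _ hpos hlt ?_
      calc ((v (j + 1) : ℤ) : ZMod n) - ((v j : ℤ) : ZMod n)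
          = ((v (j + 1) - v j : ℤ) : ZMod n) := by push_cast; ring
        _ = _ := by rw [h]; exact Int.cast_natCast _
  -- compute all edge differences
  have hG : ∀ j, j < 4 * k + 2 →
      zdiff n ((v j : ZMod n)) ((v ((j + 1) % (4 * k + 2)) : ZMod n)) = gfun k d i N e j := by
    intro j hj
    rcases (by omega : j = 4 * k + 1 ∨ j = 4 * k ∨ j = 4 * k - 1 ∨ j < 4 * k - 1)
      with rfl | rfl | rfl | hj1
    · -- wrap-around edge
      rw [show 4 * k + 1 + 1 = 4 * k + 2 from rfl, Nat.mod_self]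
      have hv0 : v 0 = 0 := by
        have h := hv₁ 0 (Nat.zero_le k)
        simpa using h
      have hval : gfun k d i N e (4 * k + 1) = (2 * k + 1) * d + i := by
        unfold gfun
        rw [if_neg (by omega), if_neg (by omega), if_neg (by omega), if_pos rfl]
      rw [hval]
      refine zdiff_eq_aux n _ _ _ (hsmall (2 * k + 1) (by omega)).1
        (hsmall (2 * k + 1) (by omega)).2 ?_
      calc ((v 0 : ℤ) : ZMod n) - ((v (4 * k + 1) : ℤ) : ZMod n)
          = ((v 0 - v (4 * k + 1) : ℤ) : ZMod n) := by push_cast; ring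
        _ = _ := by
            rw [show v 0 - v (4 * k + 1) = (((2 * k + 1) * d + i : ℕ) : ℤ) from by
              rw [hv0, hv₅]; push_cast; ring]
            exact Int.cast_natCast _
    · -- edge 4k → 4k+1
      rw [Nat.mod_eq_of_lt (by omega)]
      have hval : gfun k d i N e (4 * k) = (4 * k + 2) * N - i + 1 := by
        unfold gfun
        rw [if_neg (by omega), if_neg (by omega), if_pos rfl]
      rw [hval]
      have hiP : i ≤ (4 * k + 2) * N :=
        le_trans hi₂ (le_trans (by omega) (Nat.le_mul_of_pos_left N (by omega)))
      have hBZ : (((4 * k + 2) * N - i + 1 : ℕ) : ℤ) = (4 * (k : ℤ) + 2) * N - i + 1 := by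
        push_cast [hiP]; ring
      have hBpos : 0 < (4 * k + 2) * N - i + 1 := Nat.succ_pos _
      have hBlt : 2 * ((4 * k + 2) * N - i + 1) < n := by
        have h : (2 : ℤ) * ((((4 * k + 2) * N - i + 1 : ℕ)) : ℤ) < (n : ℤ) := by
          rw [hBZ, hnz]; linarith [hiz1, hkN]
        exact_mod_cast h
      refine zdiff_eq_aux n _ _ _ hBpos hBlt ?_
      calc ((v (4 * k + 1) : ℤ) : ZMod n) - ((v (4 * k) : ℤ) : ZMod n)
          = ((v (4 * k + 1) - v (4 * k) : ℤ) : ZMod n) := by push_cast; ring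
        _ = ((((4 * k + 2) * N - i + 1 : ℕ) : ℤ) : ZMod n) - (((n : ℕ) : ℤ) : ZMod n) := by
            rw [show v (4 * k + 1) - v (4 * k)
                = (((4 * k + 2) * N - i + 1 : ℕ) : ℤ) - ((n : ℕ) : ℤ) from by
              rw [hv₅, hv₃, hBZ, hnz]; ring]
            push_cast
            ring
        _ = _ := by
            rw [Int.cast_natCast, Int.cast_natCast, ZMod.natCast_self, sub_zero]
    · -- edge 4k-1 → 4k
      rw [Nat.mod_eq_of_lt (by omega), show 4 * k - 1 + 1 = 4 * k from by omega]
      have hval : gfun k d i N e (4 * k - 1) = 4 * k * N + 4 * e + i := by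
        unfold gfun
        rw [if_neg (by omega), if_pos rfl]
      rw [hval]
      have hveq : v (4 * k - 1) = -(((2 * k - 1 : ℕ) : ℤ) * d) - i := by
        rw [show 4 * k - 1 = 2 * (2 * k - 1) + 1 from by omega]
        exact hv₄ (2 * k - 1) le_rfl
      have h2k1 : ((2 * k - 1 : ℕ) : ℤ) = 2 * (k : ℤ) - 1 := by omega
      have hApos : 0 < 4 * k * N + 4 * e + i := Nat.lt_of_lt_of_le hi₁ (Nat.le_add_left i _)
      have hAlt : 2 * (4 * k * N + 4 * e + i) < n := by
        have h : (2 : ℤ) * (4 * (k : ℤ) * N + 4 * e + i) < (n : ℤ) := by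
          rw [hnz]; linarith [heZ, hiz2, hdpos]
        exact_mod_cast h
      refine zdiff_eq_aux n _ _ _ hApos hAlt ?_
      calc ((v (4 * k) : ℤ) : ZMod n) - ((v (4 * k - 1) : ℤ) : ZMod n)
          = ((v (4 * k) - v (4 * k - 1) : ℤ) : ZMod n) := by push_cast; ring
        _ = _ := by
            rw [show v (4 * k) - v (4 * k - 1) = ((4 * k * N + 4 * e + i : ℕ) : ℤ) from by
              rw [hv₃, hveq, h2k1]; push_cast; linear_combination 2 * heZ]
            exact Int.cast_natCast _
    · -- regular edges
      rcases hrepr j (by omega) with ⟨t, ht, rfl⟩ | ⟨t, ht, rfl⟩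
      · by_cases htk : t ≤ k
        · have hval : gfun k d i N e (2 * t) = 2 * t * d + i := by
            unfold gfun; rw [if_pos (by omega)]
          rw [hval]
          refine hedge (2 * t) (2 * t) (by omega) (by omega) (Or.inl ?_)
          rw [hv₁ t htk, hv₄ t (by omega)]
          push_cast; ring
        · have hval : gfun k d i N e (2 * t) = (2 * t + 1) * d + i := by
            unfold gfun
            rw [if_neg (by omega), if_neg (by omega), if_neg (by omega), if_neg (by omega)]
          rw [hval]
          refine hedge (2 * t) (2 * t + 1) (by omega) (by omega) (Or.inl ?_)
          rw [hv₂ t (by omega) (by omega), hv₄ t (by omega)]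
          push_cast; ring
      · by_cases htk : t < k
        · have hval : gfun k d i N e (2 * t + 1) = (2 * t + 1) * d + i := by
            unfold gfun; rw [if_pos (by omega)]
          rw [hval]
          refine hedge (2 * t + 1) (2 * t + 1) (by omega) (by omega) (Or.inr ?_)
          rw [show 2 * t + 1 + 1 = 2 * (t + 1) from by ring, hv₁ (t + 1) (by omega),
            hv₄ t (by omega)]
          push_cast; ring
        · have hval : gfun k d i N e (2 * t + 1) = (2 * t + 2) * d + i := by
            unfold gfun
            rw [if_neg (by omega), if_neg (by omega), if_neg (by omega), if_neg (by omega)]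
          rw [hval]
          refine hedge (2 * t + 1) (2 * t + 2) (by omega) (by omega) (Or.inr ?_)
          rw [show 2 * t + 1 + 1 = 2 * (t + 1) from by ring,
            hv₂ (t + 1) (by omega) (by omega), hv₄ t (by omega)]
          push_cast; ring
  -- assemble the multiset identity
  rw [Multiset.map_congr rfl (fun x hx => hG x (Multiset.mem_range.mp hx))]
  have hrange : (Multiset.range (4 * k + 2)) =
      (4 * k + 1) ::ₘ (4 * k) ::ₘ (4 * k - 1) ::ₘ Multiset.range (4 * k - 1) := by
    rw [show 4 * k + 2 = (4 * k - 1) + 1 + 1 + 1 from by omega, Multiset.range_succ,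
      Multiset.range_succ, Multiset.range_succ]
    congr 1
    · omega
    congr 2
    omega
  rw [hrange, Multiset.map_cons, Multiset.map_cons, Multiset.map_cons]
  have e1 : gfun k d i N e (4 * k + 1) = (2 * k + 1) * d + i := by
    unfold gfun
    rw [if_neg (by omega), if_neg (by omega), if_neg (by omega), if_pos rfl]
  have e2 : gfun k d i N e (4 * k) = (4 * k + 2) * N - i + 1 := by
    unfold gfun
    rw [if_neg (by omega), if_neg (by omega), if_pos rfl]
  have e3 : gfun k d i N e (4 * k - 1) = 4 * k * N + 4 * e + i := by
    unfold gfun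
    rw [if_neg (by omega), if_pos rfl]
  rw [e1, e2, e3]
  have hskip : Multiset.map (gfun k d i N e) (Multiset.range (4 * k - 1)) +
      {(2 * k + 1) * d + i} =
      Multiset.map (fun t => t * d + i) (Multiset.range (4 * k)) := by
    have h := mset_skip (gfun k d i N e) (fun t => t * d + i) (2 * k + 1) (4 * k - 1)
      (by omega) ?_
    · rw [show 4 * k - 1 + 1 = 4 * k from by omega] at h
      exact h
    · intro j hj
      by_cases h : j ≤ 2 * k
      · unfold gfun; rw [if_pos h, if_pos (by omega)]
      · unfold gfun
        rw [if_neg h, if_neg (by omega), if_neg (by omega), if_neg (by omega),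
          if_neg (by omega)]
  rw [← hskip]
  ext a
  simp only [Multiset.insert_eq_cons, Multiset.count_cons, Multiset.count_add,
    Multiset.count_singleton]
  split_ifs <;> omega
end

section
/- Let k and N be positive integers and let d and d' be integers with d' < d, both lying strictly between N/3 − N/(48k+15) and N/3 + N/(48k+15). Suppose βd + i = β'd' + i', where β, β' ∈ [0, 4k−1], i ∈ [1,d] and i' ∈ [1,d']. Then either β' = β or β' = β + 1. -/
/-- Let `k, N` be positive integers and `d' < d` integers, both lying strictly between
`N/3 - N/(48k+15)` and `N/3 + N/(48k+15)`.  If `βd + i = β'd' + i'` with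
`β, β' ∈ [0, 4k-1]`, `i ∈ [1, d]` and `i' ∈ [1, d']`, then `β' = β` or `β' = β + 1`. -/
theorem stmt_11 (k N : ℕ) (hk : 0 < k) (hN : 0 < N) (d d' : ℤ) (hdd' : d' < d)
    (hd₁ : (N : ℝ) / 3 - (N : ℝ) / (48 * (k : ℝ) + 15) < (d : ℝ))
    (hd₂ : (d : ℝ) < (N : ℝ) / 3 + (N : ℝ) / (48 * (k : ℝ) + 15))
    (hd'₁ : (N : ℝ) / 3 - (N : ℝ) / (48 * (k : ℝ) + 15) < (d' : ℝ))
    (hd'₂ : (d' : ℝ) < (N : ℝ) / 3 + (N : ℝ) / (48 * (k : ℝ) + 15))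
    (β β' i i' : ℤ)
    (hβ₁ : 0 ≤ β) (hβ₂ : β ≤ 4 * (k : ℤ) - 1)
    (hβ'₁ : 0 ≤ β') (hβ'₂ : β' ≤ 4 * (k : ℤ) - 1)
    (hi₁ : 1 ≤ i) (hi₂ : i ≤ d) (hi'₁ : 1 ≤ i') (hi'₂ : i' ≤ d')
    (heq : β * d + i = β' * d' + i') :
    β' = β ∨ β' = β + 1 := by
  have hc : (0:ℝ) < 48 * (k:ℝ) + 15 := by positivity
  have hk1 : (1:ℝ) ≤ (k:ℝ) := by exact_mod_cast hk
  have hN1 : (1:ℝ) ≤ (N:ℝ) := by exact_mod_cast hN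
  have he0 : 0 < (N:ℝ) / (48 * (k:ℝ) + 15) := by positivity
  have hm : (N:ℝ)/3 = (16*(k:ℝ)+5) * ((N:ℝ) / (48 * (k:ℝ) + 15)) := by
    field_simp; ring
  set e := (N:ℝ) / (48 * (k:ℝ) + 15) with he
  have hd'pos : (0:ℝ) < (d':ℝ) := by nlinarith [hd'₁]
  have hd'posZ : (0:ℤ) < d' := by exact_mod_cast hd'pos
  have key : (β' - β) * d' = β * (d - d') + (i - i') := by linarith [heq, mul_comm β d]
  have keyR : ((β':ℝ) - β) * d' = (β:ℝ) * ((d:ℝ) - d') + ((i:ℝ) - i') := by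
    exact_mod_cast congrArg (Int.cast : ℤ → ℝ) key
  have hβR : (β:ℝ) ≤ 4*(k:ℝ) - 1 := by exact_mod_cast hβ₂
  have hβR0 : (0:ℝ) ≤ (β:ℝ) := by exact_mod_cast hβ₁
  have hddR : (d':ℝ) < d := by exact_mod_cast hdd'
  have hiR1 : (1:ℝ) ≤ (i:ℝ) := by exact_mod_cast hi₁
  have hiR2 : (i:ℝ) ≤ (d:ℝ) := by exact_mod_cast hi₂
  have hi'R1 : (1:ℝ) ≤ (i':ℝ) := by exact_mod_cast hi'₁
  have hi'R2 : (i':ℝ) ≤ (d':ℝ) := by exact_mod_cast hi'₂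
  have h1 : (-1 : ℝ) * d' < ((β':ℝ) - β) * d' := by
    nlinarith [mul_nonneg hβR0 (by linarith : (0:ℝ) ≤ (d:ℝ) - d')]
  have h2 : ((β':ℝ) - β) * d' < 2 * d' := by
    nlinarith [mul_nonneg (by linarith : (0:ℝ) ≤ 4*(k:ℝ) - 1 - β)
        (by linarith : (0:ℝ) ≤ (d:ℝ) - d'),
      mul_le_mul_of_nonneg_left (by linarith : (d:ℝ) - d' ≤ 2 * e)
        (by linarith : (0:ℝ) ≤ 4*(k:ℝ) - 1)]
  have h1' : (-1 : ℝ) < (β':ℝ) - β := lt_of_mul_lt_mul_right h1 (le_of_lt hd'pos)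
  have h2' : ((β':ℝ) - β) < 2 := lt_of_mul_lt_mul_right h2 (le_of_lt hd'pos)
  have h1Z : (-1 : ℤ) < β' - β := by exact_mod_cast h1'
  have h2Z : β' - β < 2 := by exact_mod_cast h2'
  omega
end

section
/- Let k and N be positive integers and let d ≠ d' be integers with d ≡ d' ≡ N (mod 2), both lying strictly between N/3 − N/(48k+15) and N/3 + N/(48k+15). Set e = (N−d)/2 and e' = (N−d')/2. For i ∈ [1,d] let S_{d,i} = {i, d+i, …, (4k−1)d+i} ∪ {4kN+4e+i, (4k+2)N−i+1}; for j ∈ [1,e] let T_{e,j} = {4kd+j, 4kd+e+j, …, 4kd+(4k−1)e+j} ∪ {4kN+j, 4kN+2e+j}; and for ℓ ∈ [1,e] let U_{e,ℓ} = {4kd+4ke+ℓ, 4kd+(4k+1)e+ℓ, …, 4kd+(8k−1)e+ℓ} ∪ {4kN+e+ℓ, 4kN+3e+ℓ}; define S_{d',i'}, T_{e',j'}, U_{e',ℓ'} analogously for d', e', with i' ∈ [1,d'] and j', ℓ' ∈ [1,e']. Then for each X ∈ {S_{d,i}, T_{e,j}, U_{e,ℓ}} and each Y ∈ {S_{d',i'},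 T_{e',j'}, U_{e',ℓ'}}, one has |X ∩ Y| ≤ 1, with the single exception that S_{d,i} ∩ S_{d',i} = {i, (4k+2)N−i+1} (the case X = S_{d,i}, Y = S_{d',i'} with i' = i). -/
/-- `S_{d,i} = {i, d+i, …, (4k-1)d+i} ∪ {4kN+4e+i, (4k+2)N-i+1}`. -/
def Sbig (k N d e i : ℕ) : Finset ℕ :=
  (Finset.range (4 * k)).image (fun t => t * d + i) ∪
    {4 * k * N + 4 * e + i, (4 * k + 2) * N - i + 1}

/-- `T_{e,j} = {4kd+j, 4kd+e+j, …, 4kd+(4k-1)e+j} ∪ {4kN+j, 4kN+2e+j}`. -/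
def Tbig (k N d e j : ℕ) : Finset ℕ :=
  (Finset.range (4 * k)).image (fun t => 4 * k * d + t * e + j) ∪
    {4 * k * N + j, 4 * k * N + 2 * e + j}

/-- `U_{e,l} = {4kd+4ke+l, 4kd+(4k+1)e+l, …, 4kd+(8k-1)e+l} ∪ {4kN+e+l, 4kN+3e+l}`. -/
def Ubig (k N d e l : ℕ) : Finset ℕ :=
  (Finset.range (4 * k)).image (fun t => 4 * k * d + (4 * k + t) * e + l) ∪
    {4 * k * N + e + l, 4 * k * N + 3 * e + l}

lemma key_lemma (k N a b t s D M : ℤ) (hk : 1 ≤ k) (hN : 1 ≤ N)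
    (ha1 : (96*k+24)*N < (288*k+90)*a) (ha2 : (288*k+90)*a < (96*k+36)*N)
    (hb1 : (96*k+24)*N < (288*k+90)*b) (hb2 : (288*k+90)*b < (96*k+36)*N)
    (htM1 : -M ≤ t) (htM2 : t ≤ M) (hsM1 : -M ≤ s) (hsM2 : s ≤ M)
    (hD1 : t*a - s*b ≤ D) (hD2 : -D ≤ t*a - s*b)
    (hcond : (288*k+90)*D + M*(12*N-1) < (96*k+24)*N) : t = s := by
  have hM : 0 ≤ M := by linarith
  have hC : (0:ℤ) < 288*k+90 := by linarith
  have hNk : (0:ℤ) < (96*k+24)*N := mul_pos (by linarith) (by linarith)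
  have ha0 : 0 < a := by
    by_contra h; push_neg at h
    nlinarith [mul_nonneg (show (0:ℤ) ≤ 288*k+90 by linarith) (neg_nonneg.mpr h)]
  have hb0 : 0 < b := by
    by_contra h; push_neg at h
    nlinarith [mul_nonneg (show (0:ℤ) ≤ 288*k+90 by linarith) (neg_nonneg.mpr h)]
  have hwlt : (288*k+90)*(a-b) < 12*N := by nlinarith [ha2, hb1]
  have hwgt : -(12*N) < (288*k+90)*(a-b) := by nlinarith [hb2, ha1]
  have hw1 : (288*k+90)*(a-b) ≤ 12*N - 1 := by linarith [Int.add_one_le_iff.mpr hwlt]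
  have hw2 : -(12*N-1) ≤ (288*k+90)*(a-b) := by linarith [Int.add_one_le_iff.mpr hwgt]
  have hX : (0:ℤ) ≤ 12*N - 1 := by linarith
  have hT : (288*k+90)*(t*(a-b)) ≤ M*(12*N-1) := by
    nlinarith [mul_nonneg (show (0:ℤ) ≤ M - t by linarith) (show (0:ℤ) ≤ 12*N-1 + (288*k+90)*(a-b) by linarith),
      mul_nonneg (show (0:ℤ) ≤ M + t by linarith) (show (0:ℤ) ≤ 12*N-1 - (288*k+90)*(a-b) by linarith)]
  have hS : -(M*(12*N-1)) ≤ (288*k+90)*(s*(a-b)) := by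
    nlinarith [mul_nonneg (show (0:ℤ) ≤ M - s by linarith) (show (0:ℤ) ≤ 12*N-1 - (288*k+90)*(a-b) by linarith),
      mul_nonneg (show (0:ℤ) ≤ M + s by linarith) (show (0:ℤ) ≤ 12*N-1 + (288*k+90)*(a-b) by linarith)]
  rcases lt_trichotomy t s with h|h|h
  · exfalso
    have hsb : b ≤ (s-t)*b := by nlinarith [mul_nonneg (show (0:ℤ) ≤ s-t-1 by linarith) hb0.le]
    have h1 : (288*k+90)*b ≤ (288*k+90)*((s-t)*b) := mul_le_mul_of_nonneg_left hsb hC.le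
    have h2 : (288*k+90)*(-D) ≤ (288*k+90)*(t*a - s*b) := mul_le_mul_of_nonneg_left hD2 hC.le
    have hid : (288*k+90)*(t*a - s*b) = (288*k+90)*(t*(a-b)) - (288*k+90)*((s-t)*b) := by ring
    linarith [hT, h1, h2, hcond, hb1, hid]
  · exact h
  · exfalso
    have hta : a ≤ (t-s)*a := by nlinarith [mul_nonneg (show (0:ℤ) ≤ t-s-1 by linarith) ha0.le]
    have h1 : (288*k+90)*a ≤ (288*k+90)*((t-s)*a) := mul_le_mul_of_nonneg_left hta hC.le
    have h2 : (288*k+90)*(t*a - s*b) ≤ (288*k+90)*D := mul_le_mul_of_nonneg_left hD1 hC.le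
    have hid : (288*k+90)*(t*a - s*b) = (288*k+90)*((t-s)*a) + (288*k+90)*(s*(a-b)) := by ring
    linarith [hS, h1, h2, hcond, ha1, hid]
lemma key_zero (k N a b t s : ℤ) (hk : 1 ≤ k) (hN : 1 ≤ N)
    (ha1 : (96*k+24)*N < (288*k+90)*a) (ha2 : (288*k+90)*a < (96*k+36)*N)
    (hb1 : (96*k+24)*N < (288*k+90)*b) (hb2 : (288*k+90)*b < (96*k+36)*N)
    (htM1 : -(8*k+2) ≤ t) (htM2 : t ≤ 8*k+2) (hsM1 : -(8*k+2) ≤ s) (hsM2 : s ≤ 8*k+2)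
    (h : t*a = s*b) : t = s := by
  have hkN : (0:ℤ) < k*N := mul_pos (by linarith) (by linarith)
  exact key_lemma k N a b t s 0 (8*k+2) hk hN ha1 ha2 hb1 hb2 htM1 htM2 hsM1 hsM2
    (by linarith) (by linarith) (by nlinarith)

lemma key_zero' (k N a b t s : ℤ) (hk : 1 ≤ k) (hN : 1 ≤ N)
    (ha1 : (96*k+24)*N < (288*k+90)*a) (ha2 : (288*k+90)*a < (96*k+36)*N)
    (hb1 : (96*k+24)*N < (288*k+90)*b) (hb2 : (288*k+90)*b < (96*k+36)*N)
    (htM1 : -(8*k+2) ≤ t) (htM2 : t ≤ 8*k+2) (hsM1 : -(8*k+2) ≤ s) (hsM2 : s ≤ 8*k+2)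
    (hab : a ≠ b) (h : t*a = s*b) : t = 0 := by
  have hts := key_zero k N a b t s hk hN ha1 ha2 hb1 hb2 htM1 htM2 hsM1 hsM2 h
  have h0 : t*(a-b) = 0 := by rw [hts] at h ⊢; linear_combination h
  rcases mul_eq_zero.mp h0 with h'|h'
  · exact h'
  · exact absurd (sub_eq_zero.mp h') hab

lemma Good_e (k N d e : ℕ) (he : N = d + 2*e)
    (hG1 : (96*k+24)*N < (288*k+90)*d) (hG2 : (288*k+90)*d < (96*k+36)*N) :
    (96*k+24)*N < (288*k+90)*e ∧ (288*k+90)*e < (96*k+36)*N := by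
  subst he
  constructor
  · nlinarith [hG2, Nat.zero_le d, Nat.zero_le e]
  · nlinarith [hG1, Nat.zero_le d, Nat.zero_le e]

lemma bound_of_Good (k N a : ℕ) (hk : 1 ≤ k) (hN : 1 ≤ N)
    (hG1 : (96*k+24)*N < (288*k+90)*a) (hG2 : (288*k+90)*a < (96*k+36)*N) :
    2*N < 7*a ∧ 14*a < 5*N := by
  have hkN : N ≤ k*N := Nat.le_mul_of_pos_left N hk
  constructor
  · by_contra h; push_neg at h
    have h1 : (288*k+90)*(7*a) ≤ (288*k+90)*(2*N) := Nat.mul_le_mul_left _ h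
    nlinarith [hG1, h1, hkN]
  · by_contra h; push_neg at h
    have h1 : (288*k+90)*(5*N) ≤ (288*k+90)*(14*a) := Nat.mul_le_mul_left _ h
    nlinarith [hG2, h1, hkN]
lemma Sbig_shape {k N d e i x : ℕ} (hi1 : 1 ≤ i) (hi2 : i ≤ d) (he : N = d + 2*e)
    (hx : x ∈ Sbig k N d e i) :
    (∃ t, t < 4*k ∧ x = t*d + i ∧ x ≤ 4*k*d ∧ x ≤ 4*k*N) ∨
    (∃ r, x = 4*k*N + r ∧ 1 ≤ r ∧ (r = 4*e + i ∨ r + i = 2*N + 1)) := by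
  simp only [Sbig, Finset.mem_union, Finset.mem_image, Finset.mem_range, Finset.mem_insert,
    Finset.mem_singleton] at hx
  rcases hx with ⟨t, ht, rfl⟩ | h | h
  · left
    have h1 : (t+1)*d ≤ (4*k)*d := Nat.mul_le_mul_right _ (by omega)
    have h2 : 4*k*d ≤ 4*k*N := Nat.mul_le_mul_left _ (by omega)
    exact ⟨t, ht, rfl, by nlinarith, by nlinarith⟩
  · right; exact ⟨4*e+i, by rw [h]; ring, by omega, Or.inl rfl⟩
  · right
    refine ⟨2*N+1-i, ?_, by omega, Or.inr (by omega)⟩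
    rw [h, show (4*k+2)*N = 4*k*N + 2*N from by ring]
    have hiN : i ≤ N := by omega
    generalize 4*k*N = K
    omega

lemma Tbig_shape {k N d e j x : ℕ} (hj1 : 1 ≤ j) (hj2 : j ≤ e) (he : N = d + 2*e)
    (hx : x ∈ Tbig k N d e j) :
    (∃ t, t < 4*k ∧ x = 4*k*d + t*e + j ∧ 4*k*d < x ∧ x ≤ 4*k*d + 4*k*e ∧ x ≤ 4*k*N) ∨
    (∃ r, x = 4*k*N + r ∧ 1 ≤ r ∧ (r = j ∨ r = 2*e + j)) := by
  simp only [Tbig, Finset.mem_union, Finset.mem_image, Finset.mem_range, Finset.mem_insert,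
    Finset.mem_singleton] at hx
  have hNd : 4*k*N = 4*k*d + 4*k*(2*e) := by rw [he]; ring
  rcases hx with ⟨t, ht, rfl⟩ | h | h
  · left
    have h1 : (t+1)*e ≤ (4*k)*e := Nat.mul_le_mul_right _ (by omega)
    exact ⟨t, ht, rfl, by nlinarith, by nlinarith, by nlinarith⟩
  · right; exact ⟨j, by rw [h], by omega, Or.inl rfl⟩
  · right; exact ⟨2*e+j, by rw [h]; ring, by omega, Or.inr rfl⟩

lemma Ubig_shape {k N d e l x : ℕ} (hl1 : 1 ≤ l) (hl2 : l ≤ e) (he : N = d + 2*e)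
    (hx : x ∈ Ubig k N d e l) :
    (∃ t, t < 4*k ∧ x = 4*k*d + 4*k*e + t*e + l ∧ 4*k*d + 4*k*e < x ∧ x ≤ 4*k*N) ∨
    (∃ r, x = 4*k*N + r ∧ 1 ≤ r ∧ (r = e + l ∨ r = 3*e + l)) := by
  simp only [Ubig, Finset.mem_union, Finset.mem_image, Finset.mem_range, Finset.mem_insert,
    Finset.mem_singleton] at hx
  have hNd : 4*k*N = 4*k*d + 4*k*(2*e) := by rw [he]; ring
  rcases hx with ⟨t, ht, rfl⟩ | h | h
  · left
    have h1 : (t+1)*e ≤ (4*k)*e := Nat.mul_le_mul_right _ (by omega)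
    refine ⟨t, ht, by ring, by nlinarith, by nlinarith⟩
  · right; exact ⟨e+l, by rw [h]; ring, by omega, Or.inl rfl⟩
  · right; exact ⟨3*e+l, by rw [h]; ring, by omega, Or.inr rfl⟩
lemma pos_of_GoodZ (k N a : ℤ) (hk : 1 ≤ k) (hN : 1 ≤ N)
    (h : (96*k+24)*N < (288*k+90)*a) : 0 < a := by
  by_contra h'; push_neg at h'
  nlinarith [mul_nonneg (show (0:ℤ) ≤ 288*k+90 by linarith) (neg_nonneg.mpr h'),
    mul_pos (show (0:ℤ) < 96*k+24 by linarith) (show (0:ℤ) < N by linarith)]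

lemma APAP (k N a b p q x y t1 t2 s1 s2 : ℤ) (hk : 1 ≤ k) (hN : 1 ≤ N)
    (ha1 : (96*k+24)*N < (288*k+90)*a) (ha2 : (288*k+90)*a < (96*k+36)*N)
    (hb1 : (96*k+24)*N < (288*k+90)*b) (hb2 : (288*k+90)*b < (96*k+36)*N)
    (ht1a : 0 ≤ t1) (ht1b : t1 ≤ 4*k) (ht2a : 0 ≤ t2) (ht2b : t2 ≤ 4*k)
    (hs1a : 0 ≤ s1) (hs1b : s1 ≤ 4*k) (hs2a : 0 ≤ s2) (hs2b : s2 ≤ 4*k)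
    (hx1 : x = t1*a + p) (hy1 : y = t2*a + p)
    (hx2 : x = s1*b + q) (hy2 : y = s2*b + q)
    (hside : a ≠ b ∨ ∃ w1 w2 : ℤ, (w1 < x ∧ x ≤ w2) ∧ (w1 < y ∧ y ≤ w2) ∧
      (288*k+90)*(w2-w1) ≤ 4*k*(12*N-1)) :
    x = y := by
  have hC : (0:ℤ) < 288*k+90 := by linarith
  have heq : (t1-t2)*a = (s1-s2)*b := by linear_combination hy1 - hx1 + hx2 - hy2
  have hts : t1 - t2 = s1 - s2 :=
    key_zero k N a b _ _ hk hN ha1 ha2 hb1 hb2 (by linarith) (by linarith) (by linarith)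
      (by linarith) heq
  rcases eq_or_ne (t1 - t2) 0 with h0 | h0
  · have ht : t1 = t2 := by linarith
    rw [hx1, hy1, ht]
  · rcases hside with hab | ⟨w1, w2, ⟨hxw1, hxw2⟩, ⟨hyw1, hyw2⟩, hw⟩
    · exact absurd (key_zero' k N a b _ _ hk hN ha1 ha2 hb1 hb2 (by linarith) (by linarith)
        (by linarith) (by linarith) hab heq) h0
    · exfalso
      have ha0 : 0 < a := pos_of_GoodZ k N a hk hN ha1
      have hkN : (0:ℤ) < k*N := mul_pos (by linarith) (by linarith)
      have hwa : w2 - w1 < a := by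
        have h1 : (288*k+90)*(w2-w1) < (288*k+90)*a := by nlinarith [ha1, hw]
        exact lt_of_mul_lt_mul_left h1 hC.le
      have hxy : x - y = (t1-t2)*a := by rw [hx1, hy1]; ring
      rcases h0.lt_or_gt with hm | hm
      · have h2 : a ≤ (t2-t1)*a := by
          nlinarith [mul_nonneg (show (0:ℤ) ≤ t2-t1-1 by linarith) ha0.le]
        have h3 : y - x = (t2-t1)*a := by rw [hx1, hy1]; ring
        linarith
      · have h2 : a ≤ (t1-t2)*a := by
          nlinarith [mul_nonneg (show (0:ℤ) ≤ t1-t2-1 by linarith) ha0.le]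
        linarith

set_option maxHeartbeats 1000000 in
lemma SS_excl (k N d₁ e₁ d₂ e₂ i₁ i₂ t s r : ℕ) (hk : 1 ≤ k) (hN : 1 ≤ N)
    (hne : d₁ ≠ d₂) (he₁ : N = d₁ + 2*e₁) (he₂ : N = d₂ + 2*e₂)
    (hGd₁a : (96*k+24)*N < (288*k+90)*d₁) (hGd₁b : (288*k+90)*d₁ < (96*k+36)*N)
    (hGd₂a : (96*k+24)*N < (288*k+90)*d₂) (hGd₂b : (288*k+90)*d₂ < (96*k+36)*N)
    (hi₁ : 1 ≤ i₁) (hi₁d : i₁ ≤ d₁) (hi₂ : 1 ≤ i₂) (hi₂d : i₂ ≤ d₂) (hnei : i₁ ≠ i₂)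
    (ht : t < 4*k) (hs : s < 4*k) (hAP : t*d₁ + i₁ = s*d₂ + i₂)
    (hr1 : r = 4*e₁ + i₁ ∨ r + i₁ = 2*N + 1) (hr2 : r = 4*e₂ + i₂ ∨ r + i₂ = 2*N + 1) : False := by
  have hkZ : (1:ℤ) ≤ k := by exact_mod_cast hk
  have hNZ : (1:ℤ) ≤ N := by exact_mod_cast hN
  have Zd₁a : ((96*(k:ℤ)+24)*N) < (288*k+90)*d₁ := by exact_mod_cast hGd₁a
  have Zd₁b : ((288*(k:ℤ)+90)*d₁) < (96*k+36)*N := by exact_mod_cast hGd₁b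
  have Zd₂a : ((96*(k:ℤ)+24)*N) < (288*k+90)*d₂ := by exact_mod_cast hGd₂a
  have Zd₂b : ((288*(k:ℤ)+90)*d₂) < (96*k+36)*N := by exact_mod_cast hGd₂b
  have habz : (d₁:ℤ) ≠ d₂ := by exact_mod_cast hne
  have hAPz : (t:ℤ)*d₁ + i₁ = (s:ℤ)*d₂ + i₂ := by exact_mod_cast hAP
  have htZ : (t:ℤ) < 4*k := by exact_mod_cast ht
  have hsZ : (s:ℤ) < 4*k := by exact_mod_cast hs
  have ht0 : (0:ℤ) ≤ t := Int.natCast_nonneg t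
  have hs0 : (0:ℤ) ≤ s := Int.natCast_nonneg s
  have hkN : (0:ℤ) < (k:ℤ)*N := mul_pos (by linarith) (by linarith)
  have heN₁ : (N:ℤ) = d₁ + 2*e₁ := by exact_mod_cast he₁
  have heN₂ : (N:ℤ) = d₂ + 2*e₂ := by exact_mod_cast he₂
  have hΔ₁ : (288*(k:ℤ)+90)*((d₂:ℤ)-d₁) ≤ 12*N-1 := by
    have h : (288*(k:ℤ)+90)*((d₂:ℤ)-d₁) < 12*N := by linarith only [Zd₂b, Zd₁a]
    linarith [Int.add_one_le_iff.mpr h]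
  have hΔ₂ : (288*(k:ℤ)+90)*((d₁:ℤ)-d₂) ≤ 12*N-1 := by
    have h : (288*(k:ℤ)+90)*((d₁:ℤ)-d₂) < 12*N := by linarith only [Zd₁b, Zd₂a]
    linarith [Int.add_one_le_iff.mpr h]
  rcases hr1 with h1|h1 <;> rcases hr2 with h2|h2
  · -- 4e₁+i₁ = 4e₂+i₂
    have hE : (4*(e₁:ℤ)+i₁) = 4*e₂+i₂ := by exact_mod_cast h1.symm.trans h2
    have heq : ((t:ℤ)+2)*d₁ = ((s:ℤ)+2)*d₂ := by
      linear_combination hAPz - hE + 2*heN₂ - 2*heN₁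
    have h0 := key_zero' k N d₁ d₂ ((t:ℤ)+2) ((s:ℤ)+2) hkZ hNZ Zd₁a Zd₁b Zd₂a Zd₂b
      (by linarith) (by linarith) (by linarith) (by linarith) habz heq
    linarith
  · -- 4e₁+i₁+i₂ = 2N+1, so i₁+i₂ = 2d₁+1, d₂ > d₁
    have hii : i₁ + i₂ = 2*d₁ + 1 := by omega
    have hd21 : d₁ < d₂ := by omega
    have hu : (0:ℤ) ≤ (d₁:ℤ) - i₁ := by push_cast; omega
    have hu' : (0:ℤ) ≤ (d₂:ℤ) - i₂ := by push_cast; omega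
    have hsum : ((d₁:ℤ) - i₁) + ((d₂:ℤ) - i₂) = d₂ - d₁ - 1 := by push_cast; omega
    have hid : ((t:ℤ)+1)*d₁ - ((s:ℤ)+1)*d₂ = ((d₁:ℤ)-i₁) - ((d₂:ℤ)-i₂) := by
      linear_combination hAPz
    have hts := key_lemma k N d₁ d₂ ((t:ℤ)+1) ((s:ℤ)+1) ((d₂:ℤ)-d₁-1) (4*k) hkZ hNZ
      Zd₁a Zd₁b Zd₂a Zd₂b (by linarith) (by linarith) (by linarith) (by linarith)
      (by linarith) (by linarith) (by linarith)
    have hid2 : ((t:ℤ)+1)*((d₁:ℤ)-d₂) = ((d₁:ℤ)-i₁) - ((d₂:ℤ)-i₂) := by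
      linear_combination hid - (d₂:ℤ)*hts
    have hmul := mul_le_mul_of_nonpos_right (show (1:ℤ) ≤ (t:ℤ)+1 by linarith)
      (show (d₁:ℤ)-d₂ ≤ 0 by push_cast; omega)
    linarith [hmul, hid2, hsum, hu, hu']
  · -- i₁+i₂ = 2d₂+1, d₁ > d₂
    have hii : i₁ + i₂ = 2*d₂ + 1 := by omega
    have hd12 : d₂ < d₁ := by omega
    have hu : (0:ℤ) ≤ (d₁:ℤ) - i₁ := by push_cast; omega
    have hu' : (0:ℤ) ≤ (d₂:ℤ) - i₂ := by push_cast; omega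
    have hsum : ((d₁:ℤ) - i₁) + ((d₂:ℤ) - i₂) = d₁ - d₂ - 1 := by push_cast; omega
    have hid : ((t:ℤ)+1)*d₁ - ((s:ℤ)+1)*d₂ = ((d₁:ℤ)-i₁) - ((d₂:ℤ)-i₂) := by
      linear_combination hAPz
    have hts := key_lemma k N d₁ d₂ ((t:ℤ)+1) ((s:ℤ)+1) ((d₁:ℤ)-d₂-1) (4*k) hkZ hNZ
      Zd₁a Zd₁b Zd₂a Zd₂b (by linarith) (by linarith) (by linarith) (by linarith)
      (by linarith) (by linarith) (by linarith)
    have hid2 : ((t:ℤ)+1)*((d₁:ℤ)-d₂) = ((d₁:ℤ)-i₁) - ((d₂:ℤ)-i₂) := by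
      linear_combination hid - (d₂:ℤ)*hts
    have hmul := mul_le_mul_of_nonneg_right (show (1:ℤ) ≤ (t:ℤ)+1 by linarith)
      (show (0:ℤ) ≤ (d₁:ℤ)-d₂ by push_cast; omega)
    linarith [hmul, hid2, hsum, hu, hu']
  · omega

set_option maxHeartbeats 1000000 in
lemma pair_SS (k N d₁ e₁ d₂ e₂ i₁ i₂ : ℕ) (hk : 1 ≤ k) (hN : 1 ≤ N)
    (hne : d₁ ≠ d₂) (he₁ : N = d₁ + 2*e₁) (he₂ : N = d₂ + 2*e₂)
    (hGd₁a : (96*k+24)*N < (288*k+90)*d₁) (hGd₁b : (288*k+90)*d₁ < (96*k+36)*N)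
    (hGd₂a : (96*k+24)*N < (288*k+90)*d₂) (hGd₂b : (288*k+90)*d₂ < (96*k+36)*N)
    (hi₁ : 1 ≤ i₁) (hi₁d : i₁ ≤ d₁) (hi₂ : 1 ≤ i₂) (hi₂d : i₂ ≤ d₂) (hnei : i₁ ≠ i₂) :
    (Sbig k N d₁ e₁ i₁ ∩ Sbig k N d₂ e₂ i₂).card ≤ 1 := by
  have hkZ : (1:ℤ) ≤ k := by exact_mod_cast hk
  have hNZ : (1:ℤ) ≤ N := by exact_mod_cast hN
  have Zd₁a : ((96*(k:ℤ)+24)*N) < (288*k+90)*d₁ := by exact_mod_cast hGd₁a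
  have Zd₁b : ((288*(k:ℤ)+90)*d₁) < (96*k+36)*N := by exact_mod_cast hGd₁b
  have Zd₂a : ((96*(k:ℤ)+24)*N) < (288*k+90)*d₂ := by exact_mod_cast hGd₂a
  have Zd₂b : ((288*(k:ℤ)+90)*d₂) < (96*k+36)*N := by exact_mod_cast hGd₂b
  have habz : (d₁:ℤ) ≠ d₂ := by exact_mod_cast hne
  rw [Finset.card_le_one]
  intro x hx y hy
  rw [Finset.mem_inter] at hx hy
  have hx1 := Sbig_shape hi₁ hi₁d he₁ hx.1
  have hx2 := Sbig_shape hi₂ hi₂d he₂ hx.2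
  have hy1 := Sbig_shape hi₁ hi₁d he₁ hy.1
  have hy2 := Sbig_shape hi₂ hi₂d he₂ hy.2
  rcases hx1 with ⟨t1, ht1, hxt, hxb1, hxb2⟩ | ⟨rx, hxr, hrxp, hrx⟩
  · rcases hx2 with ⟨s1, hs1, hxs, _, _⟩ | ⟨rx', hxr', hrxp', _⟩
    · rcases hy1 with ⟨t2, ht2, hyt, hyb1, hyb2⟩ | ⟨ry, hyr, hryp, hry⟩
      · rcases hy2 with ⟨s2, hs2, hys, _, _⟩ | ⟨ry', hyr', hryp', _⟩
        · -- both APAP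
          have hxtz : (x:ℤ) = (t1:ℤ)*d₁ + i₁ := by exact_mod_cast hxt
          have hytz : (y:ℤ) = (t2:ℤ)*d₁ + i₁ := by exact_mod_cast hyt
          have hxsz : (x:ℤ) = (s1:ℤ)*d₂ + i₂ := by exact_mod_cast hxs
          have hysz : (y:ℤ) = (s2:ℤ)*d₂ + i₂ := by exact_mod_cast hys
          have ht1z : (t1:ℤ) < 4*k := by exact_mod_cast ht1
          have ht2z : (t2:ℤ) < 4*k := by exact_mod_cast ht2
          have hs1z : (s1:ℤ) < 4*k := by exact_mod_cast hs1
          have hs2z : (s2:ℤ) < 4*k := by exact_mod_cast hs2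
          have := APAP k N d₁ d₂ i₁ i₂ x y t1 t2 s1 s2 hkZ hNZ Zd₁a Zd₁b Zd₂a Zd₂b
            (Int.natCast_nonneg t1) (by linarith) (Int.natCast_nonneg t2) (by linarith)
            (Int.natCast_nonneg s1) (by linarith) (Int.natCast_nonneg s2) (by linarith)
            hxtz hytz hxsz hysz (Or.inl habz)
          exact_mod_cast this
        · linarith
      · rcases hy2 with ⟨s2, hs2, hys, _, hyb2'⟩ | ⟨ry', hyr', hryp', hry'⟩
        · linarith
        · exfalso
          have hrr : ry = ry' := Nat.add_left_cancel (hyr.symm.trans hyr')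
          subst hrr
          exact SS_excl k N d₁ e₁ d₂ e₂ i₁ i₂ t1 s1 ry hk hN hne he₁ he₂
            hGd₁a hGd₁b hGd₂a hGd₂b hi₁ hi₁d hi₂ hi₂d hnei ht1 hs1
            (hxt.symm.trans hxs) hry hry'
    · linarith
  · rcases hx2 with ⟨s1, hs1, hxs, _, hxb2'⟩ | ⟨rx', hxr', hrxp', hrx'⟩
    · linarith
    · have hrr : rx = rx' := Nat.add_left_cancel (hxr.symm.trans hxr')
      subst hrr
      rcases hy1 with ⟨t2, ht2, hyt, hyb1, hyb2⟩ | ⟨ry, hyr, hryp, hry⟩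
      · rcases hy2 with ⟨s2, hs2, hys, _, _⟩ | ⟨ry', hyr', hryp', hry'⟩
        · exfalso
          exact SS_excl k N d₁ e₁ d₂ e₂ i₁ i₂ t2 s2 rx hk hN hne he₁ he₂
            hGd₁a hGd₁b hGd₂a hGd₂b hi₁ hi₁d hi₂ hi₂d hnei ht2 hs2
            (hyt.symm.trans hys) hrx hrx'
        · linarith
      · rcases hy2 with ⟨s2, hs2, hys, _, hyb2'⟩ | ⟨ry', hyr', hryp', hry'⟩
        · linarith
        · have hrr2 : ry = ry' := Nat.add_left_cancel (hyr.symm.trans hyr')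
          subst hrr2
          have hxy : rx = ry := by
            rcases hrx with a|a <;> rcases hrx' with b|b <;> rcases hry with c|c <;>
              rcases hry' with d'|d' <;> omega
          rw [hxr, hyr, hxy]

lemma i_mem_Sbig (k N d e i : ℕ) (hk : 1 ≤ k) : i ∈ Sbig k N d e i := by
  simp only [Sbig, Finset.mem_union, Finset.mem_image, Finset.mem_range]
  exact Or.inl ⟨0, by omega, by simp⟩

lemma ext2_mem_Sbig (k N d e i : ℕ) : (4*k+2)*N - i + 1 ∈ Sbig k N d e i := by
  simp only [Sbig, Finset.mem_union, Finset.mem_insert, Finset.mem_singleton]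
  right; right; trivial

set_option maxHeartbeats 1000000 in
lemma pair_SS_eq (k N d₁ e₁ d₂ e₂ i : ℕ) (hk : 1 ≤ k) (hN : 1 ≤ N)
    (hne : d₁ ≠ d₂) (he₁ : N = d₁ + 2*e₁) (he₂ : N = d₂ + 2*e₂)
    (hGd₁a : (96*k+24)*N < (288*k+90)*d₁) (hGd₁b : (288*k+90)*d₁ < (96*k+36)*N)
    (hGd₂a : (96*k+24)*N < (288*k+90)*d₂) (hGd₂b : (288*k+90)*d₂ < (96*k+36)*N)
    (hi1 : 1 ≤ i) (hid₁ : i ≤ d₁) (hid₂ : i ≤ d₂) :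
    Sbig k N d₁ e₁ i ∩ Sbig k N d₂ e₂ i = {i, (4*k+2)*N - i + 1} := by
  have hkZ : (1:ℤ) ≤ k := by exact_mod_cast hk
  have hNZ : (1:ℤ) ≤ N := by exact_mod_cast hN
  have Zd₁a : ((96*(k:ℤ)+24)*N) < (288*k+90)*d₁ := by exact_mod_cast hGd₁a
  have Zd₁b : ((288*(k:ℤ)+90)*d₁) < (96*k+36)*N := by exact_mod_cast hGd₁b
  have Zd₂a : ((96*(k:ℤ)+24)*N) < (288*k+90)*d₂ := by exact_mod_cast hGd₂a
  have Zd₂b : ((288*(k:ℤ)+90)*d₂) < (96*k+36)*N := by exact_mod_cast hGd₂b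
  have habz : (d₁:ℤ) ≠ d₂ := by exact_mod_cast hne
  ext x
  simp only [Finset.mem_inter, Finset.mem_insert, Finset.mem_singleton]
  constructor
  · rintro ⟨hm1, hm2⟩
    have h1 := Sbig_shape hi1 hid₁ he₁ hm1
    have h2 := Sbig_shape hi1 hid₂ he₂ hm2
    rcases h1 with ⟨t, ht, hxt, _, hxb⟩ | ⟨r, hxr, hrp, hr⟩
    · rcases h2 with ⟨s, hs, hxs, _, _⟩ | ⟨r', hxr', hrp', _⟩
      · left
        have hAP : t*d₁ = s*d₂ := Nat.add_right_cancel (hxt.symm.trans hxs)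
        have hAPz : (t:ℤ)*d₁ = (s:ℤ)*d₂ := by exact_mod_cast hAP
        have htZ : (t:ℤ) < 4*k := by exact_mod_cast ht
        have hsZ : (s:ℤ) < 4*k := by exact_mod_cast hs
        have h0 := key_zero' k N d₁ d₂ (t:ℤ) (s:ℤ) hkZ hNZ Zd₁a Zd₁b Zd₂a Zd₂b
          (by linarith [Int.natCast_nonneg t]) (by linarith) (by linarith [Int.natCast_nonneg s])
          (by linarith) habz hAPz
        have ht0 : t = 0 := by exact_mod_cast h0
        subst ht0
        simpa using hxt
      · exfalso; linarith
    · rcases h2 with ⟨s, hs, hxs, _, hxb'⟩ | ⟨r', hxr', hrp', hr'⟩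
      · exfalso; linarith
      · have hrr : r = r' := Nat.add_left_cancel (hxr.symm.trans hxr')
        subst hrr
        rcases hr with h|h <;> rcases hr' with h'|h'
        · exfalso; omega
        · exfalso; omega
        · exfalso; omega
        · right
          rw [hxr, show (4*k+2)*N = 4*k*N + 2*N from by ring]
          have hiN : i ≤ 2*N := by omega
          generalize 4*k*N = K
          omega
  · rintro (rfl | rfl)
    · exact ⟨i_mem_Sbig k N d₁ e₁ x hk, i_mem_Sbig k N d₂ e₂ x hk⟩
    · exact ⟨ext2_mem_Sbig k N d₁ e₁ i, ext2_mem_Sbig k N d₂ e₂ i⟩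

set_option maxHeartbeats 1000000 in
lemma pair_ST (k N d₁ e₁ d₂ e₂ i j : ℕ) (hk : 1 ≤ k) (hN : 1 ≤ N)
    (hne : d₁ ≠ d₂) (he₁ : N = d₁ + 2*e₁) (he₂ : N = d₂ + 2*e₂)
    (hGd₁a : (96*k+24)*N < (288*k+90)*d₁) (hGd₁b : (288*k+90)*d₁ < (96*k+36)*N)
    (hGd₂a : (96*k+24)*N < (288*k+90)*d₂) (hGd₂b : (288*k+90)*d₂ < (96*k+36)*N)
    (hi1 : 1 ≤ i) (hid : i ≤ d₁) (hj1 : 1 ≤ j) (hje : j ≤ e₂) :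
    (Sbig k N d₁ e₁ i ∩ Tbig k N d₂ e₂ j).card ≤ 1 := by
  obtain ⟨hGe₁a, hGe₁b⟩ := Good_e k N d₁ e₁ he₁ hGd₁a hGd₁b
  obtain ⟨hGe₂a, hGe₂b⟩ := Good_e k N d₂ e₂ he₂ hGd₂a hGd₂b
  obtain ⟨h7d₁, h14d₁⟩ := bound_of_Good k N d₁ hk hN hGd₁a hGd₁b
  obtain ⟨h7d₂, h14d₂⟩ := bound_of_Good k N d₂ hk hN hGd₂a hGd₂b
  obtain ⟨h7e₁, h14e₁⟩ := bound_of_Good k N e₁ hk hN hGe₁a hGe₁b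
  obtain ⟨h7e₂, h14e₂⟩ := bound_of_Good k N e₂ hk hN hGe₂a hGe₂b
  have hkZ : (1:ℤ) ≤ k := by exact_mod_cast hk
  have hNZ : (1:ℤ) ≤ N := by exact_mod_cast hN
  have Zd₁a : ((96*(k:ℤ)+24)*N) < (288*k+90)*d₁ := by exact_mod_cast hGd₁a
  have Zd₁b : ((288*(k:ℤ)+90)*d₁) < (96*k+36)*N := by exact_mod_cast hGd₁b
  have Ze₂a : ((96*(k:ℤ)+24)*N) < (288*k+90)*e₂ := by exact_mod_cast hGe₂a
  have Ze₂b : ((288*(k:ℤ)+90)*e₂) < (96*k+36)*N := by exact_mod_cast hGe₂b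
  have Zd₂a : ((96*(k:ℤ)+24)*N) < (288*k+90)*d₂ := by exact_mod_cast hGd₂a
  rw [Finset.card_le_one]
  intro x hx y hy
  rw [Finset.mem_inter] at hx hy
  have hx1 := Sbig_shape hi1 hid he₁ hx.1
  have hx2 := Tbig_shape hj1 hje he₂ hx.2
  have hy1 := Sbig_shape hi1 hid he₁ hy.1
  have hy2 := Tbig_shape hj1 hje he₂ hy.2
  rcases hx1 with ⟨t1, ht1, hxt, hxb1, hxb2⟩ | ⟨rx, hxr, hrxp, hrx⟩
  · rcases hx2 with ⟨s1, hs1, hxs, hxlo, _, _⟩ | ⟨rx', hxr', hrxp', _⟩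
    · rcases hy1 with ⟨t2, ht2, hyt, hyb1, hyb2⟩ | ⟨ry, hyr, hryp, hry⟩
      · rcases hy2 with ⟨s2, hs2, hys, hylo, _, _⟩ | ⟨ry', hyr', hryp', _⟩
        · -- both APAP, window argument
          have hxtz : (x:ℤ) = (t1:ℤ)*d₁ + i := by exact_mod_cast hxt
          have hytz : (y:ℤ) = (t2:ℤ)*d₁ + i := by exact_mod_cast hyt
          have hxsz : (x:ℤ) = (s1:ℤ)*e₂ + (4*(k:ℤ)*d₂ + j) := by push_cast [hxs]; ring
          have hysz : (y:ℤ) = (s2:ℤ)*e₂ + (4*(k:ℤ)*d₂ + j) := by push_cast [hys]; ring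
          have ht1z : (t1:ℤ) < 4*k := by exact_mod_cast ht1
          have ht2z : (t2:ℤ) < 4*k := by exact_mod_cast ht2
          have hs1z : (s1:ℤ) < 4*k := by exact_mod_cast hs1
          have hs2z : (s2:ℤ) < 4*k := by exact_mod_cast hs2
          have hΔ : (288*(k:ℤ)+90)*((d₁:ℤ)-d₂) ≤ 12*N-1 := by
            have h : (288*(k:ℤ)+90)*((d₁:ℤ)-d₂) < 12*N := by linarith only [Zd₁b, Zd₂a]
            linarith [Int.add_one_le_iff.mpr h]
          have hw : (288*(k:ℤ)+90)*((4*(k:ℤ)*d₁) - 4*(k:ℤ)*d₂) ≤ 4*(k:ℤ)*(12*N-1) := by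
            linarith only [mul_le_mul_of_nonneg_left hΔ (show (0:ℤ) ≤ 4*(k:ℤ) by linarith)]
          have hxb2z : (x:ℤ) ≤ 4*(k:ℤ)*d₁ := by exact_mod_cast hxb1
          have hyb2z : (y:ℤ) ≤ 4*(k:ℤ)*d₁ := by exact_mod_cast hyb1
          have hxloz : 4*(k:ℤ)*d₂ < (x:ℤ) := by exact_mod_cast hxlo
          have hyloz : 4*(k:ℤ)*d₂ < (y:ℤ) := by exact_mod_cast hylo
          have := APAP k N d₁ e₂ i (4*(k:ℤ)*d₂ + j) x y t1 t2 s1 s2 hkZ hNZ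
            Zd₁a Zd₁b Ze₂a Ze₂b
            (Int.natCast_nonneg t1) (by linarith) (Int.natCast_nonneg t2) (by linarith)
            (Int.natCast_nonneg s1) (by linarith) (Int.natCast_nonneg s2) (by linarith)
            hxtz hytz hxsz hysz
            (Or.inr ⟨4*(k:ℤ)*d₂, 4*(k:ℤ)*d₁, ⟨hxloz, hxb2z⟩, ⟨hyloz, hyb2z⟩, hw⟩)
          exact_mod_cast this
        · linarith only [hyb2, hyr', hryp']
      · rcases hy2 with ⟨s2, hs2, hys, _, _, hyb2'⟩ | ⟨ry', hyr', hryp', hry'⟩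
        · linarith only [hyr, hryp, hyb2']
        · exfalso
          have hrr : ry = ry' := Nat.add_left_cancel (hyr.symm.trans hyr')
          subst hrr
          rcases hry with a|a <;> rcases hry' with b|b <;> omega
    · linarith only [hxb2, hxr', hrxp']
  · rcases hx2 with ⟨s1, hs1, hxs, _, _, hxb2'⟩ | ⟨rx', hxr', hrxp', hrx'⟩
    · linarith only [hxr, hrxp, hxb2']
    · exfalso
      have hrr : rx = rx' := Nat.add_left_cancel (hxr.symm.trans hxr')
      subst hrr
      rcases hrx with a|a <;> rcases hrx' with b|b <;> omega

set_option maxHeartbeats 1000000 in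
lemma TT_excl (k N d₁ e₁ d₂ e₂ j₁ j₂ t s r : ℕ) (hk : 1 ≤ k) (hN : 1 ≤ N)
    (hne : d₁ ≠ d₂) (he₁ : N = d₁ + 2*e₁) (he₂ : N = d₂ + 2*e₂)
    (hGd₁a : (96*k+24)*N < (288*k+90)*d₁) (hGd₁b : (288*k+90)*d₁ < (96*k+36)*N)
    (hGd₂a : (96*k+24)*N < (288*k+90)*d₂) (hGd₂b : (288*k+90)*d₂ < (96*k+36)*N)
    (hj₁ : 1 ≤ j₁) (hj₁e : j₁ ≤ e₁) (hj₂ : 1 ≤ j₂) (hj₂e : j₂ ≤ e₂)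
    (ht : t < 4*k) (hs : s < 4*k) (hAP : 4*k*d₁ + t*e₁ + j₁ = 4*k*d₂ + s*e₂ + j₂)
    (hr1 : r = j₁ ∨ r = 2*e₁ + j₁) (hr2 : r = j₂ ∨ r = 2*e₂ + j₂) : False := by
  obtain ⟨hGe₁a, hGe₁b⟩ := Good_e k N d₁ e₁ he₁ hGd₁a hGd₁b
  obtain ⟨hGe₂a, hGe₂b⟩ := Good_e k N d₂ e₂ he₂ hGd₂a hGd₂b
  obtain ⟨h7e₁, h14e₁⟩ := bound_of_Good k N e₁ hk hN hGe₁a hGe₁b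
  obtain ⟨h7e₂, h14e₂⟩ := bound_of_Good k N e₂ hk hN hGe₂a hGe₂b
  have hkZ : (1:ℤ) ≤ k := by exact_mod_cast hk
  have hNZ : (1:ℤ) ≤ N := by exact_mod_cast hN
  have Ze₁a : ((96*(k:ℤ)+24)*N) < (288*k+90)*e₁ := by exact_mod_cast hGe₁a
  have Ze₁b : ((288*(k:ℤ)+90)*e₁) < (96*k+36)*N := by exact_mod_cast hGe₁b
  have Ze₂a : ((96*(k:ℤ)+24)*N) < (288*k+90)*e₂ := by exact_mod_cast hGe₂a
  have Ze₂b : ((288*(k:ℤ)+90)*e₂) < (96*k+36)*N := by exact_mod_cast hGe₂b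
  have henez : (e₁:ℤ) ≠ e₂ := by
    have h : e₁ ≠ e₂ := by omega
    exact_mod_cast h
  have hAPz : 4*(k:ℤ)*d₁ + (t:ℤ)*e₁ + j₁ = 4*(k:ℤ)*d₂ + (s:ℤ)*e₂ + j₂ := by exact_mod_cast hAP
  have heN₁ : (N:ℤ) = d₁ + 2*e₁ := by exact_mod_cast he₁
  have heN₂ : (N:ℤ) = d₂ + 2*e₂ := by exact_mod_cast he₂
  have htZ : (t:ℤ) < 4*k := by exact_mod_cast ht
  have hsZ : (s:ℤ) < 4*k := by exact_mod_cast hs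
  have ht0 : (0:ℤ) ≤ t := Int.natCast_nonneg t
  have hs0 : (0:ℤ) ≤ s := Int.natCast_nonneg s
  rcases hr1 with h1|h1 <;> rcases hr2 with h2|h2
  · have hj : (j₁:ℤ) = j₂ := by exact_mod_cast h1.symm.trans h2
    have heq : ((t:ℤ)-8*k)*e₁ = ((s:ℤ)-8*k)*e₂ := by
      linear_combination hAPz - hj + (4*(k:ℤ))*heN₁ - (4*(k:ℤ))*heN₂
    have h0 := key_zero' k N e₁ e₂ ((t:ℤ)-8*k) ((s:ℤ)-8*k) hkZ hNZ Ze₁a Ze₁b Ze₂a Ze₂b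
      (by linarith) (by linarith) (by linarith) (by linarith) henez heq
    linarith only [h0, htZ, hkZ, ht0]
  · omega
  · omega
  · have hj : 2*(e₁:ℤ) + j₁ = 2*e₂ + j₂ := by exact_mod_cast h1.symm.trans h2
    have heq : ((t:ℤ)-8*k-2)*e₁ = ((s:ℤ)-8*k-2)*e₂ := by
      linear_combination hAPz - hj + (4*(k:ℤ))*heN₁ - (4*(k:ℤ))*heN₂
    have h0 := key_zero' k N e₁ e₂ ((t:ℤ)-8*k-2) ((s:ℤ)-8*k-2) hkZ hNZ Ze₁a Ze₁b Ze₂a Ze₂b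
      (by linarith) (by linarith) (by linarith) (by linarith) henez heq
    linarith only [h0, htZ, hkZ, ht0]

set_option maxHeartbeats 1000000 in
lemma TU_excl (k N d₁ e₁ d₂ e₂ j l t s r : ℕ) (hk : 1 ≤ k) (hN : 1 ≤ N)
    (hne : d₁ ≠ d₂) (he₁ : N = d₁ + 2*e₁) (he₂ : N = d₂ + 2*e₂)
    (hGd₁a : (96*k+24)*N < (288*k+90)*d₁) (hGd₁b : (288*k+90)*d₁ < (96*k+36)*N)
    (hGd₂a : (96*k+24)*N < (288*k+90)*d₂) (hGd₂b : (288*k+90)*d₂ < (96*k+36)*N)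
    (hj₁ : 1 ≤ j) (hj₁e : j ≤ e₁) (hl₁ : 1 ≤ l) (hl₁e : l ≤ e₂)
    (ht : t < 4*k) (hs : s < 4*k)
    (hAP : 4*k*d₁ + t*e₁ + j = 4*k*d₂ + 4*k*e₂ + s*e₂ + l)
    (hr1 : r = j ∨ r = 2*e₁ + j) (hr2 : r = e₂ + l ∨ r = 3*e₂ + l) : False := by
  obtain ⟨hGe₁a, hGe₁b⟩ := Good_e k N d₁ e₁ he₁ hGd₁a hGd₁b
  obtain ⟨hGe₂a, hGe₂b⟩ := Good_e k N d₂ e₂ he₂ hGd₂a hGd₂b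
  obtain ⟨h7e₁, h14e₁⟩ := bound_of_Good k N e₁ hk hN hGe₁a hGe₁b
  obtain ⟨h7e₂, h14e₂⟩ := bound_of_Good k N e₂ hk hN hGe₂a hGe₂b
  have hkZ : (1:ℤ) ≤ k := by exact_mod_cast hk
  have hNZ : (1:ℤ) ≤ N := by exact_mod_cast hN
  have Ze₁a : ((96*(k:ℤ)+24)*N) < (288*k+90)*e₁ := by exact_mod_cast hGe₁a
  have Ze₁b : ((288*(k:ℤ)+90)*e₁) < (96*k+36)*N := by exact_mod_cast hGe₁b
  have Ze₂a : ((96*(k:ℤ)+24)*N) < (288*k+90)*e₂ := by exact_mod_cast hGe₂a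
  have Ze₂b : ((288*(k:ℤ)+90)*e₂) < (96*k+36)*N := by exact_mod_cast hGe₂b
  have henez : (e₁:ℤ) ≠ e₂ := by
    have h : e₁ ≠ e₂ := by omega
    exact_mod_cast h
  have hAPz : 4*(k:ℤ)*d₁ + (t:ℤ)*e₁ + j = 4*(k:ℤ)*d₂ + 4*(k:ℤ)*e₂ + (s:ℤ)*e₂ + l := by
    exact_mod_cast hAP
  have heN₁ : (N:ℤ) = d₁ + 2*e₁ := by exact_mod_cast he₁
  have heN₂ : (N:ℤ) = d₂ + 2*e₂ := by exact_mod_cast he₂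
  have htZ : (t:ℤ) < 4*k := by exact_mod_cast ht
  have hsZ : (s:ℤ) < 4*k := by exact_mod_cast hs
  have ht0 : (0:ℤ) ≤ t := Int.natCast_nonneg t
  have hs0 : (0:ℤ) ≤ s := Int.natCast_nonneg s
  rcases hr1 with h1|h1 <;> rcases hr2 with h2|h2
  · have hj : (j:ℤ) = e₂ + l := by exact_mod_cast h1.symm.trans h2
    have heq : ((t:ℤ)-8*k)*e₁ = ((s:ℤ)-4*k-1)*e₂ := by
      linear_combination hAPz - hj + (4*(k:ℤ))*heN₁ - (4*(k:ℤ))*heN₂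
    have h0 := key_zero' k N e₁ e₂ ((t:ℤ)-8*k) ((s:ℤ)-4*k-1) hkZ hNZ Ze₁a Ze₁b Ze₂a Ze₂b
      (by linarith) (by linarith) (by linarith) (by linarith) henez heq
    linarith only [h0, htZ, hkZ, ht0]
  · omega
  · have hj : 2*(e₁:ℤ) + j = e₂ + l := by exact_mod_cast h1.symm.trans h2
    have heq : ((t:ℤ)-8*k-2)*e₁ = ((s:ℤ)-4*k-1)*e₂ := by
      linear_combination hAPz - hj + (4*(k:ℤ))*heN₁ - (4*(k:ℤ))*heN₂
    have h0 := key_zero' k N e₁ e₂ ((t:ℤ)-8*k-2) ((s:ℤ)-4*k-1) hkZ hNZ Ze₁a Ze₁b Ze₂a Ze₂b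
      (by linarith) (by linarith) (by linarith) (by linarith) henez heq
    linarith only [h0, htZ, hkZ, ht0]
  · have hj : 2*(e₁:ℤ) + j = 3*e₂ + l := by exact_mod_cast h1.symm.trans h2
    have heq : ((t:ℤ)-8*k-2)*e₁ = ((s:ℤ)-4*k-3)*e₂ := by
      linear_combination hAPz - hj + (4*(k:ℤ))*heN₁ - (4*(k:ℤ))*heN₂
    have h0 := key_zero' k N e₁ e₂ ((t:ℤ)-8*k-2) ((s:ℤ)-4*k-3) hkZ hNZ Ze₁a Ze₁b Ze₂a Ze₂b
      (by linarith) (by linarith) (by linarith) (by linarith) henez heq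
    linarith only [h0, htZ, hkZ, ht0]

set_option maxHeartbeats 1000000 in
lemma UU_excl (k N d₁ e₁ d₂ e₂ l₁ l₂ t s r : ℕ) (hk : 1 ≤ k) (hN : 1 ≤ N)
    (hne : d₁ ≠ d₂) (he₁ : N = d₁ + 2*e₁) (he₂ : N = d₂ + 2*e₂)
    (hGd₁a : (96*k+24)*N < (288*k+90)*d₁) (hGd₁b : (288*k+90)*d₁ < (96*k+36)*N)
    (hGd₂a : (96*k+24)*N < (288*k+90)*d₂) (hGd₂b : (288*k+90)*d₂ < (96*k+36)*N)
    (hl₁1 : 1 ≤ l₁) (hl₁e : l₁ ≤ e₁) (hl₂1 : 1 ≤ l₂) (hl₂e : l₂ ≤ e₂)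
    (ht : t < 4*k) (hs : s < 4*k)
    (hAP : 4*k*d₁ + 4*k*e₁ + t*e₁ + l₁ = 4*k*d₂ + 4*k*e₂ + s*e₂ + l₂)
    (hr1 : r = e₁ + l₁ ∨ r = 3*e₁ + l₁) (hr2 : r = e₂ + l₂ ∨ r = 3*e₂ + l₂) : False := by
  obtain ⟨hGe₁a, hGe₁b⟩ := Good_e k N d₁ e₁ he₁ hGd₁a hGd₁b
  obtain ⟨hGe₂a, hGe₂b⟩ := Good_e k N d₂ e₂ he₂ hGd₂a hGd₂b
  obtain ⟨h7e₁, h14e₁⟩ := bound_of_Good k N e₁ hk hN hGe₁a hGe₁b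
  obtain ⟨h7e₂, h14e₂⟩ := bound_of_Good k N e₂ hk hN hGe₂a hGe₂b
  have hkZ : (1:ℤ) ≤ k := by exact_mod_cast hk
  have hNZ : (1:ℤ) ≤ N := by exact_mod_cast hN
  have Ze₁a : ((96*(k:ℤ)+24)*N) < (288*k+90)*e₁ := by exact_mod_cast hGe₁a
  have Ze₁b : ((288*(k:ℤ)+90)*e₁) < (96*k+36)*N := by exact_mod_cast hGe₁b
  have Ze₂a : ((96*(k:ℤ)+24)*N) < (288*k+90)*e₂ := by exact_mod_cast hGe₂a
  have Ze₂b : ((288*(k:ℤ)+90)*e₂) < (96*k+36)*N := by exact_mod_cast hGe₂b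
  have henez : (e₁:ℤ) ≠ e₂ := by
    have h : e₁ ≠ e₂ := by omega
    exact_mod_cast h
  have hAPz : 4*(k:ℤ)*d₁ + 4*(k:ℤ)*e₁ + (t:ℤ)*e₁ + l₁
      = 4*(k:ℤ)*d₂ + 4*(k:ℤ)*e₂ + (s:ℤ)*e₂ + l₂ := by exact_mod_cast hAP
  have heN₁ : (N:ℤ) = d₁ + 2*e₁ := by exact_mod_cast he₁
  have heN₂ : (N:ℤ) = d₂ + 2*e₂ := by exact_mod_cast he₂
  have htZ : (t:ℤ) < 4*k := by exact_mod_cast ht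
  have hsZ : (s:ℤ) < 4*k := by exact_mod_cast hs
  have ht0 : (0:ℤ) ≤ t := Int.natCast_nonneg t
  have hs0 : (0:ℤ) ≤ s := Int.natCast_nonneg s
  rcases hr1 with h1|h1 <;> rcases hr2 with h2|h2
  · have hj : (e₁:ℤ) + l₁ = e₂ + l₂ := by exact_mod_cast h1.symm.trans h2
    have heq : ((t:ℤ)-4*k-1)*e₁ = ((s:ℤ)-4*k-1)*e₂ := by
      linear_combination hAPz - hj + (4*(k:ℤ))*heN₁ - (4*(k:ℤ))*heN₂
    have h0 := key_zero' k N e₁ e₂ ((t:ℤ)-4*k-1) ((s:ℤ)-4*k-1) hkZ hNZ Ze₁a Ze₁b Ze₂a Ze₂b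
      (by linarith) (by linarith) (by linarith) (by linarith) henez heq
    linarith only [h0, htZ, hkZ, ht0]
  · omega
  · omega
  · have hj : 3*(e₁:ℤ) + l₁ = 3*e₂ + l₂ := by exact_mod_cast h1.symm.trans h2
    have heq : ((t:ℤ)-4*k-3)*e₁ = ((s:ℤ)-4*k-3)*e₂ := by
      linear_combination hAPz - hj + (4*(k:ℤ))*heN₁ - (4*(k:ℤ))*heN₂
    have h0 := key_zero' k N e₁ e₂ ((t:ℤ)-4*k-3) ((s:ℤ)-4*k-3) hkZ hNZ Ze₁a Ze₁b Ze₂a Ze₂b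
      (by linarith) (by linarith) (by linarith) (by linarith) henez heq
    linarith only [h0, htZ, hkZ, ht0]

set_option maxHeartbeats 1000000 in
lemma pair_SU (k N d₁ e₁ d₂ e₂ i l : ℕ) (hk : 1 ≤ k) (hN : 1 ≤ N)
    (hne : d₁ ≠ d₂) (he₁ : N = d₁ + 2*e₁) (he₂ : N = d₂ + 2*e₂)
    (hGd₁a : (96*k+24)*N < (288*k+90)*d₁) (hGd₁b : (288*k+90)*d₁ < (96*k+36)*N)
    (hGd₂a : (96*k+24)*N < (288*k+90)*d₂) (hGd₂b : (288*k+90)*d₂ < (96*k+36)*N)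
    (hi1 : 1 ≤ i) (hid : i ≤ d₁) (hl1 : 1 ≤ l) (hle : l ≤ e₂) :
    (Sbig k N d₁ e₁ i ∩ Ubig k N d₂ e₂ l).card ≤ 1 := by
  obtain ⟨hGe₁a, hGe₁b⟩ := Good_e k N d₁ e₁ he₁ hGd₁a hGd₁b
  obtain ⟨hGe₂a, hGe₂b⟩ := Good_e k N d₂ e₂ he₂ hGd₂a hGd₂b
  obtain ⟨h7d₁, h14d₁⟩ := bound_of_Good k N d₁ hk hN hGd₁a hGd₁b
  obtain ⟨h7d₂, h14d₂⟩ := bound_of_Good k N d₂ hk hN hGd₂a hGd₂b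
  obtain ⟨h7e₁, h14e₁⟩ := bound_of_Good k N e₁ hk hN hGe₁a hGe₁b
  obtain ⟨h7e₂, h14e₂⟩ := bound_of_Good k N e₂ hk hN hGe₂a hGe₂b
  have hwin : 4*k*d₁ ≤ 4*k*(d₂+e₂) := Nat.mul_le_mul_left _ (by omega)
  rw [Finset.card_le_one]
  intro x hx y hy
  rw [Finset.mem_inter] at hx hy
  have hx1 := Sbig_shape hi1 hid he₁ hx.1
  have hx2 := Ubig_shape hl1 hle he₂ hx.2
  have hy1 := Sbig_shape hi1 hid he₁ hy.1
  have hy2 := Ubig_shape hl1 hle he₂ hy.2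
  rcases hx1 with ⟨t1, ht1, hxt, hxb1, hxb2⟩ | ⟨rx, hxr, hrxp, hrx⟩
  · rcases hx2 with ⟨s1, hs1, hxs, hxlo, _⟩ | ⟨rx', hxr', hrxp', _⟩
    · exact absurd rfl (by linarith only [hxb1, hxlo, hwin] : x ≠ x)
    · exact absurd rfl (by linarith only [hxb2, hxr', hrxp'] : x ≠ x)
  · rcases hx2 with ⟨s1, hs1, hxs, _, hxb2'⟩ | ⟨rx', hxr', hrxp', hrx'⟩
    · exact absurd rfl (by linarith only [hxr, hrxp, hxb2'] : x ≠ x)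
    · have hrr : rx = rx' := Nat.add_left_cancel (hxr.symm.trans hxr')
      subst hrr
      rcases hy1 with ⟨t2, ht2, hyt, hyb1, hyb2⟩ | ⟨ry, hyr, hryp, hry⟩
      · rcases hy2 with ⟨s2, hs2, hys, hylo, _⟩ | ⟨ry', hyr', hryp', _⟩
        · exact absurd rfl (by linarith only [hyb1, hylo, hwin] : y ≠ y)
        · exact absurd rfl (by linarith only [hyb2, hyr', hryp'] : y ≠ y)
      · rcases hy2 with ⟨s2, hs2, hys, _, hyb2'⟩ | ⟨ry', hyr', hryp', hry'⟩
        · exact absurd rfl (by linarith only [hyr, hryp, hyb2'] : y ≠ y)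
        · have hrr2 : ry = ry' := Nat.add_left_cancel (hyr.symm.trans hyr')
          subst hrr2
          have hxy : rx = ry := by
            rcases hrx with a|a <;> rcases hrx' with b|b <;> rcases hry with c|c <;>
              rcases hry' with d'|d' <;> omega
          rw [hxr, hyr, hxy]

set_option maxHeartbeats 1000000 in
lemma pair_TT (k N d₁ e₁ d₂ e₂ j₁ j₂ : ℕ) (hk : 1 ≤ k) (hN : 1 ≤ N)
    (hne : d₁ ≠ d₂) (he₁ : N = d₁ + 2*e₁) (he₂ : N = d₂ + 2*e₂)
    (hGd₁a : (96*k+24)*N < (288*k+90)*d₁) (hGd₁b : (288*k+90)*d₁ < (96*k+36)*N)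
    (hGd₂a : (96*k+24)*N < (288*k+90)*d₂) (hGd₂b : (288*k+90)*d₂ < (96*k+36)*N)
    (hj₁ : 1 ≤ j₁) (hj₁e : j₁ ≤ e₁) (hj₂ : 1 ≤ j₂) (hj₂e : j₂ ≤ e₂) :
    (Tbig k N d₁ e₁ j₁ ∩ Tbig k N d₂ e₂ j₂).card ≤ 1 := by
  obtain ⟨hGe₁a, hGe₁b⟩ := Good_e k N d₁ e₁ he₁ hGd₁a hGd₁b
  obtain ⟨hGe₂a, hGe₂b⟩ := Good_e k N d₂ e₂ he₂ hGd₂a hGd₂b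
  obtain ⟨h7e₁, h14e₁⟩ := bound_of_Good k N e₁ hk hN hGe₁a hGe₁b
  obtain ⟨h7e₂, h14e₂⟩ := bound_of_Good k N e₂ hk hN hGe₂a hGe₂b
  have hkZ : (1:ℤ) ≤ k := by exact_mod_cast hk
  have hNZ : (1:ℤ) ≤ N := by exact_mod_cast hN
  have Ze₁a : ((96*(k:ℤ)+24)*N) < (288*k+90)*e₁ := by exact_mod_cast hGe₁a
  have Ze₁b : ((288*(k:ℤ)+90)*e₁) < (96*k+36)*N := by exact_mod_cast hGe₁b
  have Ze₂a : ((96*(k:ℤ)+24)*N) < (288*k+90)*e₂ := by exact_mod_cast hGe₂a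
  have Ze₂b : ((288*(k:ℤ)+90)*e₂) < (96*k+36)*N := by exact_mod_cast hGe₂b
  have henez : (e₁:ℤ) ≠ e₂ := by
    have h : e₁ ≠ e₂ := by omega
    exact_mod_cast h
  rw [Finset.card_le_one]
  intro x hx y hy
  rw [Finset.mem_inter] at hx hy
  have hx1 := Tbig_shape hj₁ hj₁e he₁ hx.1
  have hx2 := Tbig_shape hj₂ hj₂e he₂ hx.2
  have hy1 := Tbig_shape hj₁ hj₁e he₁ hy.1
  have hy2 := Tbig_shape hj₂ hj₂e he₂ hy.2
  rcases hx1 with ⟨t1, ht1, hxt, _, _, hxb2⟩ | ⟨rx, hxr, hrxp, hrx⟩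
  · rcases hx2 with ⟨s1, hs1, hxs, _, _, _⟩ | ⟨rx', hxr', hrxp', _⟩
    · rcases hy1 with ⟨t2, ht2, hyt, _, _, hyb2⟩ | ⟨ry, hyr, hryp, hry⟩
      · rcases hy2 with ⟨s2, hs2, hys, _, _, _⟩ | ⟨ry', hyr', hryp', _⟩
        · have hxtz : (x:ℤ) = (t1:ℤ)*e₁ + (4*(k:ℤ)*d₁ + j₁) := by push_cast [hxt]; ring
          have hytz : (y:ℤ) = (t2:ℤ)*e₁ + (4*(k:ℤ)*d₁ + j₁) := by push_cast [hyt]; ring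
          have hxsz : (x:ℤ) = (s1:ℤ)*e₂ + (4*(k:ℤ)*d₂ + j₂) := by push_cast [hxs]; ring
          have hysz : (y:ℤ) = (s2:ℤ)*e₂ + (4*(k:ℤ)*d₂ + j₂) := by push_cast [hys]; ring
          have ht1z : (t1:ℤ) < 4*k := by exact_mod_cast ht1
          have ht2z : (t2:ℤ) < 4*k := by exact_mod_cast ht2
          have hs1z : (s1:ℤ) < 4*k := by exact_mod_cast hs1
          have hs2z : (s2:ℤ) < 4*k := by exact_mod_cast hs2
          have := APAP k N e₁ e₂ (4*(k:ℤ)*d₁ + j₁) (4*(k:ℤ)*d₂ + j₂) x y t1 t2 s1 s2 hkZ hNZ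
            Ze₁a Ze₁b Ze₂a Ze₂b
            (Int.natCast_nonneg t1) (by linarith) (Int.natCast_nonneg t2) (by linarith)
            (Int.natCast_nonneg s1) (by linarith) (Int.natCast_nonneg s2) (by linarith)
            hxtz hytz hxsz hysz (Or.inl henez)
          exact_mod_cast this
        · exact absurd rfl (by linarith only [hyb2, hyr', hryp'] : y ≠ y)
      · rcases hy2 with ⟨s2, hs2, hys, _, _, hyb2'⟩ | ⟨ry', hyr', hryp', hry'⟩
        · exact absurd rfl (by linarith only [hyr, hryp, hyb2'] : y ≠ y)
        · exfalso
          have hrr : ry = ry' := Nat.add_left_cancel (hyr.symm.trans hyr')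
          subst hrr
          exact TT_excl k N d₁ e₁ d₂ e₂ j₁ j₂ t1 s1 ry hk hN hne he₁ he₂
            hGd₁a hGd₁b hGd₂a hGd₂b hj₁ hj₁e hj₂ hj₂e ht1 hs1 (hxt.symm.trans hxs) hry hry'
    · exact absurd rfl (by linarith only [hxb2, hxr', hrxp'] : x ≠ x)
  · rcases hx2 with ⟨s1, hs1, hxs, _, _, hxb2'⟩ | ⟨rx', hxr', hrxp', hrx'⟩
    · exact absurd rfl (by linarith only [hxr, hrxp, hxb2'] : x ≠ x)
    · have hrr : rx = rx' := Nat.add_left_cancel (hxr.symm.trans hxr')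
      subst hrr
      rcases hy1 with ⟨t2, ht2, hyt, _, _, hyb2⟩ | ⟨ry, hyr, hryp, hry⟩
      · rcases hy2 with ⟨s2, hs2, hys, _, _, _⟩ | ⟨ry', hyr', hryp', hry'⟩
        · exfalso
          exact TT_excl k N d₁ e₁ d₂ e₂ j₁ j₂ t2 s2 rx hk hN hne he₁ he₂
            hGd₁a hGd₁b hGd₂a hGd₂b hj₁ hj₁e hj₂ hj₂e ht2 hs2 (hyt.symm.trans hys) hrx hrx'
        · exact absurd rfl (by linarith only [hyb2, hyr', hryp'] : y ≠ y)
      · rcases hy2 with ⟨s2, hs2, hys, _, _, hyb2'⟩ | ⟨ry', hyr', hryp', hry'⟩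
        · exact absurd rfl (by linarith only [hyr, hryp, hyb2'] : y ≠ y)
        · have hrr2 : ry = ry' := Nat.add_left_cancel (hyr.symm.trans hyr')
          subst hrr2
          have hxy : rx = ry := by
            rcases hrx with a|a <;> rcases hrx' with b|b <;> rcases hry with c|c <;>
              rcases hry' with d'|d' <;> omega
          rw [hxr, hyr, hxy]

set_option maxHeartbeats 1000000 in
lemma pair_TU (k N d₁ e₁ d₂ e₂ j l : ℕ) (hk : 1 ≤ k) (hN : 1 ≤ N)
    (hne : d₁ ≠ d₂) (he₁ : N = d₁ + 2*e₁) (he₂ : N = d₂ + 2*e₂)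
    (hGd₁a : (96*k+24)*N < (288*k+90)*d₁) (hGd₁b : (288*k+90)*d₁ < (96*k+36)*N)
    (hGd₂a : (96*k+24)*N < (288*k+90)*d₂) (hGd₂b : (288*k+90)*d₂ < (96*k+36)*N)
    (hj₁ : 1 ≤ j) (hj₁e : j ≤ e₁) (hl₁ : 1 ≤ l) (hl₁e : l ≤ e₂) :
    (Tbig k N d₁ e₁ j ∩ Ubig k N d₂ e₂ l).card ≤ 1 := by
  obtain ⟨hGe₁a, hGe₁b⟩ := Good_e k N d₁ e₁ he₁ hGd₁a hGd₁b
  obtain ⟨hGe₂a, hGe₂b⟩ := Good_e k N d₂ e₂ he₂ hGd₂a hGd₂b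
  obtain ⟨h7e₁, h14e₁⟩ := bound_of_Good k N e₁ hk hN hGe₁a hGe₁b
  obtain ⟨h7e₂, h14e₂⟩ := bound_of_Good k N e₂ hk hN hGe₂a hGe₂b
  have hkZ : (1:ℤ) ≤ k := by exact_mod_cast hk
  have hNZ : (1:ℤ) ≤ N := by exact_mod_cast hN
  have Ze₁a : ((96*(k:ℤ)+24)*N) < (288*k+90)*e₁ := by exact_mod_cast hGe₁a
  have Ze₁b : ((288*(k:ℤ)+90)*e₁) < (96*k+36)*N := by exact_mod_cast hGe₁b
  have Ze₂a : ((96*(k:ℤ)+24)*N) < (288*k+90)*e₂ := by exact_mod_cast hGe₂a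
  have Ze₂b : ((288*(k:ℤ)+90)*e₂) < (96*k+36)*N := by exact_mod_cast hGe₂b
  have henez : (e₁:ℤ) ≠ e₂ := by
    have h : e₁ ≠ e₂ := by omega
    exact_mod_cast h
  rw [Finset.card_le_one]
  intro x hx y hy
  rw [Finset.mem_inter] at hx hy
  have hx1 := Tbig_shape hj₁ hj₁e he₁ hx.1
  have hx2 := Ubig_shape hl₁ hl₁e he₂ hx.2
  have hy1 := Tbig_shape hj₁ hj₁e he₁ hy.1
  have hy2 := Ubig_shape hl₁ hl₁e he₂ hy.2
  rcases hx1 with ⟨t1, ht1, hxt, _, _, hxb2⟩ | ⟨rx, hxr, hrxp, hrx⟩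
  · rcases hx2 with ⟨s1, hs1, hxs, _, _⟩ | ⟨rx', hxr', hrxp', _⟩
    · rcases hy1 with ⟨t2, ht2, hyt, _, _, hyb2⟩ | ⟨ry, hyr, hryp, hry⟩
      · rcases hy2 with ⟨s2, hs2, hys, _, _⟩ | ⟨ry', hyr', hryp', _⟩
        · have hxtz : (x:ℤ) = (t1:ℤ)*e₁ + (4*(k:ℤ)*d₁ + j) := by push_cast [hxt]; ring
          have hytz : (y:ℤ) = (t2:ℤ)*e₁ + (4*(k:ℤ)*d₁ + j) := by push_cast [hyt]; ring
          have hxsz : (x:ℤ) = (s1:ℤ)*e₂ + (4*(k:ℤ)*d₂ + 4*(k:ℤ)*e₂ + l) := by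
            push_cast [hxs]; ring
          have hysz : (y:ℤ) = (s2:ℤ)*e₂ + (4*(k:ℤ)*d₂ + 4*(k:ℤ)*e₂ + l) := by
            push_cast [hys]; ring
          have ht1z : (t1:ℤ) < 4*k := by exact_mod_cast ht1
          have ht2z : (t2:ℤ) < 4*k := by exact_mod_cast ht2
          have hs1z : (s1:ℤ) < 4*k := by exact_mod_cast hs1
          have hs2z : (s2:ℤ) < 4*k := by exact_mod_cast hs2
          have := APAP k N e₁ e₂ (4*(k:ℤ)*d₁ + j) (4*(k:ℤ)*d₂ + 4*(k:ℤ)*e₂ + l) x y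
            t1 t2 s1 s2 hkZ hNZ Ze₁a Ze₁b Ze₂a Ze₂b
            (Int.natCast_nonneg t1) (by linarith) (Int.natCast_nonneg t2) (by linarith)
            (Int.natCast_nonneg s1) (by linarith) (Int.natCast_nonneg s2) (by linarith)
            hxtz hytz hxsz hysz (Or.inl henez)
          exact_mod_cast this
        · exact absurd rfl (by linarith only [hyb2, hyr', hryp'] : y ≠ y)
      · rcases hy2 with ⟨s2, hs2, hys, _, hyb2'⟩ | ⟨ry', hyr', hryp', hry'⟩
        · exact absurd rfl (by linarith only [hyr, hryp, hyb2'] : y ≠ y)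
        · exfalso
          have hrr : ry = ry' := Nat.add_left_cancel (hyr.symm.trans hyr')
          subst hrr
          exact TU_excl k N d₁ e₁ d₂ e₂ j l t1 s1 ry hk hN hne he₁ he₂
            hGd₁a hGd₁b hGd₂a hGd₂b hj₁ hj₁e hl₁ hl₁e ht1 hs1 (hxt.symm.trans hxs) hry hry'
    · exact absurd rfl (by linarith only [hxb2, hxr', hrxp'] : x ≠ x)
  · rcases hx2 with ⟨s1, hs1, hxs, _, hxb2'⟩ | ⟨rx', hxr', hrxp', hrx'⟩
    · exact absurd rfl (by linarith only [hxr, hrxp, hxb2'] : x ≠ x)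
    · have hrr : rx = rx' := Nat.add_left_cancel (hxr.symm.trans hxr')
      subst hrr
      rcases hy1 with ⟨t2, ht2, hyt, _, _, hyb2⟩ | ⟨ry, hyr, hryp, hry⟩
      · rcases hy2 with ⟨s2, hs2, hys, _, _⟩ | ⟨ry', hyr', hryp', hry'⟩
        · exfalso
          exact TU_excl k N d₁ e₁ d₂ e₂ j l t2 s2 rx hk hN hne he₁ he₂
            hGd₁a hGd₁b hGd₂a hGd₂b hj₁ hj₁e hl₁ hl₁e ht2 hs2 (hyt.symm.trans hys) hrx hrx'
        · exact absurd rfl (by linarith only [hyb2, hyr', hryp'] : y ≠ y)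
      · rcases hy2 with ⟨s2, hs2, hys, _, hyb2'⟩ | ⟨ry', hyr', hryp', hry'⟩
        · exact absurd rfl (by linarith only [hyr, hryp, hyb2'] : y ≠ y)
        · have hrr2 : ry = ry' := Nat.add_left_cancel (hyr.symm.trans hyr')
          subst hrr2
          have hxy : rx = ry := by
            rcases hrx with a|a <;> rcases hrx' with b|b <;> rcases hry with c|c <;>
              rcases hry' with d'|d' <;> omega
          rw [hxr, hyr, hxy]

set_option maxHeartbeats 1000000 in
lemma pair_UU (k N d₁ e₁ d₂ e₂ l₁ l₂ : ℕ) (hk : 1 ≤ k) (hN : 1 ≤ N)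
    (hne : d₁ ≠ d₂) (he₁ : N = d₁ + 2*e₁) (he₂ : N = d₂ + 2*e₂)
    (hGd₁a : (96*k+24)*N < (288*k+90)*d₁) (hGd₁b : (288*k+90)*d₁ < (96*k+36)*N)
    (hGd₂a : (96*k+24)*N < (288*k+90)*d₂) (hGd₂b : (288*k+90)*d₂ < (96*k+36)*N)
    (hl₁1 : 1 ≤ l₁) (hl₁e : l₁ ≤ e₁) (hl₂1 : 1 ≤ l₂) (hl₂e : l₂ ≤ e₂) :
    (Ubig k N d₁ e₁ l₁ ∩ Ubig k N d₂ e₂ l₂).card ≤ 1 := by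
  obtain ⟨hGe₁a, hGe₁b⟩ := Good_e k N d₁ e₁ he₁ hGd₁a hGd₁b
  obtain ⟨hGe₂a, hGe₂b⟩ := Good_e k N d₂ e₂ he₂ hGd₂a hGd₂b
  obtain ⟨h7e₁, h14e₁⟩ := bound_of_Good k N e₁ hk hN hGe₁a hGe₁b
  obtain ⟨h7e₂, h14e₂⟩ := bound_of_Good k N e₂ hk hN hGe₂a hGe₂b
  have hkZ : (1:ℤ) ≤ k := by exact_mod_cast hk
  have hNZ : (1:ℤ) ≤ N := by exact_mod_cast hN
  have Ze₁a : ((96*(k:ℤ)+24)*N) < (288*k+90)*e₁ := by exact_mod_cast hGe₁a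
  have Ze₁b : ((288*(k:ℤ)+90)*e₁) < (96*k+36)*N := by exact_mod_cast hGe₁b
  have Ze₂a : ((96*(k:ℤ)+24)*N) < (288*k+90)*e₂ := by exact_mod_cast hGe₂a
  have Ze₂b : ((288*(k:ℤ)+90)*e₂) < (96*k+36)*N := by exact_mod_cast hGe₂b
  have henez : (e₁:ℤ) ≠ e₂ := by
    have h : e₁ ≠ e₂ := by omega
    exact_mod_cast h
  rw [Finset.card_le_one]
  intro x hx y hy
  rw [Finset.mem_inter] at hx hy
  have hx1 := Ubig_shape hl₁1 hl₁e he₁ hx.1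
  have hx2 := Ubig_shape hl₂1 hl₂e he₂ hx.2
  have hy1 := Ubig_shape hl₁1 hl₁e he₁ hy.1
  have hy2 := Ubig_shape hl₂1 hl₂e he₂ hy.2
  rcases hx1 with ⟨t1, ht1, hxt, _, hxb2⟩ | ⟨rx, hxr, hrxp, hrx⟩
  · rcases hx2 with ⟨s1, hs1, hxs, _, _⟩ | ⟨rx', hxr', hrxp', _⟩
    · rcases hy1 with ⟨t2, ht2, hyt, _, hyb2⟩ | ⟨ry, hyr, hryp, hry⟩
      · rcases hy2 with ⟨s2, hs2, hys, _, _⟩ | ⟨ry', hyr', hryp', _⟩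
        · have hxtz : (x:ℤ) = (t1:ℤ)*e₁ + (4*(k:ℤ)*d₁ + 4*(k:ℤ)*e₁ + l₁) := by
            push_cast [hxt]; ring
          have hytz : (y:ℤ) = (t2:ℤ)*e₁ + (4*(k:ℤ)*d₁ + 4*(k:ℤ)*e₁ + l₁) := by
            push_cast [hyt]; ring
          have hxsz : (x:ℤ) = (s1:ℤ)*e₂ + (4*(k:ℤ)*d₂ + 4*(k:ℤ)*e₂ + l₂) := by
            push_cast [hxs]; ring
          have hysz : (y:ℤ) = (s2:ℤ)*e₂ + (4*(k:ℤ)*d₂ + 4*(k:ℤ)*e₂ + l₂) := by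
            push_cast [hys]; ring
          have ht1z : (t1:ℤ) < 4*k := by exact_mod_cast ht1
          have ht2z : (t2:ℤ) < 4*k := by exact_mod_cast ht2
          have hs1z : (s1:ℤ) < 4*k := by exact_mod_cast hs1
          have hs2z : (s2:ℤ) < 4*k := by exact_mod_cast hs2
          have := APAP k N e₁ e₂ (4*(k:ℤ)*d₁ + 4*(k:ℤ)*e₁ + l₁)
            (4*(k:ℤ)*d₂ + 4*(k:ℤ)*e₂ + l₂) x y t1 t2 s1 s2 hkZ hNZ Ze₁a Ze₁b Ze₂a Ze₂b
            (Int.natCast_nonneg t1) (by linarith) (Int.natCast_nonneg t2) (by linarith)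
            (Int.natCast_nonneg s1) (by linarith) (Int.natCast_nonneg s2) (by linarith)
            hxtz hytz hxsz hysz (Or.inl henez)
          exact_mod_cast this
        · exact absurd rfl (by linarith only [hyb2, hyr', hryp'] : y ≠ y)
      · rcases hy2 with ⟨s2, hs2, hys, _, hyb2'⟩ | ⟨ry', hyr', hryp', hry'⟩
        · exact absurd rfl (by linarith only [hyr, hryp, hyb2'] : y ≠ y)
        · exfalso
          have hrr : ry = ry' := Nat.add_left_cancel (hyr.symm.trans hyr')
          subst hrr
          exact UU_excl k N d₁ e₁ d₂ e₂ l₁ l₂ t1 s1 ry hk hN hne he₁ he₂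
            hGd₁a hGd₁b hGd₂a hGd₂b hl₁1 hl₁e hl₂1 hl₂e ht1 hs1 (hxt.symm.trans hxs) hry hry'
    · exact absurd rfl (by linarith only [hxb2, hxr', hrxp'] : x ≠ x)
  · rcases hx2 with ⟨s1, hs1, hxs, _, hxb2'⟩ | ⟨rx', hxr', hrxp', hrx'⟩
    · exact absurd rfl (by linarith only [hxr, hrxp, hxb2'] : x ≠ x)
    · have hrr : rx = rx' := Nat.add_left_cancel (hxr.symm.trans hxr')
      subst hrr
      rcases hy1 with ⟨t2, ht2, hyt, _, hyb2⟩ | ⟨ry, hyr, hryp, hry⟩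
      · rcases hy2 with ⟨s2, hs2, hys, _, _⟩ | ⟨ry', hyr', hryp', hry'⟩
        · exfalso
          exact UU_excl k N d₁ e₁ d₂ e₂ l₁ l₂ t2 s2 rx hk hN hne he₁ he₂
            hGd₁a hGd₁b hGd₂a hGd₂b hl₁1 hl₁e hl₂1 hl₂e ht2 hs2 (hyt.symm.trans hys) hrx hrx'
        · exact absurd rfl (by linarith only [hyb2, hyr', hryp'] : y ≠ y)
      · rcases hy2 with ⟨s2, hs2, hys, _, hyb2'⟩ | ⟨ry', hyr', hryp', hry'⟩
        · exact absurd rfl (by linarith only [hyr, hryp, hyb2'] : y ≠ y)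
        · have hrr2 : ry = ry' := Nat.add_left_cancel (hyr.symm.trans hyr')
          subst hrr2
          have hxy : rx = ry := by
            rcases hrx with a|a <;> rcases hrx' with b|b <;> rcases hry with c|c <;>
              rcases hry' with d'|d' <;> omega
          rw [hxr, hyr, hxy]

/-- Lemma: intersections of the difference sets `S, T, U` for distinct parameters
`d ≠ d'` (of the same parity as `N`, both in `(N/3 - N/(48k+15), N/3 + N/(48k+15))`),
with `e = (N-d)/2`, `e' = (N-d')/2`, have at most one element, except that
`S_{d,i} ∩ S_{d',i} = {i, (4k+2)N-i+1}`. -/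
theorem stmt_12 (k N : ℕ) (hk : 0 < k) (hN : 0 < N) (d d' : ℕ) (hne : d ≠ d')
    (hpar : d % 2 = N % 2) (hpar' : d' % 2 = N % 2)
    (hd₁ : (N : ℝ) / 3 - (N : ℝ) / (48 * (k : ℝ) + 15) < (d : ℝ))
    (hd₂ : (d : ℝ) < (N : ℝ) / 3 + (N : ℝ) / (48 * (k : ℝ) + 15))
    (hd'₁ : (N : ℝ) / 3 - (N : ℝ) / (48 * (k : ℝ) + 15) < (d' : ℝ))
    (hd'₂ : (d' : ℝ) < (N : ℝ) / 3 + (N : ℝ) / (48 * (k : ℝ) + 15))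
    (e e' : ℕ) (he : N = d + 2 * e) (he' : N = d' + 2 * e') :
    (∀ i i', 1 ≤ i → i ≤ d → 1 ≤ i' → i' ≤ d' → i ≠ i' →
      (Sbig k N d e i ∩ Sbig k N d' e' i').card ≤ 1) ∧
    (∀ i, 1 ≤ i → i ≤ d → i ≤ d' →
      Sbig k N d e i ∩ Sbig k N d' e' i = {i, (4 * k + 2) * N - i + 1}) ∧
    (∀ i j', 1 ≤ i → i ≤ d → 1 ≤ j' → j' ≤ e' →
      (Sbig k N d e i ∩ Tbig k N d' e' j').card ≤ 1) ∧
    (∀ i l', 1 ≤ i → i ≤ d → 1 ≤ l' → l' ≤ e' →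
      (Sbig k N d e i ∩ Ubig k N d' e' l').card ≤ 1) ∧
    (∀ j i', 1 ≤ j → j ≤ e → 1 ≤ i' → i' ≤ d' →
      (Tbig k N d e j ∩ Sbig k N d' e' i').card ≤ 1) ∧
    (∀ j j', 1 ≤ j → j ≤ e → 1 ≤ j' → j' ≤ e' →
      (Tbig k N d e j ∩ Tbig k N d' e' j').card ≤ 1) ∧
    (∀ j l', 1 ≤ j → j ≤ e → 1 ≤ l' → l' ≤ e' →
      (Tbig k N d e j ∩ Ubig k N d' e' l').card ≤ 1) ∧
    (∀ l i', 1 ≤ l → l ≤ e → 1 ≤ i' → i' ≤ d' →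
      (Ubig k N d e l ∩ Sbig k N d' e' i').card ≤ 1) ∧
    (∀ l j', 1 ≤ l → l ≤ e → 1 ≤ j' → j' ≤ e' →
      (Ubig k N d e l ∩ Tbig k N d' e' j').card ≤ 1) ∧
    (∀ l l', 1 ≤ l → l ≤ e → 1 ≤ l' → l' ≤ e' →
      (Ubig k N d e l ∩ Ubig k N d' e' l').card ≤ 1) := by
  have hk1 : 1 ≤ k := hk
  have hN1 : 1 ≤ N := hN
  have hconv : ∀ (a : ℕ), (N:ℝ)/3 - (N:ℝ)/(48*(k:ℝ)+15) < (a:ℝ) →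
      (a:ℝ) < (N:ℝ)/3 + (N:ℝ)/(48*(k:ℝ)+15) →
      (96*k+24)*N < (288*k+90)*a ∧ (288*k+90)*a < (96*k+36)*N := by
    intro a h1 h2
    have hcR : (0:ℝ) < 48*(k:ℝ)+15 := by positivity
    have e1 : (N:ℝ)/3 - (N:ℝ)/(48*(k:ℝ)+15) = ((96*(k:ℝ)+24)*N) / (288*(k:ℝ)+90) := by
      field_simp
      ring
    have e2 : (N:ℝ)/3 + (N:ℝ)/(48*(k:ℝ)+15) = ((96*(k:ℝ)+36)*N) / (288*(k:ℝ)+90) := by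
      field_simp
      ring
    rw [e1, div_lt_iff₀ (by positivity)] at h1
    rw [e2, lt_div_iff₀ (by positivity)] at h2
    constructor
    · have hr : ((96*(k:ℝ)+24)*(N:ℝ)) < (288*(k:ℝ)+90)*(a:ℝ) := by linarith
      exact_mod_cast hr
    · have hr : ((288*(k:ℝ)+90)*(a:ℝ)) < (96*(k:ℝ)+36)*(N:ℝ) := by linarith
      exact_mod_cast hr
  obtain ⟨hGd1, hGd2⟩ := hconv d hd₁ hd₂
  obtain ⟨hGd'1, hGd'2⟩ := hconv d' hd'₁ hd'₂
  refine ⟨?_, ?_, ?_, ?_, ?_, ?_, ?_, ?_, ?_, ?_⟩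
  · intro i i' a b c d1 e1
    exact pair_SS k N d e d' e' i i' hk1 hN1 hne he he' hGd1 hGd2 hGd'1 hGd'2 a b c d1 e1
  · intro i a b c
    exact pair_SS_eq k N d e d' e' i hk1 hN1 hne he he' hGd1 hGd2 hGd'1 hGd'2 a b c
  · intro i j' a b c d1
    exact pair_ST k N d e d' e' i j' hk1 hN1 hne he he' hGd1 hGd2 hGd'1 hGd'2 a b c d1
  · intro i l' a b c d1
    exact pair_SU k N d e d' e' i l' hk1 hN1 hne he he' hGd1 hGd2 hGd'1 hGd'2 a b c d1
  · intro j i' a b c d1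
    rw [Finset.inter_comm]
    exact pair_ST k N d' e' d e i' j hk1 hN1 (Ne.symm hne) he' he hGd'1 hGd'2 hGd1 hGd2 c d1 a b
  · intro j j' a b c d1
    exact pair_TT k N d e d' e' j j' hk1 hN1 hne he he' hGd1 hGd2 hGd'1 hGd'2 a b c d1
  · intro j l' a b c d1
    exact pair_TU k N d e d' e' j l' hk1 hN1 hne he he' hGd1 hGd2 hGd'1 hGd'2 a b c d1
  · intro l i' a b c d1
    rw [Finset.inter_comm]
    exact pair_SU k N d' e' d e i' l hk1 hN1 (Ne.symm hne) he' he hGd'1 hGd'2 hGd1 hGd2 c d1 a b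
  · intro l j' a b c d1
    rw [Finset.inter_comm]
    exact pair_TU k N d' e' d e j' l hk1 hN1 (Ne.symm hne) he' he hGd'1 hGd'2 hGd1 hGd2 c d1 a b
  · intro l l' a b c d1
    exact pair_UU k N d e d' e' l l' hk1 hN1 hne he he' hGd1 hGd2 hGd'1 hGd'2 a b c d1
end

section
/- Let n ≥ 4. If there exists a set of μ' mutually orthogonal cyclic ℓ-cycle systems of the complete graph K_n (with vertex set Z_n), then μ' ≤ n − 3. That is, μ'(ℓ,n) ≤ n − 3. -/
/-- The edge set of the closed walk through `f 0, f 1, …, f (ℓ-1), f 0`. -/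
def cycleEdges {V : Type*} [DecidableEq V] (ℓ : ℕ) (f : Fin ℓ → V) : Finset (Sym2 V) :=
  Finset.univ.image (fun i : Fin ℓ => s(f i, f ⟨(i.val + 1) % ℓ, Nat.mod_lt _ i.pos⟩))

/-- `E` is the edge set of an `ℓ`-cycle. -/
def IsCycle {V : Type*} [DecidableEq V] (ℓ : ℕ) (E : Finset (Sym2 V)) : Prop :=
  ∃ f : Fin ℓ → V, Function.Injective f ∧ E = cycleEdges ℓ f

/-- `F` is an `ℓ`-cycle system of the complete graph on `V`: a set of `ℓ`-cycles whose
edge sets partition the edge set of the complete graph. -/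
def IsCycleSystem {V : Type*} [DecidableEq V] (ℓ : ℕ) (F : Set (Finset (Sym2 V))) : Prop :=
  (∀ E ∈ F, IsCycle ℓ E) ∧
  F.Pairwise (fun E E' => Disjoint E E') ∧
  (∀ e : Sym2 V, ¬ e.IsDiag ↔ ∃ E ∈ F, e ∈ E)

/-- Two cycle systems are orthogonal when any two cycles, one from each,
share at most one edge. -/
def Orthog {V : Type*} [DecidableEq V] (F F' : Set (Finset (Sym2 V))) : Prop :=
  ∀ E ∈ F, ∀ E' ∈ F', (E ∩ E').card ≤ 1

/-- Translation of a cycle (given by its edge set) by `g ∈ ZMod n`. -/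
def translateCycle {n : ℕ} (g : ZMod n) (E : Finset (Sym2 (ZMod n))) : Finset (Sym2 (ZMod n)) :=
  E.image (Sym2.map (· + g))

/-- A cycle system of the complete graph on `ZMod n` is cyclic if closed under translation. -/
def IsCyclicSystem {n : ℕ} (F : Set (Finset (Sym2 (ZMod n)))) : Prop :=
  ∀ E ∈ F, ∀ g : ZMod n, translateCycle g E ∈ F

/-! For `ℓ ≤ 2` there is at most one cycle system, so let `ℓ ≥ 3`. Suppose there are more than
`n - 3` systems and fix an edge `{0, d}` with `d ≠ -d`. In each system, the cycle through `{0, d}`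
has a second edge `{0, x}` at `0`; by orthogonality `x` determines the system, and `x ∉ {0, d}`,
so some system has `x = -d`. By cyclicity and the partition property that cycle is invariant under
translation by `d`. For `d = 1` it is therefore `(0, 1, …, n - 1)`, so `ℓ = n`, and `ℓ ∣ n(n-1)/2`
then makes `n` odd. If `n` is composite, `d = p` for its least prime factor confines the cycle to
the subgroup `pℤ/nℤ`, which is too small for `ℓ = n` vertices. If `n` is prime, every difference
class `{{a, a + d}}` is a cycle of some system, and the cycle of another system through `{0, 1}`
meets each of the `n - 1` classes in at most one edge, yet has `n` edges. -/

open Finset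

section Cycle

open Fin.CommRing

variable {V : Type*} [DecidableEq V] {ℓ : ℕ}

theorem cycleEdges_eq_image [NeZero ℓ] (f : Fin ℓ → V) :
    cycleEdges ℓ f = univ.image fun i => s(f i, f (i + 1)) := by
  unfold cycleEdges
  congr! 4 with i
  exact Fin.ext (by simp [Fin.val_add])

theorem mk_mem_cycleEdges_iff [NeZero ℓ] {f : Fin ℓ → V} (hf : Function.Injective f)
    (i : Fin ℓ) (z : V) : s(f i, z) ∈ cycleEdges ℓ f ↔ z = f (i + 1) ∨ z = f (i - 1) := by
  simp only [cycleEdges_eq_image, mem_image, mem_univ, true_and, Sym2.eq_iff, hf.eq_iff]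
  constructor
  · rintro ⟨j, ⟨rfl, rfl⟩ | ⟨rfl, rfl⟩⟩
    · exact .inl rfl
    · exact .inr (by simp)
  · rintro (rfl | rfl)
    · exact ⟨i, .inl ⟨rfl, rfl⟩⟩
    · exact ⟨i - 1, .inr ⟨by simp, by simp⟩⟩

theorem cycleEdges_two (f : Fin 2 → V) : cycleEdges 2 f = {s(f 0, f 1)} := by
  rw [cycleEdges_eq_image]
  ext e
  simp only [mem_image, mem_univ, true_and, mem_singleton, Fin.exists_fin_two]
  constructor
  · rintro (rfl | rfl)
    exacts [rfl, Sym2.eq_swap]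
  · rintro rfl
    exact .inl rfl

theorem exists_eq_of_mk_mem_cycleEdges {f : Fin ℓ → V} {v w : V}
    (h : s(v, w) ∈ cycleEdges ℓ f) : ∃ i, f i = v := by
  obtain ⟨i, -, hi⟩ := mem_image.mp h
  rcases Sym2.eq_iff.mp hi with ⟨hv, -⟩ | ⟨-, hv⟩
  exacts [⟨_, hv⟩, ⟨_, hv⟩]

theorem Fin.two_ne_zero_of_three_le [NeZero ℓ] (hℓ : 3 ≤ ℓ) : (2 : Fin ℓ) ≠ 0 := by
  rw [Ne, Fin.ext_iff]
  simp [Nat.mod_eq_of_lt (show 2 < ℓ by omega)]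

namespace IsCycle

theorem card_eq {E : Finset (Sym2 V)} (hℓ : 3 ≤ ℓ) (hE : IsCycle ℓ E) : E.card = ℓ := by
  have : NeZero ℓ := .of_pos (by omega)
  obtain ⟨f, hf, rfl⟩ := hE
  rw [cycleEdges_eq_image, card_image_of_injective, card_univ, Fintype.card_fin]
  intro i j h
  rcases Sym2.eq_iff.mp h with ⟨h, -⟩ | ⟨h₁, h₂⟩
  · exact hf h
  · refine absurd ?_ (Fin.two_ne_zero_of_three_le hℓ)
    linear_combination hf h₂ - hf h₁

theorem le_card [Fintype V] {E : Finset (Sym2 V)} (hE : IsCycle ℓ E) : ℓ ≤ Fintype.card V := by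
  obtain ⟨f, hf, -⟩ := hE
  simpa using Fintype.card_le_of_injective f hf

theorem exists_adj_ne {E : Finset (Sym2 V)} (hℓ : 3 ≤ ℓ) (hE : IsCycle ℓ E) {v w : V}
    (h : s(v, w) ∈ E) : ∃ u ≠ w, s(v, u) ∈ E := by
  have : NeZero ℓ := .of_pos (by omega)
  obtain ⟨f, hf, rfl⟩ := hE
  obtain ⟨i, rfl⟩ := exists_eq_of_mk_mem_cycleEdges h
  have hne : f (i + 1) ≠ f (i - 1) := fun h' =>
    Fin.two_ne_zero_of_three_le hℓ (by linear_combination hf h')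
  rcases (mk_mem_cycleEdges_iff hf i w).mp h with rfl | rfl
  · exact ⟨f (i - 1), hne.symm, (mk_mem_cycleEdges_iff hf i _).mpr (.inr rfl)⟩
  · exact ⟨f (i + 1), hne, (mk_mem_cycleEdges_iff hf i _).mpr (.inl rfl)⟩

theorem eq_or_eq_of_adj {E : Finset (Sym2 V)} (hE : IsCycle ℓ E) {v a b c : V}
    (ha : s(v, a) ∈ E) (hb : s(v, b) ∈ E) (hab : a ≠ b) (hc : s(v, c) ∈ E) : c = a ∨ c = b := by
  obtain ⟨f, hf, rfl⟩ := hE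
  obtain ⟨i, rfl⟩ := exists_eq_of_mk_mem_cycleEdges ha
  have : NeZero ℓ := ⟨fun h => by subst h; exact i.elim0⟩
  rw [mk_mem_cycleEdges_iff hf] at ha hb hc
  grind

theorem le_card_of_closed {E : Finset (Sym2 V)} (hE : IsCycle ℓ E) {A : Finset V}
    (hA : ∀ v ∈ A, ∀ w, s(v, w) ∈ E → w ∈ A) {v w : V} (hv : v ∈ A) (hvw : s(v, w) ∈ E) :
    ℓ ≤ A.card := by
  obtain ⟨f, hf, rfl⟩ := hE
  obtain ⟨i₀, rfl⟩ := exists_eq_of_mk_mem_cycleEdges hvw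
  have : NeZero ℓ := ⟨fun h => by subst h; exact i₀.elim0⟩
  have hstep : ∀ k : ℕ, f (i₀ + (k : Fin ℓ)) ∈ A := by
    intro k
    induction k with
    | zero => simpa using hv
    | succ k ih =>
      have := hA _ ih _ ((mk_mem_cycleEdges_iff hf _ _).mpr (.inl rfl))
      simpa [add_assoc] using this
  have hsub : univ.image f ⊆ A := by
    intro x hx
    obtain ⟨i, -, rfl⟩ := mem_image.mp hx
    simpa using hstep (i - i₀).val
  simpa [card_image_of_injective _ hf] using card_le_card hsub

end IsCycle

end Cycle

section CycleSystem

variable {V : Type*} [DecidableEq V] {ℓ : ℕ} {F : Set (Finset (Sym2 V))}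

namespace IsCycleSystem

theorem exists_mem (hF : IsCycleSystem ℓ F) {a b : V} (hab : a ≠ b) : ∃ E ∈ F, s(a, b) ∈ E :=
  (hF.2.2 _).mp (Sym2.mk_isDiag_iff.not.mpr hab)

theorem ne_of_mk_mem (hF : IsCycleSystem ℓ F) {E : Finset (Sym2 V)} (hE : E ∈ F) {a b : V}
    (h : s(a, b) ∈ E) : a ≠ b :=
  Sym2.mk_isDiag_iff.not.mp ((hF.2.2 _).mpr ⟨E, hE, h⟩)

theorem eq_of_mem_of_mem (hF : IsCycleSystem ℓ F) {E E' : Finset (Sym2 V)} (hE : E ∈ F)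
    (hE' : E' ∈ F) {e : Sym2 V} (he : e ∈ E) (he' : e ∈ E') : E = E' := by
  by_contra hne
  exact disjoint_left.mp (hF.2.1 hE hE' hne) he he'

theorem two_le [Nontrivial V] (hF : IsCycleSystem ℓ F) : 2 ≤ ℓ := by
  obtain ⟨a, b, hab⟩ := exists_pair_ne V
  obtain ⟨E, hE, he⟩ := hF.exists_mem hab
  obtain ⟨f, -, rfl⟩ := hF.1 E hE
  obtain ⟨i, -, hi⟩ := mem_image.mp he
  have hne : ¬ (s(f i, f _)).IsDiag := hi ▸ Sym2.mk_isDiag_iff.not.mpr hab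
  rw [Sym2.mk_isDiag_iff] at hne
  simpa [Nat.succ_le_iff] using Fintype.one_lt_card_iff.mpr ⟨_, _, fun h => hne (congrArg f h)⟩

theorem mem_iff_of_two (hF : IsCycleSystem 2 F) {E : Finset (Sym2 V)} :
    E ∈ F ↔ ∃ e, ¬ e.IsDiag ∧ E = {e} := by
  have hsingle : ∀ E ∈ F, ∃ e, E = {e} := fun E hE => by
    obtain ⟨f, -, rfl⟩ := hF.1 E hE
    exact ⟨_, cycleEdges_two f⟩
  constructor
  · intro hE
    obtain ⟨e, rfl⟩ := hsingle E hE
    exact ⟨e, (hF.2.2 e).mpr ⟨_, hE, mem_singleton_self e⟩, rfl⟩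
  · rintro ⟨e, he, rfl⟩
    obtain ⟨E, hE, heE⟩ := (hF.2.2 e).mp he
    obtain ⟨e', rfl⟩ := hsingle E hE
    rwa [mem_singleton.mp heE]

theorem eq_of_two {F' : Set (Finset (Sym2 V))} (hF : IsCycleSystem 2 F)
    (hF' : IsCycleSystem 2 F') : F = F' :=
  Set.ext fun _ => hF.mem_iff_of_two.trans hF'.mem_iff_of_two.symm

theorem dvd_choose_two [Fintype V] (hℓ : 3 ≤ ℓ) (hF : IsCycleSystem ℓ F) :
    ℓ ∣ (Fintype.card V).choose 2 := by
  have hfin : F.Finite := Set.toFinite F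
  have hunion :
      hfin.toFinset.biUnion (fun E => E) = univ.filter fun e : Sym2 V => ¬ e.IsDiag := by
    ext e
    simp [hF.2.2 e]
  have hcard := congrArg card hunion
  rw [card_biUnion, sum_const_nat fun E hE => (hF.1 E (hfin.mem_toFinset.mp hE)).card_eq hℓ,
    ← Fintype.card_subtype, Sym2.card_subtype_not_diag] at hcard
  · exact ⟨_, hcard.symm.trans (mul_comm _ _)⟩
  · intro E hE E' hE' hne
    exact hF.2.1 (hfin.mem_toFinset.mp hE) (hfin.mem_toFinset.mp hE') hne

end IsCycleSystem

end CycleSystem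

/-- The other neighbour of `v` on the cycle through `{v, w}` determines the system, by
orthogonality, and it avoids `v` and `w`; so if it also avoided `x` there would be at most
`|V| - 3` systems. -/
theorem exists_cycle_through_of_card_lt {V : Type*} [DecidableEq V] [Fintype V] {ℓ : ℕ}
    {S : Set (Set (Finset (Sym2 V)))} (hℓ : 3 ≤ ℓ) (hS : ∀ F ∈ S, IsCycleSystem ℓ F)
    (horth : S.Pairwise Orthog) (hcard : Fintype.card V - 3 < S.ncard) {v w x : V}
    (hvw : v ≠ w) (hxv : x ≠ v) (hxw : x ≠ w) :
    ∃ F ∈ S, ∃ E ∈ F, s(v, w) ∈ E ∧ s(v, x) ∈ E := by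
  by_contra! hno
  have hadj : ∀ F ∈ S, ∃ u, ∃ E ∈ F, s(v, w) ∈ E ∧ s(v, u) ∈ E ∧ u ≠ w := by
    intro F hF
    obtain ⟨E, hE, hvwE⟩ := (hS F hF).exists_mem hvw
    obtain ⟨u, huw, hu⟩ := ((hS F hF).1 E hE).exists_adj_ne hℓ hvwE
    exact ⟨u, E, hE, hvwE, hu, huw⟩
  have : Nonempty V := ⟨v⟩
  choose! φ E hE hvwE hφE hφw using hadj
  have hmaps : ∀ F ∈ S, φ F ∈ ((univ \ {v, w, x} : Finset V) : Set V) := by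
    intro F hF
    have hφv := ((hS F hF).ne_of_mk_mem (hE F hF) (hφE F hF)).symm
    have hφx : φ F ≠ x := fun h => hno F hF (E F) (hE F hF) (hvwE F hF) (h ▸ hφE F hF)
    simp [hφv, hφw F hF, hφx]
  have hinj : Set.InjOn φ S := by
    intro F hF F' hF' h
    by_contra hne
    have hsub : {s(v, w), s(v, φ F)} ⊆ E F ∩ E F' :=
      insert_subset (mem_inter.mpr ⟨hvwE F hF, hvwE F' hF'⟩)
        (singleton_subset_iff.mpr (mem_inter.mpr ⟨hφE F hF, h ▸ hφE F' hF'⟩))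
    have := card_le_card hsub
    rw [card_pair (Sym2.congr_right.not.mpr (hφw F hF).symm)] at this
    exact absurd (horth hF hF' hne (E F) (hE F hF) (E F') (hE F' hF')) (by omega)
  have hle := Set.ncard_le_ncard_of_injOn φ hmaps hinj (Set.toFinite _)
  rw [Set.ncard_coe_finset, card_sdiff_of_subset (subset_univ _), card_univ,
    card_insert_of_notMem (by simp [hvw, hxv.symm]), card_pair (Ne.symm hxw)] at hle
  omega

theorem odd_of_dvd_choose_two {n : ℕ} (hn : 0 < n) (h : n ∣ n.choose 2) : Odd n := by
  obtain ⟨c, hc⟩ := h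
  have : n * (c * 2) = n * (n - 1) := by
    rw [← mul_assoc, ← hc, Nat.choose_two_right,
      Nat.div_mul_cancel (Nat.even_mul_pred_self n).two_dvd]
  have := Nat.eq_of_mul_eq_mul_left hn this
  exact Nat.odd_iff.mpr (by omega)

section Translate

variable {n : ℕ}

theorem translateCycle_translateCycle (a b : ZMod n) (E : Finset (Sym2 (ZMod n))) :
    translateCycle a (translateCycle b E) = translateCycle (a + b) E := by
  simp only [translateCycle, image_image]
  congr 1
  funext e
  simp [Sym2.map_map, add_assoc, add_comm a b]

theorem translateCycle_zero (E : Finset (Sym2 (ZMod n))) : translateCycle 0 E = E := by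
  simp [translateCycle]

theorem mk_mem_translateCycle {E : Finset (Sym2 (ZMod n))} {a b : ZMod n} (g : ZMod n)
    (h : s(a, b) ∈ E) : s(a + g, b + g) ∈ translateCycle g E :=
  mem_image_of_mem (Sym2.map (· + g)) h

theorem translateCycle_mul_eq_self {E : Finset (Sym2 (ZMod n))} {d : ZMod n}
    (h : translateCycle d E = E) (k : ZMod n) : translateCycle (k * d) E = E := by
  have hneg : translateCycle (-d) E = E := by
    conv_lhs => rw [← h]
    rw [translateCycle_translateCycle, neg_add_cancel, translateCycle_zero]
  rw [← ZMod.intCast_zmod_cast k]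
  induction (ZMod.cast k : ℤ) using Int.induction_on with
  | zero => simpa using translateCycle_zero E
  | succ m ih => rwa [Int.cast_add, Int.cast_one, add_one_mul, add_comm,
      ← translateCycle_translateCycle, ih]
  | pred m ih => rwa [Int.cast_sub, Int.cast_one, sub_one_mul, sub_eq_neg_add,
      ← translateCycle_translateCycle, ih]

theorem IsCycleSystem.translateCycle_eq_self {ℓ : ℕ} {F : Set (Finset (Sym2 (ZMod n)))}
    (hF : IsCycleSystem ℓ F) (hcyc : IsCyclicSystem F) {E : Finset (Sym2 (ZMod n))} (hE : E ∈ F)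
    {d : ZMod n} (h₁ : s(0, d) ∈ E) (h₂ : s(0, -d) ∈ E) : translateCycle d E = E :=
  hF.eq_of_mem_of_mem (hcyc E hE d) hE
    (by simpa [Sym2.eq_swap] using mk_mem_translateCycle d h₂) h₁

end Translate

section DiffEdges

variable {n : ℕ} [NeZero n]

/-- For a unit `d` these edges form the `n`-cycle `(0, d, 2d, …)`. -/
def diffEdges (d : ZMod n) : Finset (Sym2 (ZMod n)) :=
  univ.image fun a => s(a, a + d)

theorem mk_mem_diffEdges_iff {a b d : ZMod n} :
    s(a, b) ∈ diffEdges d ↔ b - a = d ∨ b - a = -d := by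
  simp only [diffEdges, mem_image, mem_univ, true_and]
  constructor
  · rintro ⟨c, hc⟩
    rcases Sym2.eq_iff.mp hc with ⟨rfl, rfl⟩ | ⟨rfl, rfl⟩
    exacts [.inl (by ring), .inr (by ring)]
  · rintro (h | h)
    · exact ⟨a, by rw [← h, add_sub_cancel]⟩
    · exact ⟨b, by rw [Sym2.eq_swap]; congr 1; linear_combination h⟩

theorem diffEdges_neg (d : ZMod n) : diffEdges (-d) = diffEdges d := by
  ext e
  induction e using Sym2.inductionOn
  simp only [mk_mem_diffEdges_iff, neg_neg, or_comm]

theorem card_diffEdges {d : ZMod n} (hd : d ≠ -d) : (diffEdges d).card = n := by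
  rw [diffEdges, card_image_of_injective, card_univ, ZMod.card]
  intro a b h
  rcases Sym2.eq_iff.mp h with ⟨h, -⟩ | ⟨h₁, h₂⟩
  · exact h
  · exact absurd (by linear_combination h₂ - h₁) hd

theorem diffEdges_subset {E : Finset (Sym2 (ZMod n))} (hE : ∀ a, translateCycle a E = E)
    {d : ZMod n} (h : s(0, d) ∈ E) : diffEdges d ⊆ E := by
  intro e he
  obtain ⟨a, -, rfl⟩ := mem_image.mp he
  simpa [hE a, add_comm d a] using mk_mem_translateCycle a h

theorem diffEdges_eq_of_mk_mem {a b d : ZMod n} (h : s(a, b) ∈ diffEdges d) :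
    diffEdges d = diffEdges (b - a) := by
  rcases mk_mem_diffEdges_iff.mp h with h | h <;> simp [h, diffEdges_neg]

end DiffEdges

namespace OrthogonalCyclicSystems

variable {n ℓ : ℕ} [NeZero n] {S : Set (Set (Finset (Sym2 (ZMod n))))}
  (hS : ∀ F ∈ S, IsCycleSystem ℓ F ∧ IsCyclicSystem F) (horth : S.Pairwise Orthog)
  (hℓ : 3 ≤ ℓ) (hcard : n - 3 < S.ncard)
include hS horth hℓ hcard

theorem exists_cycle_translate_invariant {d : ZMod n} (hd : d ≠ -d) :
    ∃ F ∈ S, ∃ E ∈ F, s(0, d) ∈ E ∧ s(0, -d) ∈ E ∧ ∀ k, translateCycle (k * d) E = E := by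
  have hd0 : d ≠ 0 := fun h => hd (by simp [h])
  obtain ⟨F, hF, E, hE, h₁, h₂⟩ := exists_cycle_through_of_card_lt hℓ (fun F hF => (hS F hF).1)
    horth (by rwa [ZMod.card]) hd0.symm (neg_ne_zero.mpr hd0) hd.symm
  exact ⟨F, hF, E, hE, h₁, h₂, translateCycle_mul_eq_self
    ((hS F hF).1.translateCycle_eq_self (hS F hF).2 hE h₁ h₂)⟩

theorem exists_diffEdges_subset {d : ZMod n} (hu : IsUnit d) (hd : d ≠ -d) :
    ∃ F ∈ S, ∃ E ∈ F, diffEdges d ⊆ E := by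
  obtain ⟨F, hF, E, hE, h₁, -, hinv⟩ := exists_cycle_translate_invariant hS horth hℓ hcard hd
  obtain ⟨u, rfl⟩ := hu
  refine ⟨F, hF, E, hE, diffEdges_subset (fun a => ?_) h₁⟩
  simpa [mul_assoc] using hinv (a * ↑u⁻¹)

theorem length_eq (hn : 3 ≤ n) : ℓ = n := by
  have : Fact (2 < n) := ⟨hn⟩
  obtain ⟨F, hF, E, hE, hsub⟩ := exists_diffEdges_subset hS horth hℓ hcard isUnit_one
    ZMod.neg_one_ne_one.symm
  have hcycle := (hS F hF).1.1 E hE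
  have := card_le_card hsub
  rw [card_diffEdges ZMod.neg_one_ne_one.symm, hcycle.card_eq hℓ] at this
  exact le_antisymm (by simpa [ZMod.card] using hcycle.le_card) this

theorem exists_diffEdges_mem (hn : 3 ≤ n) {d : ZMod n} (hu : IsUnit d) (hd : d ≠ -d) :
    ∃ F ∈ S, diffEdges d ∈ F := by
  obtain ⟨F, hF, E, hE, hsub⟩ := exists_diffEdges_subset hS horth hℓ hcard hu hd
  have hE' : E = diffEdges d := (eq_of_subset_of_card_le hsub (by
    rw [((hS F hF).1.1 E hE).card_eq hℓ, card_diffEdges hd, length_eq hS horth hℓ hcard hn])).symm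
  exact ⟨F, hF, hE' ▸ hE⟩

theorem odd (hn : 3 ≤ n) : Odd n := by
  obtain ⟨F, hF⟩ := Set.nonempty_of_ncard_ne_zero (s := S) (by omega)
  have := (hS F hF).1.dvd_choose_two hℓ
  rw [ZMod.card, length_eq hS horth hℓ hcard hn] at this
  exact odd_of_dvd_choose_two (by omega) this

theorem prime (hn : 3 ≤ n) : n.Prime := by
  by_contra hp
  have hodd := odd hS horth hℓ hcard hn
  set p := n.minFac
  set d : ZMod n := (p : ZMod n)
  have hpn : p ∣ n := n.minFac_dvd
  have hp1 : p ≠ 1 := Nat.minFac_prime (by omega) |>.ne_one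
  have hd0 : d ≠ 0 := by
    rw [Ne, ZMod.natCast_eq_zero_iff]
    exact fun h => hp (Nat.dvd_antisymm hpn h ▸ Nat.minFac_prime (by omega))
  have hd := ZMod.ne_neg_self hodd hd0
  obtain ⟨F, hF, E, hE, h₁, h₂, hinv⟩ := exists_cycle_translate_invariant hS horth hℓ hcard hd
  set A := univ.image fun k : ZMod n => k * d
  have hclosed : ∀ v ∈ A, ∀ w, s(v, w) ∈ E → w ∈ A := by
    intro v hv w hw
    obtain ⟨k, -, rfl⟩ := mem_image.mp hv
    have h₀ : s(0, w - k * d) ∈ E := by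
      have := mk_mem_translateCycle (-k * d) hw
      rwa [hinv, neg_mul, add_neg_cancel, ← sub_eq_add_neg] at this
    rcases ((hS F hF).1.1 E hE).eq_or_eq_of_adj h₁ h₂ hd h₀ with h | h
    · exact mem_image.mpr ⟨k + 1, mem_univ _, by linear_combination -h⟩
    · exact mem_image.mpr ⟨k - 1, mem_univ _, by linear_combination -h⟩
  have h1A : (1 : ZMod n) ∉ A := by
    intro h
    obtain ⟨k, -, hk⟩ := mem_image.mp h
    have hu : IsUnit d := .of_mul_eq_one k (by rw [mul_comm, hk])
    exact hp1 (((ZMod.isUnit_iff_coprime p n).mp hu).eq_one_of_dvd hpn)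
  have hℓA := ((hS F hF).1.1 E hE).le_card_of_closed hclosed
    (mem_image.mpr ⟨0, mem_univ _, zero_mul _⟩) h₁
  have hAn := card_lt_card (ssubset_univ_iff.mpr fun h : A = univ => h1A (h ▸ mem_univ 1))
  rw [card_univ, ZMod.card] at hAn
  have := length_eq hS horth hℓ hcard hn
  omega

theorem not_prime (hn : 4 ≤ n) : ¬ n.Prime := by
  intro hp
  have : Fact n.Prime := ⟨hp⟩
  have hodd := odd hS horth hℓ hcard (by omega)
  have hP : ∀ d : ZMod n, d ≠ 0 → ∃ F ∈ S, diffEdges d ∈ F := fun d hd0 =>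
    exists_diffEdges_mem hS horth hℓ hcard (by omega) (isUnit_iff_ne_zero.mpr hd0)
      (ZMod.ne_neg_self hodd hd0)
  obtain ⟨F₁, hF₁, hP₁⟩ := hP 1 one_ne_zero
  obtain ⟨F, hF, hne⟩ := Set.exists_ne_of_one_lt_ncard (s := S) (by omega) F₁
  obtain ⟨C, hC, h₀₁⟩ := (hS F hF).1.exists_mem (zero_ne_one (α := ZMod n))
  have hbound : ∀ d ∈ univ.erase 0, (C ∩ diffEdges d).card ≤ 1 := by
    intro d hd0
    obtain ⟨Fd, hFd, hPd⟩ := hP d (ne_of_mem_erase hd0)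
    by_cases hFFd : F = Fd
    · subst hFFd
      by_cases hCP : C = diffEdges d
      · have hC₁ : C = diffEdges 1 := by
          rw [hCP, diffEdges_eq_of_mk_mem (hCP ▸ h₀₁), sub_zero]
        have := horth hF hF₁ hne C hC _ hP₁
        rw [← hC₁, inter_self, ((hS F hF).1.1 C hC).card_eq hℓ,
          length_eq hS horth hℓ hcard (by omega)] at this
        omega
      · simp [disjoint_iff_inter_eq_empty.mp ((hS F hF).1.2.1 hC hPd hCP)]
    · exact horth hF hFd hFFd C hC _ hPd
  have hcover : C ⊆ (univ.erase 0).biUnion fun d => C ∩ diffEdges d := by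
    intro e he
    induction e using Sym2.inductionOn with
    | _ a b =>
    have hab := (hS F hF).1.ne_of_mk_mem hC he
    exact mem_biUnion.mpr ⟨b - a, mem_erase.mpr ⟨sub_ne_zero.mpr hab.symm, mem_univ _⟩,
      mem_inter.mpr ⟨he, mk_mem_diffEdges_iff.mpr (.inl rfl)⟩⟩
  have := (card_le_card hcover).trans (card_biUnion_le_card_mul _ _ _ hbound)
  rw [((hS F hF).1.1 C hC).card_eq hℓ, length_eq hS horth hℓ hcard (by omega), card_erase_of_mem
    (mem_univ _), card_univ, ZMod.card] at this
  omega

end OrthogonalCyclicSystems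

/-- Lemma: for `n ≥ 4`, any set of mutually orthogonal cyclic `ℓ`-cycle systems of `K_n`
(with vertex set `ZMod n`) has at most `n - 3` elements; that is, `μ'(ℓ,n) ≤ n - 3`. -/
theorem stmt_17 (ℓ n : ℕ) (hn : 4 ≤ n) (S : Set (Set (Finset (Sym2 (ZMod n)))))
    (hS : ∀ F ∈ S, IsCycleSystem ℓ F ∧ IsCyclicSystem F) (horth : S.Pairwise Orthog) :
    S.ncard ≤ n - 3 := by
  by_contra! hcard
  have : NeZero n := ⟨by omega⟩
  have : Fact (1 < n) := ⟨by omega⟩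
  obtain ⟨F₀, hF₀⟩ := Set.nonempty_of_ncard_ne_zero (s := S) (by omega)
  rcases Nat.lt_or_ge ℓ 3 with hℓ | hℓ
  · have hℓ2 : ℓ = 2 := by have := (hS F₀ hF₀).1.two_le; omega
    subst hℓ2
    have : S.ncard ≤ 1 := (Set.ncard_le_one (Set.toFinite S)).mpr fun F hF F' hF' =>
      (hS F hF).1.eq_of_two (hS F' hF').1
    omega
  · exact OrthogonalCyclicSystems.not_prime hS horth hℓ hcard hn
      (OrthogonalCyclicSystems.prime hS horth hℓ hcard (by omega))
end

section
/- Let n ≡ 3 (mod 6). Then every cyclic 3-cycle system of the complete graph K_n (with vertex set Z_n) contains the triangle (0, n/3, 2n/3); consequently, there do not exist two orthogonal cyclic 3-cycle systems of K_n, i.e., no pair of cyclic 3-cycle systems of K_n is orthogonal. -/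
lemma ce3 {V : Type*} [DecidableEq V] (f : Fin 3 → V) :
    cycleEdges 3 f = {s(f 0, f 1), s(f 1, f 2), s(f 2, f 0)} := by
  ext e
  simp only [cycleEdges, Finset.mem_image, Finset.mem_univ, true_and, Finset.mem_insert,
    Finset.mem_singleton]
  constructor
  · rintro ⟨i, rfl⟩
    fin_cases i <;> simp
  · rintro (rfl | rfl | rfl)
    exacts [⟨0, rfl⟩, ⟨1, rfl⟩, ⟨2, rfl⟩]

lemma tri_card {V : Type*} [DecidableEq V] {a b c : V} (hab : a ≠ b) (hbc : b ≠ c)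
    (hac : a ≠ c) : ({s(a,b), s(b,c), s(c,a)} : Finset (Sym2 V)).card = 3 := by
  rw [Finset.card_insert_of_notMem, Finset.card_insert_of_notMem, Finset.card_singleton] <;>
    simp [Sym2.eq_iff] <;> tauto

lemma card_of_cycle {V : Type*} [DecidableEq V] {E : Finset (Sym2 V)} (h : IsCycle 3 E) :
    E.card = 3 := by
  obtain ⟨f, hf, rfl⟩ := h
  rw [ce3]
  exact tri_card (fun h => by simpa using hf h) (fun h => by simpa using hf h)
    (fun h => by simpa using hf h)

lemma tcZero {n : ℕ} (E : Finset (Sym2 (ZMod n))) : translateCycle 0 E = E := by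
  have : Sym2.map (· + (0 : ZMod n)) = id := by
    funext e; induction e using Sym2.ind; simp
  simp [translateCycle, this]

lemma tcComp {n : ℕ} (g h : ZMod n) (E : Finset (Sym2 (ZMod n))) :
    translateCycle h (translateCycle g E) = translateCycle (g + h) E := by
  rw [translateCycle, translateCycle, translateCycle, Finset.image_image]
  congr 1
  funext e; induction e using Sym2.ind; simp [add_assoc]

lemma mem_translate {n : ℕ} {E : Finset (Sym2 (ZMod n))} {x y : ZMod n} (g : ZMod n)
    (h : s(x, y) ∈ E) : s(x + g, y + g) ∈ translateCycle g E := by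
  rw [translateCycle, Finset.mem_image]
  exact ⟨s(x, y), h, Sym2.map_pair_eq _ _ _⟩

lemma fixed_structure {n : ℕ} {g a b c : ZMod n} (hg : g ≠ 0) (hg2 : 2 * g ≠ 0)
    (hab : a ≠ b)
    (hfix : translateCycle g ({s(a,b), s(b,c), s(c,a)} : Finset (Sym2 (ZMod n)))
      = {s(a,b), s(b,c), s(c,a)}) :
    3 * g = 0 ∧ ∃ x : ZMod n,
      ({s(a,b), s(b,c), s(c,a)} : Finset (Sym2 (ZMod n)))
        = {s(x, x + g), s(x + g, x + 2 * g), s(x + 2 * g, x)} := by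
  have hmem : ∀ x y : ZMod n, s(x,y) ∈ ({s(a,b), s(b,c), s(c,a)} : Finset (Sym2 (ZMod n))) →
      s(x+g, y+g) ∈ ({s(a,b), s(b,c), s(c,a)} : Finset (Sym2 (ZMod n))) := by
    intro x y hxy
    rw [← hfix]; exact mem_translate g hxy
  have h1 := hmem a b (by simp)
  have h2 := hmem b c (by simp)
  have h3 := hmem c a (by simp)
  simp only [Finset.mem_insert, Finset.mem_singleton, Sym2.eq_iff] at h1 h2 h3
  have hA : a + g = b ∨ a + g = c := by
    rcases h1 with (⟨e, -⟩ | ⟨e, -⟩) | (⟨e, -⟩ | ⟨e, -⟩) | (⟨e, -⟩ | ⟨e, -⟩)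
    · exact absurd (by linear_combination e) hg
    · exact Or.inl e
    · exact Or.inl e
    · exact Or.inr e
    · exact Or.inr e
    · exact absurd (by linear_combination e) hg
  have hB : b + g = a ∨ b + g = c := by
    rcases h2 with (⟨e, -⟩ | ⟨e, -⟩) | (⟨e, -⟩ | ⟨e, -⟩) | (⟨e, -⟩ | ⟨e, -⟩)
    · exact Or.inl e
    · exact absurd (by linear_combination e) hg
    · exact absurd (by linear_combination e) hg
    · exact Or.inr e
    · exact Or.inr e
    · exact Or.inl e
  have hC : c + g = a ∨ c + g = b := by
    rcases h3 with (⟨e, -⟩ | ⟨e, -⟩) | (⟨e, -⟩ | ⟨e, -⟩) | (⟨e, -⟩ | ⟨e, -⟩)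
    · exact Or.inl e
    · exact Or.inr e
    · exact Or.inr e
    · exact absurd (by linear_combination e) hg
    · exact absurd (by linear_combination e) hg
    · exact Or.inl e
  clear h1 h2 h3 hmem hfix
  rcases hA with hA | hA
  · rcases hB with hB | hB
    · exact absurd (by linear_combination hA + hB) hg2
    · rcases hC with hC | hC
      · have hb : b = a + g := hA.symm
        subst hb
        have hc : c = a + 2 * g := by linear_combination -hB
        subst hc
        exact ⟨by linear_combination hC, a, rfl⟩
      · exact absurd (by linear_combination hB + hC) hg2
  · rcases hB with hB | hB
    · rcases hC with hC | hC
      · exact absurd (by linear_combination hA + hC) hg2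
      · have hc : c = a + g := hA.symm
        subst hc
        have hb : b = a + 2 * g := by linear_combination -hC
        subst hb
        refine ⟨by linear_combination hB, a, ?_⟩
        ext e
        simp only [Finset.mem_insert, Finset.mem_singleton]
        constructor
        · rintro (rfl | rfl | rfl)
          · exact Or.inr (Or.inr Sym2.eq_swap)
          · exact Or.inr (Or.inl Sym2.eq_swap)
          · exact Or.inl Sym2.eq_swap
        · rintro (rfl | rfl | rfl)
          · exact Or.inr (Or.inr Sym2.eq_swap)
          · exact Or.inr (Or.inl Sym2.eq_swap)
          · exact Or.inl Sym2.eq_swap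
    · exact absurd (by linear_combination hA - hB) hab

/-- If `n ≡ 3 (mod 6)`, then every cyclic 3-cycle system of `K_n` (on vertex set `ZMod n`)
contains the triangle `(0, n/3, 2n/3)`; consequently no two cyclic 3-cycle systems of
`K_n` are orthogonal. -/
theorem stmt_18 (n : ℕ) (hn : n % 6 = 3) :
    (∀ F : Set (Finset (Sym2 (ZMod n))), IsCycleSystem 3 F → IsCyclicSystem F →
      cycleEdges 3 ![(0 : ZMod n), ((n / 3 : ℕ) : ZMod n), ((2 * (n / 3) : ℕ) : ZMod n)] ∈ F) ∧
    (∀ F F' : Set (Finset (Sym2 (ZMod n))),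
      IsCycleSystem 3 F → IsCyclicSystem F → IsCycleSystem 3 F' → IsCyclicSystem F' →
      ¬ Orthog F F') := by
  haveI : NeZero n := ⟨by omega⟩
  obtain ⟨k, hk⟩ : ∃ k, n = 6 * k + 3 := ⟨n / 6, by omega⟩
  set τ : ZMod n := ((n / 3 : ℕ) : ZMod n) with hτdef
  have hn3 : n / 3 = 2 * k + 1 := by omega
  have castzero : ∀ m : ℕ, 0 < m → m < n → ((m : ℕ) : ZMod n) ≠ 0 := by
    intro m hm1 hm2 h
    rw [ZMod.natCast_eq_zero_iff] at h
    have := Nat.le_of_dvd hm1 h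
    omega
  have hτ : τ ≠ 0 := by
    rw [hτdef, hn3]; exact castzero _ (by omega) (by omega)
  have h2τ : 2 * τ ≠ 0 := by
    rw [hτdef, hn3]
    have : (2 : ZMod n) * ((2 * k + 1 : ℕ) : ZMod n) = ((4 * k + 2 : ℕ) : ZMod n) := by
      push_cast; ring
    rw [this]
    exact castzero _ (by omega) (by omega)
  have h3τ : 3 * τ = 0 := by
    rw [hτdef, hn3]
    have : (3 : ZMod n) * ((2 * k + 1 : ℕ) : ZMod n) = ((n : ℕ) : ZMod n) := by
      push_cast; rw [hk]; push_cast; ring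
    rw [this, ZMod.natCast_self]
  -- any nonzero g has 2g ≠ 0
  have hodd : ∀ g : ZMod n, g ≠ 0 → 2 * g ≠ 0 := by
    intro g hg h
    have hv : ((2 * g.val : ℕ) : ZMod n) = 0 := by
      push_cast [ZMod.natCast_zmod_val]; linear_combination h
    rw [ZMod.natCast_eq_zero_iff] at hv
    obtain ⟨c, hc⟩ := hv
    have hvlt : g.val < n := ZMod.val_lt g
    have hc2 : c < 2 := by nlinarith
    interval_cases c
    · apply hg
      have : g.val = 0 := by omega
      rw [← ZMod.natCast_zmod_val g, this, Nat.cast_zero]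
    · omega
  -- classification of 3-torsion
  have h3tor : ∀ g : ZMod n, g ≠ 0 → 3 * g = 0 → g = τ ∨ g = 2 * τ := by
    intro g hg h
    have hv : ((3 * g.val : ℕ) : ZMod n) = 0 := by
      push_cast [ZMod.natCast_zmod_val]; linear_combination h
    rw [ZMod.natCast_eq_zero_iff] at hv
    obtain ⟨c, hc⟩ := hv
    have hvlt : g.val < n := ZMod.val_lt g
    have hc3 : c < 3 := by nlinarith
    have hgv : g = ((g.val : ℕ) : ZMod n) := (ZMod.natCast_zmod_val g).symm
    interval_cases c
    · exfalso; apply hg; rw [hgv]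
      have : g.val = 0 := by omega
      rw [this, Nat.cast_zero]
    · left
      rw [hgv, hτdef, hn3]
      congr 1
      omega
    · right
      rw [hgv]
      have : (2 : ZMod n) * τ = ((4 * k + 2 : ℕ) : ZMod n) := by
        rw [hτdef, hn3]; push_cast; ring
      rw [this]
      congr 1
      omega
  -- main claim
  have main : ∀ F : Set (Finset (Sym2 (ZMod n))), IsCycleSystem 3 F → IsCyclicSystem F →
      cycleEdges 3 ![(0 : ZMod n), ((n / 3 : ℕ) : ZMod n), ((2 * (n / 3) : ℕ) : ZMod n)] ∈ F := by
    intro F hsys hcyc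
    obtain ⟨hcycles, hpair, hcover⟩ := hsys
    -- step 1 : some cycle is fixed by translation by τ
    have hexists : ∃ E ∈ F, translateCycle τ E = E := by
      by_contra hno
      push_neg at hno
      -- free action
      have hfree : ∀ E ∈ F, ∀ g : ZMod n, translateCycle g E = E → g = 0 := by
        intro E hE g hfix
        by_contra hg0
        obtain ⟨f, hf, rfl⟩ := hcycles E hE
        rw [ce3] at hfix
        have hab : f 0 ≠ f 1 := fun h => by simpa using hf h
        obtain ⟨h3g, -⟩ := fixed_structure hg0 (hodd g hg0) hab hfix
        rcases h3tor g hg0 h3g with rfl | rfl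
        · exact hno _ hE (by rw [← ce3] at hfix; exact hfix)
        · apply hno _ hE
          have h1 := hfix
          rw [← ce3] at h1
          have h2 : translateCycle (2*τ) (translateCycle (2*τ) (cycleEdges 3 f))
              = cycleEdges 3 f := by rw [h1, h1]
          rw [tcComp] at h2
          have : 2*τ + 2*τ = τ := by linear_combination h3τ
          rwa [this] at h2
      -- finite set of cycles
      set 𝓕 : Finset (Finset (Sym2 (ZMod n))) := (Set.toFinite F).toFinset with h𝓕
      have hmem𝓕 : ∀ E, E ∈ 𝓕 ↔ E ∈ F := fun E => Set.Finite.mem_toFinset _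
      have hdisj : ∀ x ∈ 𝓕, ∀ y ∈ 𝓕, x ≠ y → Disjoint (id x) (id y) := by
        intro x hx y hy hxy
        exact hpair ((hmem𝓕 x).1 hx) ((hmem𝓕 y).1 hy) hxy
      have hbu : 𝓕.biUnion id = Finset.univ.filter (fun e : Sym2 (ZMod n) => ¬ e.IsDiag) := by
        ext e
        simp only [Finset.mem_biUnion, id, Finset.mem_filter, Finset.mem_univ, true_and]
        constructor
        · rintro ⟨E, hE, he⟩; exact (hcover e).2 ⟨E, (hmem𝓕 E).1 hE, he⟩
        · intro h; obtain ⟨E, hE, he⟩ := (hcover e).1 h; exact ⟨E, (hmem𝓕 E).2 hE, he⟩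
      have hcnt : 3 * 𝓕.card = n.choose 2 := by
        have h1 := Finset.card_biUnion hdisj
        rw [hbu] at h1
        have h2 : ∑ u ∈ 𝓕, (id u).card = 3 * 𝓕.card :=
          calc ∑ u ∈ 𝓕, (id u).card = ∑ _u ∈ 𝓕, 3 :=
                Finset.sum_congr rfl (fun E hE => card_of_cycle (hcycles E ((hmem𝓕 E).1 hE)))
            _ = 3 * 𝓕.card := by rw [Finset.sum_const, smul_eq_mul, mul_comm]
        rw [h2] at h1
        rw [← h1]
        rw [← Fintype.card_subtype]
        rw [Sym2.card_subtype_not_diag, ZMod.card]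
      -- orbits
      set orb : Finset (Sym2 (ZMod n)) → Finset (Finset (Sym2 (ZMod n))) :=
        fun E => Finset.univ.image (fun g : ZMod n => translateCycle g E) with horb
      have hmemorb : ∀ E, E ∈ orb E := by
        intro E
        rw [horb]
        exact Finset.mem_image.2 ⟨0, Finset.mem_univ _, tcZero E⟩
      have horbeq : ∀ E ∈ F, ∀ X ∈ orb E, orb X = orb E := by
        intro E hE X hX
        rw [horb] at hX
        obtain ⟨g, -, rfl⟩ := Finset.mem_image.1 hX
        ext Y
        rw [horb]
        simp only [Finset.mem_image, Finset.mem_univ, true_and]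
        constructor
        · rintro ⟨h, rfl⟩; exact ⟨g + h, (tcComp g h E).symm⟩
        · rintro ⟨h, rfl⟩
          refine ⟨h - g, ?_⟩
          rw [tcComp]
          congr 1
          ring
      have horbF : ∀ E ∈ F, ∀ X ∈ orb E, X ∈ F := by
        intro E hE X hX
        rw [horb] at hX
        obtain ⟨g, -, rfl⟩ := Finset.mem_image.1 hX
        exact hcyc E hE g
      have horbcard : ∀ E ∈ F, (orb E).card = n := by
        intro E hE
        rw [horb]
        rw [Finset.card_image_of_injective _ ?_, Finset.card_univ, ZMod.card]
        intro g h hgh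
        have : translateCycle (g - h) E = E := by
          have := congrArg (translateCycle (-h)) hgh
          rw [tcComp, tcComp] at this
          have e1 : g + -h = g - h := by ring
          have e2 : h + -h = 0 := by ring
          rw [e1, e2, tcZero] at this
          exact this
        have := hfree E hE _ this
        have : g = h := by linear_combination this
        exact this
      set O : Finset (Finset (Finset (Sym2 (ZMod n)))) := 𝓕.image orb with hO
      have hOdisj : ∀ x ∈ O, ∀ y ∈ O, x ≠ y → Disjoint (id x) (id y) := by
        intro x hx y hy hxy
        rw [hO] at hx hy
        obtain ⟨E, hE, rfl⟩ := Finset.mem_image.1 hx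
        obtain ⟨E', hE', rfl⟩ := Finset.mem_image.1 hy
        rw [Finset.disjoint_left]
        intro X hX hX'
        apply hxy
        rw [id] at hX hX'
        rw [← horbeq E ((hmem𝓕 E).1 hE) X hX, horbeq E' ((hmem𝓕 E').1 hE') X hX']
      have hObu : O.biUnion id = 𝓕 := by
        ext X
        simp only [Finset.mem_biUnion, id]
        constructor
        · rintro ⟨o, ho, hX⟩
          rw [hO] at ho
          obtain ⟨E, hE, rfl⟩ := Finset.mem_image.1 ho
          exact (hmem𝓕 X).2 (horbF E ((hmem𝓕 E).1 hE) X hX)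
        · intro hX
          exact ⟨orb X, Finset.mem_image_of_mem _ hX, hmemorb X⟩
      have hcard2 : 𝓕.card = O.card * n := by
        rw [← hObu, Finset.card_biUnion hOdisj]
        rw [Finset.sum_congr rfl (fun o ho => ?_), Finset.sum_const, smul_eq_mul]
        rw [hO] at ho
        obtain ⟨E, hE, rfl⟩ := Finset.mem_image.1 ho
        exact horbcard E ((hmem𝓕 E).1 hE)
      -- numeric contradiction
      have hch : n.choose 2 = n * (3 * k + 1) := by
        rw [Nat.choose_two_right]
        rw [show n - 1 = (3 * k + 1) * 2 by omega]
        rw [← mul_assoc, Nat.mul_div_cancel _ (by norm_num)]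
      rw [hcard2, hch] at hcnt
      have : n * (3 * O.card) = n * (3 * k + 1) := by rw [← hcnt]; ring
      have := Nat.eq_of_mul_eq_mul_left (show 0 < n by omega) this
      omega
    -- step 2 : the fixed cycle is a translated short triangle
    obtain ⟨E, hE, hfix⟩ := hexists
    obtain ⟨f, hf, rfl⟩ := hcycles E hE
    rw [ce3] at hfix
    have hab : f 0 ≠ f 1 := fun h => by simpa using hf h
    obtain ⟨-, x, hstruct⟩ := fixed_structure hτ h2τ hab hfix
    have hEeq : cycleEdges 3 f = {s(x, x + τ), s(x + τ, x + 2 * τ), s(x + 2 * τ, x)} := by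
      rw [ce3]; exact hstruct
    have hT : translateCycle (-x) (cycleEdges 3 f)
        = cycleEdges 3 ![(0 : ZMod n), ((n / 3 : ℕ) : ZMod n), ((2 * (n / 3) : ℕ) : ZMod n)] := by
      rw [hEeq, ce3]
      have v0 : (![(0 : ZMod n), ((n / 3 : ℕ) : ZMod n), ((2 * (n / 3) : ℕ) : ZMod n)]) 0
          = 0 := rfl
      have v1 : (![(0 : ZMod n), ((n / 3 : ℕ) : ZMod n), ((2 * (n / 3) : ℕ) : ZMod n)]) 1
          = τ := rfl
      have v2 : (![(0 : ZMod n), ((n / 3 : ℕ) : ZMod n), ((2 * (n / 3) : ℕ) : ZMod n)]) 2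
          = 2 * τ := by
        show ((2 * (n / 3) : ℕ) : ZMod n) = 2 * τ
        rw [hτdef]; push_cast; ring
      rw [v0, v1, v2]
      rw [translateCycle, Finset.image_insert, Finset.image_insert, Finset.image_singleton]
      rw [Sym2.map_pair_eq, Sym2.map_pair_eq, Sym2.map_pair_eq]
      have e1 : x + -x = 0 := by ring
      have e2 : x + τ + -x = τ := by ring
      have e3 : x + 2 * τ + -x = 2 * τ := by ring
      rw [e1, e2, e3]
    rw [← hT]
    exact hcyc _ hE (-x)
  constructor
  · exact main
  · intro F F' hsys hcyc hsys' hcyc' horth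
    have hTF := main F hsys hcyc
    have hTF' := main F' hsys' hcyc'
    have h1 := horth _ hTF _ hTF'
    rw [Finset.inter_self] at h1
    have h2 := card_of_cycle (hsys.1 _ hTF)
    omega
end
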